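/- arXiv:math/0511030 — 8 statements merged into one kernel-verified Lean document; each statement's English description precedes it below -/
import Mathlib

section
/- Let Φ be a left permutive cellular automaton with no memory on A^ℤ. Then Φ^n has positive anticipation for every n ≥ 1 if and only if Φ^m is not the identity map for every m ≥ 1. In particular, if Φ is not one-to-one, then Φ^n has positive anticipation for every n ≥ 1. -/
/-!
Left permutivity propagates to the iterates: if two configurations agree to the right of a
coordinate `i` and their images under `Φ^n` agree at `i`, then they already agree at `i`.
Hence if `Φ^n` has zero anticipation, acting coordinatewise by `ψ : A → A`, then `ψ` is
injective, so a permutation of the finite alphabet; some power `ψ^k` is the identity, and then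
`Φ^(nk) = id`. Conversely an identity power has zero anticipation, and it forces `Φ` to be
injective.
-/

/-- Left permutive local rule. -/
def LeftPermutive {A : Type*} {r : ℕ} (φ : (Fin (r + 1) → A) → A) : Prop :=
  ∀ t : Fin r → A, Function.Bijective fun a : A => φ (Fin.cons a t)

/-- `Φ` is the cellular automaton on `A^ℤ` with no memory and anticipation `r`
induced by the local rule `φ`. -/
def IsCA {A : Type*} {r : ℕ} (φ : (Fin (r + 1) → A) → A) (Φ : (ℤ → A) → ℤ → A) : Prop :=
  ∀ x i, Φ x i = φ fun j : Fin (r + 1) => x (i + (j : ℕ))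

/-- A memoryless map `F` on `A^ℤ` has zero anticipation if it is induced coordinatewise
by a single map of the alphabet; positive anticipation is the negation of this. -/
def ZeroAnticipation {A : Type*} (F : (ℤ → A) → ℤ → A) : Prop :=
  ∃ ψ : A → A, ∀ x i, F x i = ψ (x i)

open Function Set

namespace IsCA

variable {A : Type*} {r : ℕ} {φ : (Fin (r + 1) → A) → A} {Φ : (ℤ → A) → ℤ → A}

theorem apply_eq_cons (hΦ : IsCA φ Φ) (x : ℤ → A) (i : ℤ) :
    Φ x i = φ (Fin.cons (x i) fun j : Fin r => x (i + 1 + (j : ℕ))) := by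
  rw [hΦ]
  congr 1
  funext k
  refine Fin.cases ?_ (fun j => ?_) k
  · simp
  · simp only [Fin.cons_succ, Fin.val_succ]
    congr 1
    push_cast
    ring

theorem eqOn_Ici (hΦ : IsCA φ Φ) {x y : ℤ → A} {i : ℤ} (h : EqOn x y (Ici i)) :
    EqOn (Φ x) (Φ y) (Ici i) := by
  intro j hj
  rw [hΦ, hΦ]
  congr 1
  funext k
  exact h (show i ≤ j + (k : ℕ) by simp only [mem_Ici] at hj; omega)

theorem eq_of_apply_eq (hΦ : IsCA φ Φ) (hlp : LeftPermutive φ) {x y : ℤ → A} {i : ℤ}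
    (h : EqOn x y (Ici (i + 1))) (hi : Φ x i = Φ y i) : x i = y i := by
  have hright : (fun j : Fin r => x (i + 1 + (j : ℕ))) = fun j : Fin r => y (i + 1 + (j : ℕ)) :=
    funext fun j => h (show i + 1 ≤ i + 1 + (j : ℕ) by omega)
  rw [hΦ.apply_eq_cons, hΦ.apply_eq_cons, hright] at hi
  exact (hlp _).injective hi

theorem eq_of_iterate_apply_eq (hΦ : IsCA φ Φ) (hlp : LeftPermutive φ) (n : ℕ)
    {x y : ℤ → A} {i : ℤ} (h : EqOn x y (Ici (i + 1))) (hi : Φ^[n] x i = Φ^[n] y i) :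
    x i = y i := by
  induction n generalizing x y with
  | zero => exact hi
  | succ n ih =>
    rw [iterate_succ_apply, iterate_succ_apply] at hi
    exact hΦ.eq_of_apply_eq hlp h (ih (hΦ.eqOn_Ici h) hi)

theorem injective_of_iterate_apply_eq (hΦ : IsCA φ Φ) (hlp : LeftPermutive φ) {n : ℕ}
    {ψ : A → A} (hψ : ∀ x i, Φ^[n] x i = ψ (x i)) : Injective ψ := by
  intro a b hab
  let y : ℤ → A := update (fun _ => a) 0 b
  have h : EqOn (fun _ => a) y (Ici (0 + 1)) := fun j hj => by
    simp only [mem_Ici] at hj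
    simp [y, update_of_ne (show j ≠ 0 by omega)]
  have h0 := hΦ.eq_of_iterate_apply_eq hlp n h (by rw [hψ, hψ]; simp [y, hab])
  simpa [y] using h0

end IsCA

theorem iterate_apply_of_apply_eq {A : Type*} {F : (ℤ → A) → ℤ → A} {ψ : A → A}
    (hψ : ∀ x i, F x i = ψ (x i)) (k : ℕ) (x : ℤ → A) (i : ℤ) :
    F^[k] x i = ψ^[k] (x i) := by
  induction k generalizing x with
  | zero => rfl
  | succ k ih => rw [iterate_succ_apply, ih, hψ, iterate_succ_apply]

theorem Function.Injective.exists_iterate_eq_id {A : Type*} [Finite A] {f : A → A}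
    (hf : Injective f) : ∃ k, 0 < k ∧ f^[k] = id := by
  let σ : Equiv.Perm A := Equiv.ofBijective f (Finite.injective_iff_bijective.mp hf)
  obtain ⟨k, hk, hσk⟩ := (isOfFinOrder_of_finite σ).exists_pow_eq_one
  exact ⟨k, hk, by simpa [σ, Equiv.Perm.coe_pow] using congrArg (⇑) hσk⟩

theorem IsCA.exists_iterate_eq_id_of_zeroAnticipation {A : Type*} [Finite A] {r : ℕ}
    {φ : (Fin (r + 1) → A) → A} {Φ : (ℤ → A) → ℤ → A} (hΦ : IsCA φ Φ)
    (hlp : LeftPermutive φ) {n : ℕ} (hn : 1 ≤ n) (hzero : ZeroAnticipation Φ^[n]) :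
    ∃ m, 1 ≤ m ∧ Φ^[m] = id := by
  obtain ⟨ψ, hψ⟩ := hzero
  obtain ⟨k, hk, hψk⟩ := (hΦ.injective_of_iterate_apply_eq hlp hψ).exists_iterate_eq_id
  refine ⟨n * k, Nat.one_le_iff_ne_zero.mpr (by positivity), funext fun x => funext fun i => ?_⟩
  rw [iterate_mul, iterate_apply_of_apply_eq hψ, hψk, id, id]

theorem zeroAnticipation_id {A : Type*} : ZeroAnticipation (id : (ℤ → A) → ℤ → A) :=
  ⟨id, fun _ _ => rfl⟩

theorem Function.Injective.of_iterate_eq_id {α : Type*} {f : α → α} {m : ℕ} (hm : 1 ≤ m)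
    (hf : f^[m] = id) : Injective f := by
  obtain ⟨m, rfl⟩ := Nat.exists_eq_add_of_le' hm
  rw [iterate_succ] at hf
  exact Injective.of_comp (f := f^[m]) (hf ▸ injective_id)

/-- For a left permutive cellular automaton with no memory: `Φ^n` has positive
anticipation for every `n ≥ 1` iff `Φ^m` is not the identity map for every `m ≥ 1`.
In particular, if `Φ` is not one-to-one then `Φ^n` has positive anticipation for all
`n ≥ 1`. -/
theorem posAnticipation_iff_no_power_identity {A : Type*} [Fintype A] {r : ℕ}
    (φ : (Fin (r + 1) → A) → A) (Φ : (ℤ → A) → ℤ → A)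
    (hΦ : IsCA φ Φ) (hlp : LeftPermutive φ) :
    ((∀ n : ℕ, 1 ≤ n → ¬ ZeroAnticipation Φ^[n]) ↔ (∀ m : ℕ, 1 ≤ m → Φ^[m] ≠ id)) ∧
      (¬ Function.Injective Φ → ∀ n : ℕ, 1 ≤ n → ¬ ZeroAnticipation Φ^[n]) := by
  have hpos : (∀ m : ℕ, 1 ≤ m → Φ^[m] ≠ id) → ∀ n : ℕ, 1 ≤ n → ¬ ZeroAnticipation Φ^[n] :=
    fun hid n hn hzero =>
      let ⟨m, hm, hΦm⟩ := hΦ.exists_iterate_eq_id_of_zeroAnticipation hlp hn hzero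
      hid m hm hΦm
  refine ⟨⟨fun hzero m hm hΦm => hzero m hm (hΦm ▸ zeroAnticipation_id), hpos⟩, ?_⟩
  exact fun hninj => hpos fun m hm hΦm => hninj (Injective.of_iterate_eq_id hm hΦm)
end

section
/- Let Φ be a left permutive cellular automaton with no memory and let x ∈ A^ℤ have infinite forward orbit, with (x_1, x_2, ...) periodic under Φ_R of least period q > 1. If Φ^q restricted to cl{Φ^{nq}(x) : n ≥ 0} is topologically conjugate to the (s_1, s_2, ...)-adic odometer, then Φ restricted to cl{Φ^n(x) : n ≥ 0} is topologically conjugate to the (q, s_1, s_2, ...)-adic odometer. -/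
/-- `ΦR` is the one-sided cellular automaton on `A^ℕ` induced by the local rule `φ`. -/
def IsCAR {A : Type*} {r : ℕ} (φ : (Fin (r + 1) → A) → A) (ΦR : (ℕ → A) → ℕ → A) : Prop :=
  ∀ x i, ΦR x i = φ fun j : Fin (r + 1) => x (i + (j : ℕ))

/-- The carry bit at position `n` when adding `(1,0,0,...)` to `z` in `∏ ℤ/s_nℤ`. -/
def odoCarry {s : ℕ → ℕ} (z : ∀ n, ZMod (s n)) : ℕ → Bool
  | 0 => true
  | n + 1 => odoCarry z n && decide (z n + 1 = 0)

/-- The `(s 0, s 1, ...)`-adic odometer: the `+1` map with carrying on `∏ ℤ/s_nℤ`. -/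
def odometer (s : ℕ → ℕ) (z : ∀ n, ZMod (s n)) : ∀ n, ZMod (s n) :=
  fun n => if odoCarry z n then z n + 1 else z n

/-- The forward orbit `{Φ^n(x) : n ≥ 0}`. -/
def fwdOrbit {A : Type*} (Φ : (ℤ → A) → ℤ → A) (x : ℤ → A) : Set (ℤ → A) :=
  Set.range fun n : ℕ => Φ^[n] x

/-- `Φ` restricted to the closure of the forward orbit of `x` is topologically conjugate
to the `(s 0, s 1, ...)`-adic odometer. -/
def ConjToOdometer {A : Type*} [TopologicalSpace A]
    (Φ : (ℤ → A) → ℤ → A) (x : ℤ → A) (s : ℕ → ℕ) : Prop :=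
  ∃ (h : Set.MapsTo Φ (closure (fwdOrbit Φ x)) (closure (fwdOrbit Φ x)))
    (Ψ : closure (fwdOrbit Φ x) ≃ₜ ∀ n, ZMod (s n)),
    ∀ y : closure (fwdOrbit Φ x), Ψ ⟨Φ y, h y.2⟩ = odometer s (Ψ y)

/-! ### Auxiliary material -/

section OdoAux

/-- The borrow bit when subtracting `(1,0,0,...)`. -/
def odoBorrow {s : ℕ → ℕ} (z : ∀ n, ZMod (s n)) : ℕ → Bool
  | 0 => true
  | n + 1 => odoBorrow z n && decide (z n = 0)

/-- The inverse of the odometer: subtract `1` with borrowing. -/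
def odoInv (s : ℕ → ℕ) (z : ∀ n, ZMod (s n)) : ∀ n, ZMod (s n) :=
  fun n => if odoBorrow z n then z n - 1 else z n

lemma odoCarry_succ' {s : ℕ → ℕ} (z : ∀ n, ZMod (s n)) (n : ℕ) :
    odoCarry z (n + 1) = (odoCarry z n && decide (z n + 1 = 0)) := rfl

lemma odoBorrow_odometer {s : ℕ → ℕ} (z : ∀ n, ZMod (s n)) (n : ℕ) :
    odoBorrow (odometer s z) n = odoCarry z n := by
  induction n with
  | zero => rfl
  | succ n ih =>
    show (odoBorrow (odometer s z) n && decide (odometer s z n = 0)) = _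
    rw [ih, odoCarry_succ']
    unfold odometer
    cases h : odoCarry z n <;> simp [h]

lemma odoInv_odometer {s : ℕ → ℕ} (z : ∀ n, ZMod (s n)) : odoInv s (odometer s z) = z := by
  funext n
  show (if odoBorrow (odometer s z) n then odometer s z n - 1 else odometer s z n) = z n
  rw [odoBorrow_odometer]
  unfold odometer
  cases h : odoCarry z n <;> simp [h]

/-- Pairing a head digit with a tail sequence. -/
def odoPair {s' : ℕ → ℕ} (a : ZMod (s' 0)) (v : ∀ n, ZMod (s' (n + 1))) : ∀ n, ZMod (s' n)
  | 0 => a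
  | n + 1 => v n

@[simp] lemma odoPair_zero {s' : ℕ → ℕ} (a : ZMod (s' 0)) (v : ∀ n, ZMod (s' (n + 1))) :
    odoPair a v 0 = a := rfl

@[simp] lemma odoPair_succ {s' : ℕ → ℕ} (a : ZMod (s' 0)) (v : ∀ n, ZMod (s' (n + 1)))
    (n : ℕ) : odoPair a v (n + 1) = v n := rfl

lemma odoCarry_odoPair_succ {s' : ℕ → ℕ} (a : ZMod (s' 0)) (v : ∀ n, ZMod (s' (n + 1)))
    (m : ℕ) :
    odoCarry (odoPair a v) (m + 1)
      = (decide (a + 1 = 0) && odoCarry (s := fun k => s' (k + 1)) v m) := by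
  induction m with
  | zero =>
    show (odoCarry (odoPair a v) 0 && decide (odoPair a v 0 + 1 = 0)) = _
    show (true && decide (odoPair a v 0 + 1 = 0)) = (decide (a + 1 = 0) && true)
    rw [odoPair_zero]
    simp
  | succ m ih =>
    show (odoCarry (odoPair a v) (m + 1) && decide (odoPair a v (m + 1) + 1 = 0)) = _
    rw [ih, odoPair_succ, Bool.and_assoc]
    rfl

lemma odometer_odoPair {s' : ℕ → ℕ} (a : ZMod (s' 0)) (v : ∀ n, ZMod (s' (n + 1))) :
    odometer s' (odoPair a v)
      = odoPair (a + 1)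
          (if a + 1 = 0 then odometer (fun k => s' (k + 1)) v else v) := by
  funext n
  cases n with
  | zero =>
    show (if odoCarry (odoPair a v) 0 then odoPair a v 0 + 1 else odoPair a v 0) = a + 1
    rw [odoPair_zero]
    rfl
  | succ m =>
    show (if odoCarry (odoPair a v) (m + 1) then odoPair a v (m + 1) + 1
          else odoPair a v (m + 1)) = _
    rw [odoCarry_odoPair_succ, odoPair_succ, odoPair_succ]
    by_cases h : a + 1 = 0
    · rw [if_pos h]
      simp only [h, decide_true, Bool.true_and]
      rfl
    · rw [if_neg h]
      simp [h]

end OdoAux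

/-- Gluing continuous maps along a continuous map into a discrete space. -/
lemma glue_cont {X Y D : Type*} [TopologicalSpace X] [TopologicalSpace Y]
    [TopologicalSpace D] [DiscreteTopology D] {g : X → D} (hg : Continuous g)
    (f : D → X → Y) (hf : ∀ d, Continuous (f d)) :
    Continuous fun x => f (g x) x := by
  rw [continuous_iff_continuousAt]
  intro x
  refine ((hf (g x)).continuousAt).congr ?_
  have hmem : g ⁻¹' {g x} ∈ nhds x :=
    ((isOpen_discrete ({g x} : Set D)).preimage hg).mem_nhds rfl
  filter_upwards [hmem] with x' hx'
  simp only [Set.mem_preimage, Set.mem_singleton_iff] at hx'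
  rw [hx']

/-- Corollary to Theorem 1: if the forward orbit of `x` is infinite, `(x_1,x_2,...)` is
`Φ_R`-periodic with least period `q > 1`, and `Φ^q` restricted to the orbit closure of
`x` under `Φ^q` is conjugate to the `(s_1,s_2,...)`-adic odometer, then `Φ` restricted to
the orbit closure of `x` is conjugate to the `(q,s_1,s_2,...)`-adic odometer. -/
theorem conj_to_odometer_periodic {A : Type*} [Fintype A] [TopologicalSpace A]
    [DiscreteTopology A] {r : ℕ}
    (φ : (Fin (r + 1) → A) → A) (Φ : (ℤ → A) → ℤ → A) (ΦR : (ℕ → A) → ℕ → A)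
    (hΦ : IsCA φ Φ) (hΦR : IsCAR φ ΦR) (hlp : LeftPermutive φ)
    (x : ℤ → A) (q : ℕ) (hq : 1 < q)
    (hinf : (fwdOrbit Φ x).Infinite)
    (hper : ΦR^[q] (fun n : ℕ => x ((n : ℤ) + 1)) = fun n : ℕ => x ((n : ℤ) + 1))
    (hleast : ∀ t, 0 < t → t < q →
      ΦR^[t] (fun n : ℕ => x ((n : ℤ) + 1)) ≠ fun n : ℕ => x ((n : ℤ) + 1))
    (s : ℕ → ℕ) (hs : ∀ n, 2 ≤ s n)
    (hconj : ConjToOdometer Φ^[q] x s) :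
    ConjToOdometer Φ x (fun n => match n with | 0 => q | m + 1 => s m) := by
  classical
  obtain ⟨h0, Ψ0, hΨ0⟩ := hconj
  let s' : ℕ → ℕ := fun n => match n with | 0 => q | m + 1 => s m
  show ConjToOdometer Φ x s'
  haveI hNZ : ∀ n, NeZero (s' n) := by
    intro n
    cases n with
    | zero => exact ⟨show q ≠ 0 by omega⟩
    | succ m => exact ⟨show s m ≠ 0 by have := hs m; omega⟩
  haveI hNZ0 : NeZero (s' 0) := hNZ 0
  haveI hCS : CompactSpace (∀ n, ZMod (s' n)) := by infer_instance
  -- notation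
  let T : (ℤ → A) → ℕ → A := fun y n => y ((n : ℤ) + 1)
  let X : ℕ → A := fun n : ℕ => x ((n : ℤ) + 1)
  let Yset : Set (ℤ → A) := closure (fwdOrbit Φ x)
  let Zset : Set (ℤ → A) := closure (fwdOrbit Φ^[q] x)
  have hperX : ΦR^[q] X = X := hper
  -- continuity of Φ and its iterates
  have hΦc : Continuous Φ := by
    have : Φ = fun y (i : ℤ) => φ fun j : Fin (r + 1) => y (i + (j : ℕ)) :=
      funext fun y => funext fun i => hΦ y i
    rw [this]
    haveI hdisc : DiscreteTopology (Fin (r + 1) → A) :=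
      Pi.discreteTopology
    refine continuous_pi fun i => ?_
    have h1 : Continuous fun y : ℤ → A => (fun j : Fin (r + 1) => y (i + (j : ℕ))) :=
      continuous_pi fun j => continuous_apply _
    exact Continuous.comp (continuous_of_discreteTopology (α := Fin (r + 1) → A) (f := φ)) h1
  have hΦit : ∀ k : ℕ, Continuous (Φ^[k]) := by
    intro k
    induction k with
    | zero => simpa using continuous_id
    | succ k ih => rw [Function.iterate_succ']; exact hΦc.comp ih
  have hTc : Continuous T := continuous_pi fun n => continuous_apply _
  -- T intertwines Φ and ΦR
  have hcomm : ∀ y, T (Φ y) = ΦR (T y) := by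
    intro y
    funext n
    show Φ y ((n : ℤ) + 1) = ΦR (T y) n
    rw [hΦ, hΦR]
    congr 1
    funext j
    show y ((n : ℤ) + 1 + (j : ℕ)) = y (((n + (j : ℕ) : ℕ) : ℤ) + 1)
    congr 1
    push_cast
    ring
  have hcommit : ∀ (k : ℕ) y, T (Φ^[k] y) = ΦR^[k] (T y) := by
    intro k
    induction k with
    | zero => intro y; simp
    | succ k ih =>
      intro y
      rw [Function.iterate_succ_apply', Function.iterate_succ_apply', hcomm, ih]
  have hTx : T x = X := rfl
  have hperk : ∀ n : ℕ, ΦR^[q * n] X = X := by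
    intro n
    induction n with
    | zero => simp
    | succ n ih => rw [Nat.mul_succ, Function.iterate_add_apply, hperX, ih]
  -- distinctness of the q tails
  have hdist : ∀ i j, i < q → j < q → ΦR^[i] X = ΦR^[j] X → i = j := by
    have main : ∀ i j, i < j → j < q → ΦR^[i] X = ΦR^[j] X → False := by
      intro i j hij hj h
      have h2 : ΦR^[q - j + i] X = X := by
        rw [Function.iterate_add_apply, h, ← Function.iterate_add_apply,
          Nat.sub_add_cancel hj.le]
        exact hperX
      exact hleast (q - j + i) (by omega) (by omega) h2
    intro i j hi hj h
    rcases lt_trichotomy i j with h' | h' | h'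
    · exact (main i j h' hj h).elim
    · exact h'
    · exact (main j i h' hi h.symm).elim
  -- T is constant on Zset
  have hTZ : ∀ z ∈ Zset, T z = X := by
    have hcl : IsClosed {y : ℤ → A | T y = X} := isClosed_eq hTc continuous_const
    intro z hz
    refine (IsClosed.closure_subset_iff hcl).mpr ?_ hz
    rintro _ ⟨n, rfl⟩
    show T ((Φ^[q])^[n] x) = X
    rw [← Function.iterate_mul, hcommit, hTx]
    exact hperk n
  -- images of Zset under iterates of Φ live in Yset
  have horbimg : ∀ j : ℕ, Φ^[j] '' fwdOrbit Φ^[q] x ⊆ fwdOrbit Φ x := by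
    rintro j _ ⟨_, ⟨n, rfl⟩, rfl⟩
    refine ⟨j + q * n, ?_⟩
    show Φ^[j + q * n] x = Φ^[j] ((Φ^[q])^[n] x)
    rw [Function.iterate_add_apply, ← Function.iterate_mul]
  have himg : ∀ (j : ℕ) (z : ℤ → A), z ∈ Zset → Φ^[j] z ∈ Yset := by
    intro j z hz
    exact closure_mono (horbimg j)
      (image_closure_subset_closure_image (hΦit j) ⟨z, hz, rfl⟩)
  have hmaps : Set.MapsTo Φ Yset Yset := by
    intro y hy
    have h1 : Φ '' fwdOrbit Φ x ⊆ fwdOrbit Φ x := by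
      rintro _ ⟨_, ⟨n, rfl⟩, rfl⟩
      exact ⟨n + 1, by show Φ^[n + 1] x = Φ (Φ^[n] x); rw [Function.iterate_succ_apply']⟩
    exact closure_mono h1 (image_closure_subset_closure_image hΦc ⟨y, hy, rfl⟩)
  -- the covering of Yset
  have hZcpt : IsCompact Zset := isClosed_closure.isCompact
  have hcover : ∀ y ∈ Yset, ∃ j, j < q ∧ ∃ z, z ∈ Zset ∧ y = Φ^[j] z := by
    have hclosed : IsClosed (⋃ j : Fin q, Φ^[(j : ℕ)] '' Zset) := by
      apply isClosed_iUnion_of_finite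
      intro j
      exact (hZcpt.image (hΦit (j : ℕ))).isClosed
    have horb : fwdOrbit Φ x ⊆ ⋃ j : Fin q, Φ^[(j : ℕ)] '' Zset := by
      rintro _ ⟨n, rfl⟩
      refine Set.mem_iUnion.mpr ⟨⟨n % q, Nat.mod_lt n (by omega)⟩, ?_⟩
      refine ⟨(Φ^[q])^[n / q] x, subset_closure ⟨n / q, rfl⟩, ?_⟩
      show Φ^[n % q] ((Φ^[q])^[n / q] x) = Φ^[n] x
      rw [← Function.iterate_mul, ← Function.iterate_add_apply, Nat.mod_add_div]
    intro y hy
    have hmem := (IsClosed.closure_subset_iff hclosed).mpr horb hy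
    obtain ⟨j, hj⟩ := Set.mem_iUnion.mp hmem
    obtain ⟨z, hz, hjy⟩ := hj
    exact ⟨(j : ℕ), j.2, z, hz, hjy.symm⟩
  choose jf hjq zf hzZ hyz using hcover
  -- basic facts about jf
  have hTy : ∀ (y) (hy : y ∈ Yset), T y = ΦR^[jf y hy] X := by
    intro y hy
    rw [show T y = T (Φ^[jf y hy] (zf y hy)) from congrArg T (hyz y hy), hcommit,
      hTZ _ (hzZ y hy)]
  have huniq : ∀ (y) (hy : y ∈ Yset) (j), j < q → T y = ΦR^[j] X → jf y hy = j :=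
    fun y hy j hj h => hdist _ _ (hjq y hy) hj ((hTy y hy).symm.trans h)
  have hQeq : ∀ (y) (hy : y ∈ Yset), Φ^[q - jf y hy] y = Φ^[q] (zf y hy) := by
    intro y hy
    rw [show Φ^[q - jf y hy] y = Φ^[q - jf y hy] (Φ^[jf y hy] (zf y hy)) from
        congrArg _ (hyz y hy),
      ← Function.iterate_add_apply, Nat.sub_add_cancel (hjq y hy).le]
  have hmemZ : ∀ (y) (hy : y ∈ Yset), Φ^[q - jf y hy] y ∈ Zset := by
    intro y hy
    rw [hQeq y hy]
    exact h0 (hzZ y hy)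
  have hΨcongr : ∀ (u v : ℤ → A) (hu : u ∈ Zset) (hv : v ∈ Zset), u = v →
      Ψ0 ⟨u, hu⟩ = Ψ0 ⟨v, hv⟩ := by
    rintro u v hu hv rfl; rfl
  have hpaircongr : ∀ {a b : ZMod (s' 0)} {u v : ∀ n, ZMod (s' (n + 1))},
      a = b → u = v → odoPair a u = odoPair b v := by
    rintro a b u v rfl rfl; rfl
  -- the conjugacy maps
  let Θ : Yset → ∀ n, ZMod (s' n) := fun y =>
    odoPair (s' := s') ((jf y.1 y.2 : ℕ) : ZMod (s' 0))
      (odoInv s (Ψ0 ⟨Φ^[q - jf y.1 y.2] y.1, hmemZ y.1 y.2⟩))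
  let Ξ : (∀ n, ZMod (s' n)) → Yset := fun w =>
    ⟨Φ^[(w 0).val] ((Ψ0.symm fun m => w (m + 1)).1),
      himg _ _ (Ψ0.symm fun m => w (m + 1)).2⟩
  have hΘdef : ∀ (y) (hy : y ∈ Yset),
      Θ ⟨y, hy⟩ = odoPair (s' := s') ((jf y hy : ℕ) : ZMod (s' 0))
        (odoInv s (Ψ0 ⟨Φ^[q - jf y hy] y, hmemZ y hy⟩)) := fun y hy => rfl
  -- value of Θ on decomposed points
  have hΘval : ∀ (j : ℕ), j < q → ∀ (z : ℤ → A) (hz : z ∈ Zset) (hy : Φ^[j] z ∈ Yset),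
      Θ ⟨Φ^[j] z, hy⟩ = odoPair (s' := s') ((j : ZMod (s' 0))) (Ψ0 ⟨z, hz⟩) := by
    intro j hj z hz hy
    have hjf : jf (Φ^[j] z) hy = j := by
      refine huniq _ hy j hj ?_
      rw [hcommit, hTZ z hz]
    have hvaleq : Φ^[q - jf (Φ^[j] z) hy] (Φ^[j] z) = Φ^[q] z := by
      rw [hjf, ← Function.iterate_add_apply, Nat.sub_add_cancel hj.le]
    rw [hΘdef _ hy]
    refine hpaircongr (congrArg _ hjf) ?_
    have h1 : Ψ0 ⟨Φ^[q - jf (Φ^[j] z) hy] (Φ^[j] z), hmemZ _ hy⟩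
        = odometer s (Ψ0 ⟨z, hz⟩) := by
      rw [hΨcongr _ _ (hmemZ _ hy) (h0 hz) hvaleq]
      exact hΨ0 ⟨z, hz⟩
    rw [h1, odoInv_odometer]
  have hΘeq : ∀ (y) (hy : y ∈ Yset),
      Θ ⟨y, hy⟩ = odoPair (s' := s') ((jf y hy : ℕ) : ZMod (s' 0))
        (Ψ0 ⟨zf y hy, hzZ y hy⟩) := by
    intro y hy
    have h1 : (⟨y, hy⟩ : Yset) = ⟨Φ^[jf y hy] (zf y hy), (hyz y hy) ▸ hy⟩ :=
      Subtype.ext (hyz y hy)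
    rw [h1, hΘval (jf y hy) (hjq y hy) (zf y hy) (hzZ y hy) _]
  -- the conjugacy identity
  have key : ∀ (y) (hy : y ∈ Yset) (hy' : Φ y ∈ Yset),
      Θ ⟨Φ y, hy'⟩ = odometer s' (Θ ⟨y, hy⟩) := by
    intro y hy hy'
    rw [hΘeq y hy, odometer_odoPair]
    have hΦy : Φ y = Φ^[jf y hy + 1] (zf y hy) :=
      (congrArg Φ (hyz y hy)).trans (Function.iterate_succ_apply' Φ _ _).symm
    by_cases hcase : jf y hy + 1 < q
    · have h1 : (⟨Φ y, hy'⟩ : Yset) = ⟨Φ^[jf y hy + 1] (zf y hy), hΦy ▸ hy'⟩ :=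
        Subtype.ext hΦy
      rw [h1, hΘval _ hcase _ (hzZ y hy) _]
      have hne : ¬(((jf y hy : ℕ) : ZMod (s' 0)) + 1 = 0) := by
        intro hcon
        have h2 : (((jf y hy + 1 : ℕ)) : ZMod (s' 0)) = 0 := by push_cast; exact hcon
        have h3 := ZMod.val_cast_of_lt (show jf y hy + 1 < s' 0 from hcase)
        rw [h2, ZMod.val_zero] at h3
        omega
      rw [if_neg hne]
      exact hpaircongr (by push_cast; ring) rfl
    · have hq1 : jf y hy + 1 = q := by have := hjq y hy; omega
      have heq0 : (((jf y hy : ℕ)) : ZMod (s' 0)) + 1 = 0 := by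
        have h2 : (((jf y hy + 1 : ℕ)) : ZMod (s' 0)) = 0 := by
          rw [hq1]
          exact ZMod.natCast_self (s' 0)
        push_cast at h2
        exact h2
      rw [if_pos heq0]
      have hΦyq : Φ y = Φ^[q] (zf y hy) := by rw [hΦy, hq1]
      have hΦyZ : Φ y ∈ Zset := by rw [hΦyq]; exact h0 (hzZ y hy)
      have h3 := hΘval 0 (by omega) (Φ y) hΦyZ
        (show Φ^[0] (Φ y) ∈ Yset from hy')
      refine h3.trans ?_
      have h2 : Ψ0 ⟨Φ y, hΦyZ⟩ = odometer s (Ψ0 ⟨zf y hy, hzZ y hy⟩) := by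
        rw [hΨcongr _ _ hΦyZ (h0 (hzZ y hy)) hΦyq]
        exact hΨ0 ⟨zf y hy, hzZ y hy⟩
      rw [h2]
      refine hpaircongr ?_ rfl
      rw [heq0]
      simp
  -- the two maps are inverse to each other
  have hΘΞ : ∀ w : ∀ n, ZMod (s' n), Θ (Ξ w) = w := by
    intro w
    have hval : (w 0).val < q := ZMod.val_lt (w 0)
    have h1 := hΘval ((w 0).val) hval ((Ψ0.symm fun m => w (m + 1)).1)
      ((Ψ0.symm fun m => w (m + 1)).2) (Ξ w).2
    have h2 : Θ (Ξ w) = odoPair (s' := s') (((w 0).val : ℕ) : ZMod (s' 0))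
        (Ψ0 (Ψ0.symm fun m => w (m + 1))) := h1
    rw [h2, Homeomorph.apply_symm_apply]
    funext n
    cases n with
    | zero => exact ZMod.natCast_rightInverse (w 0)
    | succ m => rfl
  have hΞΘ : ∀ y : Yset, Ξ (Θ y) = y := by
    rintro ⟨yv, hy⟩
    apply Subtype.ext
    show Φ^[((Θ ⟨yv, hy⟩) 0).val] ((Ψ0.symm fun m => (Θ ⟨yv, hy⟩) (m + 1)).1) = yv
    have hΘ0 : (Θ ⟨yv, hy⟩) 0 = ((jf yv hy : ℕ) : ZMod (s' 0)) := rfl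
    have hΘs : (fun m => (Θ ⟨yv, hy⟩) (m + 1))
        = odoInv s (Ψ0 ⟨Φ^[q - jf yv hy] yv, hmemZ yv hy⟩) := rfl
    rw [hΘ0, hΘs, ZMod.val_cast_of_lt (show jf yv hy < s' 0 from hjq yv hy)]
    have h2 : Ψ0 ⟨Φ^[q - jf yv hy] yv, hmemZ yv hy⟩
        = odometer s (Ψ0 ⟨zf yv hy, hzZ yv hy⟩) := by
      rw [hΨcongr _ _ (hmemZ yv hy) (h0 (hzZ yv hy)) (hQeq yv hy)]
      exact hΨ0 ⟨zf yv hy, hzZ yv hy⟩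
    rw [h2, odoInv_odometer, Homeomorph.symm_apply_apply]
    exact (hyz yv hy).symm
  -- assemble the homeomorphism
  let E : (∀ n, ZMod (s' n)) ≃ Yset := ⟨Ξ, Θ, hΘΞ, hΞΘ⟩
  have hΞc : Continuous Ξ := by
    have hf : ∀ d : ZMod (s' 0), Continuous fun w : ∀ n, ZMod (s' n) =>
        (⟨Φ^[d.val] ((Ψ0.symm fun m => w (m + 1)).1),
          himg _ _ (Ψ0.symm fun m => w (m + 1)).2⟩ : Yset) := by
      intro d
      refine Continuous.subtype_mk ?_ _
      have h1 : Continuous fun w : ∀ n, ZMod (s' n) =>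
          (fun m => w (m + 1) : ∀ n, ZMod (s n)) :=
        continuous_pi fun m => continuous_apply (m + 1)
      exact (hΦit d.val).comp (continuous_subtype_val.comp (Ψ0.symm.continuous.comp h1))
    exact glue_cont (X := ∀ n, ZMod (s' n)) (Y := ↥Yset) (D := ZMod (s' 0))
      (continuous_apply 0)
      (fun d w => ⟨Φ^[d.val] ((Ψ0.symm fun m => w (m + 1)).1),
        himg _ _ (Ψ0.symm fun m => w (m + 1)).2⟩) hf
  have hEc : Continuous ⇑E := hΞc
  let H : (∀ n, ZMod (s' n)) ≃ₜ Yset := hEc.homeoOfEquivCompactToT2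
  exact ⟨hmaps, H.symm, fun y => key y.1 y.2 (hmaps y.2)⟩
end

section
/- Let Φ be a left permutive cellular automaton with no memory such that Φ^n has positive anticipation for all n ≥ 1, and let (z_1, z_2, ...) ∈ A^ℕ be Φ_R-fixed. Then within the set C = {x ∈ A^ℤ : x_i = z_i for all i ≥ 1}, the set of points x with finite forward Φ-orbit is a countable union of closed nowhere dense subsets of C; equivalently, the set of x ∈ C with infinite forward orbit is a dense G_δ subset of C. -/
/-- The set `C = {x : x_i = z_i for all i ≥ 1}` (here `z n` plays the role of
`z_{n+1}`). -/
def rightCyl {A : Type*} (z : ℕ → A) : Set (ℤ → A) :=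
  {x | ∀ n : ℕ, x ((n : ℤ) + 1) = z n}

open Function Set Filter Topology

section CellularAutomaton

variable {A : Type*} {r : ℕ} {φ : (Fin (r + 1) → A) → A} {Φ : (ℤ → A) → ℤ → A}

theorem window_eq_cons (x : ℤ → A) (i : ℤ) :
    (fun j : Fin (r + 1) => x (i + (j : ℕ))) =
      Fin.cons (x i) fun j : Fin r => x (i + 1 + (j : ℕ)) := by
  funext j
  refine Fin.cases ?_ (fun j => ?_) j
  · simp
  · rw [Fin.cons_succ, Fin.val_succ]
    push_cast
    ring_nf

theorem IsCA.continuous [TopologicalSpace A] [DiscreteTopology A] (hΦ : IsCA φ Φ) :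
    Continuous Φ := by
  refine continuous_pi fun i => ?_
  have h : (fun x => Φ x i) = φ ∘ fun x j => x (i + (j : ℕ)) := funext fun x => hΦ x i
  rw [h]
  exact continuous_of_discreteTopology.comp (continuous_pi fun j => continuous_apply _)

theorem IsCA.commute_shift (hΦ : IsCA φ Φ) (c : ℤ) : Function.Commute Φ fun x j => x (j + c) := by
  intro x
  funext i
  show Φ (fun j => x (j + c)) i = Φ x (i + c)
  rw [hΦ, hΦ]
  congr 1
  funext j
  ring_nf

theorem IsCA.iterate_apply_congr (hΦ : IsCA φ Φ) {k : ℕ} {x y : ℤ → A} {i : ℤ}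
    (h : ∀ j, i ≤ j → j ≤ i + k * r → x j = y j) : Φ^[k] x i = Φ^[k] y i := by
  induction k generalizing i with
  | zero => simpa using h i le_rfl (by simp)
  | succ k ih =>
    rw [iterate_succ_apply', iterate_succ_apply', hΦ, hΦ]
    congr 1
    funext j
    have hj : ((j : ℕ) : ℤ) ≤ r := by exact_mod_cast Nat.lt_succ_iff.mp j.isLt
    exact ih fun j' h₁ h₂ => h j' (by omega) (by push_cast at h₂ ⊢; nlinarith)

theorem IsCA.zeroAnticipation_iterate_of_forall_apply_eq (hΦ : IsCA φ Φ) {k : ℕ} {i : ℤ}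
    (h : ∀ u, Φ^[k] u i = u i) : ZeroAnticipation Φ^[k] := by
  refine ⟨id, fun x p => ?_⟩
  have hp := h fun j => x (j + (p - i))
  rw [(hΦ.commute_shift (p - i)).iterate_left k x] at hp
  simpa only [add_sub_cancel, id_eq] using hp

theorem IsCA.coord_eq_of_apply_eq (hΦ : IsCA φ Φ) (hlp : LeftPermutive φ) {x y : ℤ → A}
    {i : ℤ} (h : Φ x i = Φ y i)
    (htail : ∀ j : Fin r, x (i + 1 + (j : ℕ)) = y (i + 1 + (j : ℕ))) : x i = y i := by
  rw [hΦ, hΦ, window_eq_cons, window_eq_cons, funext htail] at h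
  exact (hlp _).1 h

end CellularAutomaton

section RightCylinder

variable {A : Type*} {z : ℕ → A}

theorem isClosed_rightCyl [TopologicalSpace A] [T1Space A] (z : ℕ → A) :
    IsClosed (rightCyl z) := by
  rw [rightCyl, ofPred_forall]
  exact isClosed_iInter fun n => isClosed_singleton.preimage (continuous_apply _)

theorem IsCA.mapsTo_rightCyl {r : ℕ} {φ : (Fin (r + 1) → A) → A} {Φ : (ℤ → A) → ℤ → A}
    {ΦR : (ℕ → A) → ℕ → A} (hΦ : IsCA φ Φ) (hΦR : IsCAR φ ΦR) (hz : ΦR z = z) :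
    MapsTo Φ (rightCyl z) (rightCyl z) := by
  intro x hx n
  rw [hΦ, ← congrFun hz n, hΦR]
  congr 1
  funext j
  rw [← hx]
  push_cast
  ring_nf

theorem IsCA.injOn_rightCyl {r : ℕ} {φ : (Fin (r + 1) → A) → A} {Φ : (ℤ → A) → ℤ → A}
    (hΦ : IsCA φ Φ) (hlp : LeftPermutive φ) (z : ℕ → A) : InjOn Φ (rightCyl z) := by
  intro x hx y hy h
  have hright : ∀ j, 1 ≤ j → x j = y j := fun j hj => by
    obtain ⟨n, rfl⟩ : ∃ n : ℕ, j = n + 1 := ⟨(j - 1).toNat, by omega⟩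
    rw [hx, hy]
  have hle : ∀ m ≤ (1 : ℤ), ∀ j, m ≤ j → x j = y j := by
    refine Int.leInductionDown hright fun m _ ih j hj => ?_
    rcases hj.eq_or_lt with rfl | hlt
    · exact hΦ.coord_eq_of_apply_eq hlp (congrFun h _) fun t => ih _ (by omega)
    · exact ih j (by omega)
  funext j
  exact hle (min j 1) (min_le_right _ _) j (min_le_left _ _)

def splice (c : ℤ) (u x : ℤ → A) : ℤ → A := fun j => if j < c then u j else x j

theorem splice_mem_rightCyl {x : ℤ → A} (hx : x ∈ rightCyl z) (u : ℤ → A) {c : ℤ}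
    (hc : c ≤ 1) : splice c u x ∈ rightCyl z := fun n => by
  rw [splice, if_neg (by omega)]
  exact hx n

theorem tendsto_splice_neg [TopologicalSpace A] (u : ℕ → ℤ → A) (x : ℤ → A) :
    Tendsto (fun n : ℕ => splice (-n) (u n) x) atTop (𝓝 x) := by
  refine tendsto_pi_nhds.2 fun j => tendsto_const_nhds.congr' ?_
  filter_upwards [eventually_ge_atTop j.natAbs] with n hn
  exact (if_neg (by omega)).symm

theorem IsCA.interior_setOf_isPeriodicPt_eq_empty [TopologicalSpace A] {r : ℕ}
    {φ : (Fin (r + 1) → A) → A} {Φ : (ℤ → A) → ℤ → A} (hΦ : IsCA φ Φ) {k : ℕ}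
    (hk : ¬ ZeroAnticipation Φ^[k]) (z : ℕ → A) :
    interior {x : rightCyl z | IsPeriodicPt Φ k x} = ∅ := by
  refine eq_empty_iff_forall_notMem.2 fun x hx => ?_
  have hmoving : ∀ i, ∃ u, Φ^[k] u i ≠ u i := fun i => by
    by_contra! h
    exact hk (hΦ.zeroAnticipation_iterate_of_forall_apply_eq h)
  choose u hu using hmoving
  -- `y n` is `x` from `-n` on, hence tends to `x`, and to the left of `-n` it is a
  -- configuration whose coordinate `i₀ n` is moved by `Φ^[k]`.
  set i₀ : ℕ → ℤ := fun n => -n - 1 - k * r with hi₀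
  let y : ℕ → rightCyl z := fun n =>
    ⟨splice (-n) (u (i₀ n)) x, splice_mem_rightCyl x.2 _ (by omega)⟩
  have hy : Tendsto y atTop (𝓝 x) := tendsto_subtype_rng.2 (tendsto_splice_neg _ _)
  obtain ⟨n, hn⟩ := (hy.eventually (mem_interior_iff_mem_nhds.1 hx)).exists
  have hleft : ∀ j ≤ i₀ n + k * r, j < -n := fun j hj => by simp only [hi₀] at hj; linarith
  apply hu (i₀ n)
  calc Φ^[k] (u (i₀ n)) (i₀ n) = Φ^[k] (y n) (i₀ n) :=
        hΦ.iterate_apply_congr fun j _ hj => (if_pos (hleft j hj)).symm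
    _ = (y n : ℤ → A) (i₀ n) := congrFun hn _
    _ = u (i₀ n) (i₀ n) := if_pos (hleft _ (le_add_of_nonneg_right (by positivity)))

end RightCylinder

theorem finite_range_iterate_iff_mem_periodicPts {α : Type*} {f : α → α} {s : Set α}
    (hmaps : MapsTo f s s) (hinj : InjOn f s) {x : α} (hx : x ∈ s) :
    (range fun n => f^[n] x).Finite ↔ x ∈ periodicPts f := by
  constructor
  · intro hfin
    obtain ⟨a, b, hab, heq⟩ := hfin.exists_lt_map_eq_of_forall_mem (mem_range_self ·)
    refine mk_mem_periodicPts (Nat.sub_pos_of_lt hab)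
      (hinj.iterate hmaps a (hmaps.iterate _ hx) hx ?_)
    rw [← iterate_add_apply, Nat.add_sub_cancel' hab.le]
    exact heq.symm
  · intro hx
    refine ((finite_lt_nat (minimalPeriod f x)).image fun n => f^[n] x).subset ?_
    rintro _ ⟨n, rfl⟩
    exact ⟨_, Nat.mod_lt _ (minimalPeriod_pos_of_mem_periodicPts hx),
      iterate_mod_minimalPeriod_eq⟩

theorem finite_orbit_meagre_in_fiber_general {A : Type*} [TopologicalSpace A]
    [DiscreteTopology A] {r : ℕ}
    (φ : (Fin (r + 1) → A) → A) (Φ : (ℤ → A) → ℤ → A) (ΦR : (ℕ → A) → ℕ → A)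
    (hΦ : IsCA φ Φ) (hΦR : IsCAR φ ΦR) (hlp : LeftPermutive φ)
    (hpos : ∀ n : ℕ, 1 ≤ n → ¬ ZeroAnticipation Φ^[n])
    (z : ℕ → A) (hz : ΦR z = z) :
    (∃ F : ℕ → Set (rightCyl z),
      (∀ m, IsClosed (F m) ∧ IsNowhereDense (F m)) ∧
      {x : rightCyl z | (Set.range fun n : ℕ => Φ^[n] (x : ℤ → A)).Finite} = ⋃ m, F m) ∧
    (Dense {x : rightCyl z | (Set.range fun n : ℕ => Φ^[n] (x : ℤ → A)).Infinite} ∧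
      IsGδ {x : rightCyl z | (Set.range fun n : ℕ => Φ^[n] (x : ℤ → A)).Infinite}) := by
  set F : ℕ → Set (rightCyl z) := fun m => {x | IsPeriodicPt Φ (m + 1) x}
  have hclosed (m : ℕ) : IsClosed (F m) :=
    isClosed_eq ((hΦ.continuous.iterate _).comp continuous_subtype_val) continuous_subtype_val
  have hinterior (m : ℕ) : interior (F m) = ∅ :=
    hΦ.interior_setOf_isPeriodicPt_eq_empty (hpos _ m.succ_pos) z
  have hfinite :
      {x : rightCyl z | (range fun n => Φ^[n] (x : ℤ → A)).Finite} = ⋃ m, F m := by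
    ext x
    rw [mem_ofPred_eq, finite_range_iterate_iff_mem_periodicPts (hΦ.mapsTo_rightCyl hΦR hz)
      (hΦ.injOn_rightCyl hlp z) x.2, mem_iUnion]
    exact ⟨fun ⟨n, hn, hx⟩ => ⟨n - 1, show IsPeriodicPt Φ (n - 1 + 1) x by
      rwa [Nat.sub_add_cancel hn]⟩, fun ⟨m, hx⟩ => ⟨m + 1, m.succ_pos, hx⟩⟩
  have hinfinite :
      {x : rightCyl z | (range fun n => Φ^[n] (x : ℤ → A)).Infinite} = ⋂ m, (F m)ᶜ := by
    rw [← compl_iUnion, ← hfinite]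
    rfl
  have := (isClosed_rightCyl z).isCompletelyMetrizableSpace
  refine ⟨⟨F, fun m => ⟨hclosed m, (hclosed m).isNowhereDense_iff.2 (hinterior m)⟩, hfinite⟩,
    ?_, ?_⟩
  · rw [hinfinite]
    exact dense_iInter_of_isOpen (fun m => (hclosed m).isOpen_compl)
      fun m => interior_eq_empty_iff_dense_compl.1 (hinterior m)
  · rw [hinfinite]
    exact IsGδ.iInter_of_isOpen fun m => (hclosed m).isOpen_compl

/-- If every power `Φ^n`, `n ≥ 1`, has positive anticipation and `(z_1,z_2,...)` is
`Φ_R`-fixed, then inside `C = {x : x_i = z_i, i ≥ 1}` the points with finite forward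
orbit form a countable union of closed nowhere dense subsets of `C`, and the points with
infinite forward orbit form a dense `G_δ` subset of `C`. -/
theorem finite_orbit_meagre_in_fiber {A : Type*} [Fintype A] [TopologicalSpace A]
    [DiscreteTopology A] {r : ℕ}
    (φ : (Fin (r + 1) → A) → A) (Φ : (ℤ → A) → ℤ → A) (ΦR : (ℕ → A) → ℕ → A)
    (hΦ : IsCA φ Φ) (hΦR : IsCAR φ ΦR) (hlp : LeftPermutive φ)
    (hpos : ∀ n : ℕ, 1 ≤ n → ¬ ZeroAnticipation Φ^[n])
    (z : ℕ → A) (hz : ΦR z = z) :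
    (∃ F : ℕ → Set (rightCyl z),
      (∀ m, IsClosed (F m) ∧ IsNowhereDense (F m)) ∧
      {x : rightCyl z | (Set.range fun n : ℕ => Φ^[n] (x : ℤ → A)).Finite} = ⋃ m, F m) ∧
    (Dense {x : rightCyl z | (Set.range fun n : ℕ => Φ^[n] (x : ℤ → A)).Infinite} ∧
      IsGδ {x : rightCyl z | (Set.range fun n : ℕ => Φ^[n] (x : ℤ → A)).Infinite}) :=
  finite_orbit_meagre_in_fiber_general φ Φ ΦR hΦ hΦR hlp hpos z hz
end

section
/- Let Φ be a left permutive cellular automaton with no memory such that Φ^j has positive anticipation, and let (z_1, z_2, ...) be Φ_R-fixed. Then Fix(Φ^j) ∩ {x : x_i = z_i for all i ≥ 1} is a closed, nowhere dense subset of {x : x_i = z_i for all i ≥ 1}. -/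
/- If `Fix(Φ^j) ∩ C` had interior in `C`, it would contain every configuration agreeing with a
fixed one on some right ray `[L, ∞)`. Copying an arbitrary window of length `j r + 1` to the left of
`L` then yields a fixed point of `Φ^j` that sees that window; since `Φ^j x_i` depends only on
`x_i, …, x_{i + j r}`, this forces `Φ^j x_i = x_i` for all `x` and `i`, i.e. zero anticipation. -/

namespace IsCA

variable {A : Type*} {r : ℕ} {φ : (Fin (r + 1) → A) → A} {Φ : (ℤ → A) → ℤ → A}

theorem continuous_s13 [TopologicalSpace A] [DiscreteTopology A] (hΦ : IsCA φ Φ) : Continuous Φ := by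
  refine continuous_pi fun i => ?_
  simp only [hΦ _ i]
  exact continuous_of_discreteTopology.comp (continuous_pi fun _ => continuous_apply _)

theorem iterate_apply_eq_of_window_eq (hΦ : IsCA φ Φ) (j : ℕ) {x y : ℤ → A} {i m : ℤ}
    (h : ∀ k : ℕ, k ≤ j * r → x (i + k) = y (m + k)) : Φ^[j] x i = Φ^[j] y m := by
  induction j generalizing x y with
  | zero => simpa using h 0 (Nat.zero_le _)
  | succ n ih =>
    rw [Function.iterate_succ_apply, Function.iterate_succ_apply]
    refine ih fun k hk => ?_
    rw [hΦ, hΦ]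
    congr 1
    funext l
    have hkl : k + (l : ℕ) ≤ (n + 1) * r := by
      rw [add_one_mul]
      exact Nat.add_le_add hk (Nat.lt_succ_iff.mp l.isLt)
    simpa only [Nat.cast_add, add_assoc] using h _ hkl

theorem zeroAnticipation_iterate_of_forall_eqOn_Ici (hΦ : IsCA φ Φ) (j : ℕ) (p : ℤ → A) (L : ℤ)
    (hfix : ∀ y, Set.EqOn y p (Set.Ici L) → Φ^[j] y = y) : ZeroAnticipation Φ^[j] := by
  refine ⟨id, fun x i => ?_⟩
  set m : ℤ := L - (j * r : ℕ) - 1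
  set y : ℤ → A := fun s => if s < L then x (s + (i - m)) else p s
  have hy : Set.EqOn y p (Set.Ici L) := fun s hs => if_neg (not_lt.mpr hs)
  have hwindow : ∀ k : ℕ, k ≤ j * r → x (i + k) = y (m + k) := by
    intro k hk
    have hlt : m + k < L := by
      have : (k : ℤ) ≤ (j * r : ℕ) := by exact_mod_cast hk
      omega
    simp only [y, if_pos hlt]
    congr 1
    ring
  calc Φ^[j] x i = Φ^[j] y m := hΦ.iterate_apply_eq_of_window_eq j hwindow
    _ = y m := congrFun (hfix y hy) m
    _ = x i := by simpa using (hwindow 0 (Nat.zero_le _)).symm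

end IsCA

theorem exists_forall_eqOn_Ici_mem_of_mem_interior {A : Type*} [TopologicalSpace A]
    {z : ℕ → A} {T : Set (ℤ → A)} {p : rightCyl z}
    (hp : p ∈ interior (Subtype.val ⁻¹' T : Set (rightCyl z))) :
    ∃ L : ℤ, ∀ y, Set.EqOn y p (Set.Ici L) → y ∈ T := by
  obtain ⟨t, htT, ht, hpt⟩ := mem_interior.mp hp
  obtain ⟨V, hV, rfl⟩ := isOpen_induced_iff.mp ht
  obtain ⟨I, u, hu, hIV⟩ := isOpen_pi_iff.mp hV p.val hpt
  obtain ⟨L₀, hL₀⟩ := I.bddBelow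
  refine ⟨min L₀ 1, fun y hy => ?_⟩
  have hyC : y ∈ rightCyl z := fun n => by
    rw [hy (show min L₀ 1 ≤ (n : ℤ) + 1 by omega)]
    exact p.2 n
  have hyV : y ∈ V := hIV fun a ha => by
    rw [hy (show min L₀ 1 ≤ a from min_le_of_left_le (hL₀ ha))]
    exact (hu a ha).2
  exact htT (show (⟨y, hyC⟩ : rightCyl z) ∈ Subtype.val ⁻¹' V from hyV)

theorem fix_closed_nowhereDense_in_fiber_general {A : Type*} [TopologicalSpace A]
    [DiscreteTopology A] {r : ℕ}
    (φ : (Fin (r + 1) → A) → A) (Φ : (ℤ → A) → ℤ → A)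
    (hΦ : IsCA φ Φ)
    (j : ℕ) (hpos : ¬ ZeroAnticipation Φ^[j])
    (z : ℕ → A) :
    IsClosed {x : rightCyl z | Φ^[j] (x : ℤ → A) = (x : ℤ → A)} ∧
      IsNowhereDense {x : rightCyl z | Φ^[j] (x : ℤ → A) = (x : ℤ → A)} := by
  have hclosed : IsClosed {x : rightCyl z | Φ^[j] (x : ℤ → A) = (x : ℤ → A)} :=
    (isClosed_eq (hΦ.continuous_s13.iterate j) continuous_id).preimage continuous_subtype_val
  refine ⟨hclosed, hclosed.isNowhereDense_iff.mpr (Set.eq_empty_of_forall_notMem fun p hp => ?_)⟩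
  obtain ⟨L, hL⟩ := exists_forall_eqOn_Ici_mem_of_mem_interior (T := {x | Φ^[j] x = x}) hp
  exact hpos (hΦ.zeroAnticipation_iterate_of_forall_eqOn_Ici j p L hL)

/-- If `Φ^j` has positive anticipation and `(z_1,z_2,...)` is `Φ_R`-fixed, then
`Fix(Φ^j) ∩ C` is a closed, nowhere dense subset of `C = {x : x_i = z_i, i ≥ 1}`. -/
theorem fix_closed_nowhereDense_in_fiber {A : Type*} [Fintype A] [TopologicalSpace A]
    [DiscreteTopology A] {r : ℕ}
    (φ : (Fin (r + 1) → A) → A) (Φ : (ℤ → A) → ℤ → A) (ΦR : (ℕ → A) → ℕ → A)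
    (hΦ : IsCA φ Φ) (hΦR : IsCAR φ ΦR) (hlp : LeftPermutive φ)
    (j : ℕ) (hj : 1 ≤ j) (hpos : ¬ ZeroAnticipation Φ^[j])
    (z : ℕ → A) (hz : ΦR z = z) :
    IsClosed {x : rightCyl z | Φ^[j] (x : ℤ → A) = (x : ℤ → A)} ∧
      IsNowhereDense {x : rightCyl z | Φ^[j] (x : ℤ → A) = (x : ℤ → A)} :=
  fix_closed_nowhereDense_in_fiber_general φ Φ hΦ j hpos z
end

section
/- Let Φ be a left permutive cellular automaton with no memory, and let (z_1, z_2, ...) be Φ_R-fixed. Then each Φ^i restricts to a self-homeomorphism of the set {x ∈ A^ℤ : x_k = z_k for all k ≥ 1}. -/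
section Aux

variable {A : Type*} {r : ℕ} {φ : (Fin (r + 1) → A) → A}

private lemma consDecomp (x : ℤ → A) (i : ℤ) :
    (fun j : Fin (r + 1) => x (i + (j : ℕ))) =
      Fin.cons (x i) (fun j : Fin r => x (i + (j : ℕ) + 1)) := by
  funext j
  refine Fin.cases ?_ (fun k => ?_) j
  · simp
  · simp only [Fin.cons_succ, Fin.val_succ]
    congr 1
    push_cast
    ring

/-- The permutation of `A` given by left permutivity at tail `t`. -/
noncomputable def lpEquiv (hlp : LeftPermutive φ) (t : Fin r → A) : A ≃ A :=
  Equiv.ofBijective _ (hlp t)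

lemma lpEquiv_symm_spec (hlp : LeftPermutive φ) (t : Fin r → A) (b : A) :
    φ (Fin.cons ((lpEquiv hlp t).symm b) t) = b :=
  (lpEquiv hlp t).apply_symm_apply b

/-- Values of the preimage at nonpositive positions: `buildAux … n` is the value at
position `-n`. -/
noncomputable def buildAux (hlp : LeftPermutive φ) (z : ℕ → A) (y : ℤ → A) : ℕ → A
  | n =>
    (lpEquiv hlp (fun j : Fin r =>
      if h : (j : ℕ) < n then buildAux hlp z y (n - ((j : ℕ) + 1))
      else z ((j : ℕ) - n))).symm (y (-(n : ℤ)))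
  decreasing_by omega

/-- The preimage of `y` under `Φ` inside the cylinder. -/
noncomputable def build (hlp : LeftPermutive φ) (z : ℕ → A) (y : ℤ → A) : ℤ → A :=
  fun k => if 1 ≤ k then z (k - 1).toNat else buildAux hlp z y (-k).toNat

lemma build_mem (hlp : LeftPermutive φ) (z : ℕ → A) (y : ℤ → A) :
    build hlp z y ∈ rightCyl z := by
  intro n
  have h1 : (1 : ℤ) ≤ (n : ℤ) + 1 := by omega
  simp [build, h1]

lemma phi_build {Φ : (ℤ → A) → ℤ → A} {ΦR : (ℕ → A) → ℕ → A}
    (hΦ : IsCA φ Φ) (hΦR : IsCAR φ ΦR) (hlp : LeftPermutive φ)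
    {z : ℕ → A} (hz : ΦR z = z) {y : ℤ → A} (hy : y ∈ rightCyl z) :
    Φ (build hlp z y) = y := by
  funext i
  rw [hΦ, consDecomp]
  by_cases hi : (1 : ℤ) ≤ i
  · -- positive coordinates: uses that z is fixed
    set n : ℕ := (i - 1).toNat with hn
    have hin : i = (n : ℤ) + 1 := by omega
    have hhead : build hlp z y i = z n := by
      simp only [build, if_pos hi, ← hn]
    have htail : (fun j : Fin r => build hlp z y (i + (j : ℕ) + 1)) =
        fun j : Fin r => z (n + (j : ℕ) + 1) := by
      funext j
      have h1 : (1 : ℤ) ≤ i + (j : ℕ) + 1 := by omega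
      simp only [build, if_pos h1]
      congr 1
      omega
    rw [hhead, htail]
    have hzfix : φ (fun j : Fin (r + 1) => z (n + (j : ℕ))) = z n := by
      rw [← hΦR z n, hz]
    have hcons : (Fin.cons (z n) (fun j : Fin r => z (n + (j : ℕ) + 1)) :
        Fin (r + 1) → A) = fun j : Fin (r + 1) => z (n + (j : ℕ)) := by
      funext j
      refine Fin.cases ?_ (fun k => ?_) j
      · simp
      · simp only [Fin.cons_succ, Fin.val_succ]
        congr 1
    rw [hcons, hzfix, hin, hy n]
  · -- nonpositive coordinates: buildAux computes the preimage
    set n : ℕ := (-i).toNat with hn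
    have hin : i = -(n : ℤ) := by omega
    set t : Fin r → A := fun j : Fin r =>
      if h : (j : ℕ) < n then buildAux hlp z y (n - ((j : ℕ) + 1))
      else z ((j : ℕ) - n) with ht
    have hhead : build hlp z y i = (lpEquiv hlp t).symm (y (-(n : ℤ))) := by
      simp only [build, if_neg hi, ← hn]
      rw [buildAux]
    have htail : (fun j : Fin r => build hlp z y (i + (j : ℕ) + 1)) = t := by
      funext j
      by_cases hj : (j : ℕ) < n
      · have h1 : ¬ (1 : ℤ) ≤ i + (j : ℕ) + 1 := by omega
        simp only [build, if_neg h1, ht, dif_pos hj]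
        congr 1
        omega
      · have h1 : (1 : ℤ) ≤ i + (j : ℕ) + 1 := by omega
        simp only [build, if_pos h1, ht, dif_neg hj]
        congr 1
        omega
    rw [hhead, htail, hin]
    exact lpEquiv_symm_spec hlp t (y (-(n : ℤ)))

lemma injOn_phi {Φ : (ℤ → A) → ℤ → A} (hΦ : IsCA φ Φ) (hlp : LeftPermutive φ)
    (z : ℕ → A) : Set.InjOn Φ (rightCyl z) := by
  intro x hx y hy heq
  have key : ∀ n : ℕ, x (1 - (n : ℤ)) = y (1 - (n : ℤ)) := by
    intro n
    induction n using Nat.strong_induction_on with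
    | _ n ih =>
      have hx' := hΦ x (1 - (n : ℤ))
      have hy' := hΦ y (1 - (n : ℤ))
      rw [consDecomp] at hx' hy'
      have htail : (fun j : Fin r => x (1 - (n : ℤ) + (j : ℕ) + 1)) =
          fun j : Fin r => y (1 - (n : ℤ) + (j : ℕ) + 1) := by
        funext j
        by_cases hj : (j : ℕ) < n
        · have e1 : (1 - (n : ℤ) + (j : ℕ) + 1) = 1 - ((n - ((j : ℕ) + 1) : ℕ) : ℤ) := by
            omega
          rw [e1]
          exact ih _ (by omega)
        · have e1 : (1 - (n : ℤ) + (j : ℕ) + 1) = (((j : ℕ) + 1 - n : ℕ) : ℤ) + 1 := by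
            omega
          rw [e1, hx _, hy _]
      have hcoord : Φ x (1 - (n : ℤ)) = Φ y (1 - (n : ℤ)) := by rw [heq]
      rw [hx', hy', htail] at hcoord
      exact (hlp _).1 hcoord
  funext k
  by_cases hk : (1 : ℤ) ≤ k
  · have e1 : k = (((k - 1).toNat : ℕ) : ℤ) + 1 := by omega
    rw [e1, hx _, hy _]
  · have e1 : k = 1 - (((1 - k).toNat : ℕ) : ℤ) := by omega
    rw [e1]
    exact key _

end Aux

/-- If `(z_1,z_2,...)` is `Φ_R`-fixed then each power `Φ^i` restricts to a
self-homeomorphism of the set `C = {x : x_k = z_k for all k ≥ 1}`. -/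
theorem power_restricts_to_homeomorph {A : Type*} [Fintype A] [TopologicalSpace A]
    [DiscreteTopology A] {r : ℕ}
    (φ : (Fin (r + 1) → A) → A) (Φ : (ℤ → A) → ℤ → A) (ΦR : (ℕ → A) → ℕ → A)
    (hΦ : IsCA φ Φ) (hΦR : IsCAR φ ΦR) (hlp : LeftPermutive φ)
    (z : ℕ → A) (hz : ΦR z = z) :
    ∀ i : ℕ, Set.MapsTo Φ^[i] (rightCyl z) (rightCyl z) ∧
      ∃ h : rightCyl z ≃ₜ rightCyl z, ∀ x : rightCyl z, (h x : ℤ → A) = Φ^[i] (x : ℤ → A) := by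
  -- Φ maps the cylinder to itself
  have hmaps : Set.MapsTo Φ (rightCyl z) (rightCyl z) := by
    intro x hx n
    rw [hΦ]
    have htail : (fun j : Fin (r + 1) => x ((n : ℤ) + 1 + (j : ℕ))) =
        fun j : Fin (r + 1) => z (n + (j : ℕ)) := by
      funext j
      have e1 : (n : ℤ) + 1 + (j : ℕ) = ((n + (j : ℕ) : ℕ) : ℤ) + 1 := by push_cast; ring
      rw [e1, hx _]
    rw [htail, ← hΦR z n, hz]
  -- Φ restricted to the cylinder
  set F : rightCyl z → rightCyl z := fun x => ⟨Φ x, hmaps x.2⟩ with hF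
  have hFbij : Function.Bijective F := by
    constructor
    · intro a b hab
      exact Subtype.ext (injOn_phi hΦ hlp z a.2 b.2 (congrArg Subtype.val hab))
    · intro y
      exact ⟨⟨build hlp z y, build_mem hlp z y⟩,
        Subtype.ext (phi_build hΦ hΦR hlp hz y.2)⟩
  -- continuity of Φ
  have hΦcont : Continuous Φ := by
    have : Φ = fun x i => φ fun j : Fin (r + 1) => x (i + (j : ℕ)) :=
      funext fun x => funext (hΦ x)
    rw [this]
    refine continuous_pi fun i => ?_
    exact continuous_of_discreteTopology.comp
      (continuous_pi fun j => continuous_apply _)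
  have hFcont : Continuous F := by
    refine Continuous.subtype_mk ?_ _
    exact hΦcont.comp continuous_subtype_val
  -- the cylinder is compact
  have hclosed : IsClosed (rightCyl z) := by
    have : rightCyl z = ⋂ n : ℕ, {x : ℤ → A | x ((n : ℤ) + 1) = z n} := by
      ext x
      simp [rightCyl, Set.mem_iInter]
    rw [this]
    exact isClosed_iInter fun n =>
      isClosed_eq (continuous_apply _) continuous_const
  have : CompactSpace (rightCyl z) := isCompact_iff_compactSpace.mp hclosed.isCompact
  -- the base homeomorphism
  set E : rightCyl z ≃ rightCyl z := Equiv.ofBijective F hFbij with hE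
  let h₁ : rightCyl z ≃ₜ rightCyl z := Continuous.homeoOfEquivCompactToT2 (f := E) hFcont
  have hh₁ : ∀ x : rightCyl z, (h₁ x : ℤ → A) = Φ (x : ℤ → A) := fun x => rfl
  intro i
  refine ⟨hmaps.iterate i, ?_⟩
  induction i with
  | zero => exact ⟨Homeomorph.refl _, fun x => by simp⟩
  | succ n ih =>
    obtain ⟨h, hh⟩ := ih
    refine ⟨h.trans h₁, fun x => ?_⟩
    have : (h₁ (h x) : ℤ → A) = Φ (h x : ℤ → A) := hh₁ _
    rw [Function.iterate_succ_apply', ← hh x]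
    exact this
end

section
/- Let p be prime and Φ the cellular automaton on (ℤ/pℤ)^ℤ with local rule φ(t_0, t_1, ..., t_r) = t_0 + θ(t_1, ..., t_r) for some function θ and r > 0. If the forward orbit {Φ^n(x) : n ≥ 0} is infinite and (x_1, x_2, ...) is Φ_R-fixed, then Φ restricted to cl{Φ^n(x) : n ≥ 0} is topologically conjugate to the p-adic odometer (the '+1' map on ℤ_p = ∏_{n≥1} ℤ/pℤ with carrying). -/
open Set Function Filter Topology

/-!
Since `(x₁, x₂, …)` is `Φ_R`-fixed, every iterate `Φⁿ x` agrees with `x` on `[1, ∞)`. Moving left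
one coordinate at a time: `Φ` adds to coordinate `a - 1` a function of the coordinates `≥ a`, so
if the pattern of `Φⁿ x` on `[a, ∞)` depends exactly on `n mod N`, the increments of coordinate
`a - 1` are `N`-periodic and their sum `D` over a period lies in `ℤ/pℤ`; hence the pattern on
`[a - 1, ∞)` depends exactly on `n mod N` (if `D = 0`) or on `n mod pN`. So on `[1 - m, ∞)` the
orbit has exact period `p ^ j m`, with `j` nondecreasing, and unbounded because the orbit is
infinite. Evaluating `n ↦ Φⁿ x` on `[1 - m, ∞)` at the truncation modulo `p ^ j m` of a `p`-adic
integer gives a continuous injection of `ℤ_p` onto the orbit closure, which turns `+1` into `Φ`.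
-/

theorem ZMod.val_add_one_add_toNat_mul {p : ℕ} [NeZero p] (a : ZMod p) :
    (a + 1).val + (decide (a + 1 = 0)).toNat * p = a.val + 1 := by
  have hcast : a + 1 = ((a.val + 1 : ℕ) : ZMod p) := by simp
  rcases Nat.lt_or_ge (a.val + 1) p with hlt | hge
  · have hval : (a + 1).val = a.val + 1 := by rw [hcast, ZMod.val_natCast, Nat.mod_eq_of_lt hlt]
    have hne : a + 1 ≠ 0 := fun h => by rw [h, ZMod.val_zero] at hval; omega
    simp [hval, hne]
  · have heq : a.val + 1 = p := le_antisymm (ZMod.val_lt a) hge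
    have h0 : a + 1 = 0 := by rw [hcast, heq, ZMod.natCast_self]
    simp [h0, heq]

def truncValue (p k : ℕ) (z : ℕ → ZMod p) : ℕ := ∑ i ∈ Finset.range k, (z i).val * p ^ i

section TruncValue

variable {p : ℕ}

theorem truncValue_succ (k : ℕ) (z : ℕ → ZMod p) :
    truncValue p (k + 1) z = truncValue p k z + (z k).val * p ^ k :=
  Finset.sum_range_succ _ _

theorem truncValue_natDigits (n k : ℕ) :
    truncValue p k (fun i => ((n / p ^ i : ℕ) : ZMod p)) = n % p ^ k := by
  induction k with
  | zero => simp [truncValue, Nat.mod_one]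
  | succ k ih =>
    rw [truncValue_succ, ih, ZMod.val_natCast, pow_succ, Nat.mod_mul]
    ring

theorem continuous_truncValue (k : ℕ) : Continuous (truncValue p k) := by
  unfold truncValue
  fun_prop

variable [NeZero p]

theorem truncValue_lt (k : ℕ) (z : ℕ → ZMod p) : truncValue p k z < p ^ k := by
  induction k with
  | zero => simp [truncValue]
  | succ k ih =>
    have hdigit : (z k).val + 1 ≤ p := ZMod.val_lt _
    calc truncValue p (k + 1) z < p ^ k + (z k).val * p ^ k := by rw [truncValue_succ]; omega
      _ = ((z k).val + 1) * p ^ k := by ring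
      _ ≤ p * p ^ k := Nat.mul_le_mul_right _ hdigit
      _ = p ^ (k + 1) := (pow_succ' p k).symm

theorem truncValue_mod_pow {k K : ℕ} (h : k ≤ K) (z : ℕ → ZMod p) :
    truncValue p K z % p ^ k = truncValue p k z := by
  obtain ⟨d, rfl⟩ := Nat.exists_eq_add_of_le h
  induction d with
  | zero => exact Nat.mod_eq_of_lt (truncValue_lt k z)
  | succ d ih =>
    rw [← add_assoc, truncValue_succ, pow_add, mul_left_comm, Nat.add_mul_mod_self_left,
      ih (by omega)]

theorem eq_of_frequently_truncValue_eq {z z' : ℕ → ZMod p}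
    (h : ∀ k, ∃ K, k ≤ K ∧ truncValue p K z = truncValue p K z') : z = z' := by
  have hall : ∀ k, truncValue p k z = truncValue p k z' := fun k => by
    obtain ⟨K, hkK, hK⟩ := h k
    rw [← truncValue_mod_pow hkK, hK, truncValue_mod_pow hkK]
  funext n
  have hn := hall (n + 1)
  rw [truncValue_succ, truncValue_succ, hall n, Nat.add_left_cancel_iff,
    Nat.mul_left_inj (pow_ne_zero n (NeZero.ne p))] at hn
  exact ZMod.val_injective p hn

/-- `odoCarry z k` holds iff `z 0 = ⋯ = z (k - 1) = p - 1`. -/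
theorem truncValue_odometer_add_carry (k : ℕ) (z : ℕ → ZMod p) :
    truncValue p k (odometer (fun _ => p) z) + (odoCarry z k).toNat * p ^ k =
      truncValue p k z + 1 := by
  induction k with
  | zero => rfl
  | succ k ih =>
    have hodo : odometer (fun _ => p) z k = if odoCarry z k then z k + 1 else z k := rfl
    have hcarry : odoCarry z (k + 1) = (odoCarry z k && decide (z k + 1 = 0)) := rfl
    have hdigit := congrArg (· * p ^ k) (ZMod.val_add_one_add_toNat_mul (z k))
    rw [truncValue_succ, truncValue_succ, hodo, hcarry, pow_succ']
    cases hc : odoCarry z k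
    · simp only [hc, Bool.toNat_false, zero_mul, add_zero, Bool.false_and, Bool.false_eq_true,
        if_false] at ih ⊢
      omega
    · simp only [hc, Bool.toNat_true, one_mul, if_true, Bool.true_and] at ih hdigit ⊢
      simp only [add_mul, mul_assoc, one_mul] at hdigit
      omega

theorem truncValue_odometer (k : ℕ) (z : ℕ → ZMod p) :
    truncValue p k (odometer (fun _ => p) z) = (truncValue p k z + 1) % p ^ k := by
  rw [← truncValue_odometer_add_carry, Nat.add_mul_mod_self_right,
    Nat.mod_eq_of_lt (truncValue_lt k _)]

end TruncValue

theorem conjToOdometer_of_embedding {A : Type*} [TopologicalSpace A] [T2Space A]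
    {Φ : (ℤ → A) → ℤ → A} {x : ℤ → A} {s : ℕ → ℕ} [CompactSpace (∀ n, ZMod (s n))]
    {ι : (∀ n, ZMod (s n)) → ℤ → A} (hcont : Continuous ι) (hinj : Injective ι)
    (hrange : range ι = closure (fwdOrbit Φ x)) (hsemiconj : Semiconj ι (odometer s) Φ) :
    ConjToOdometer Φ x s := by
  have hmaps : MapsTo Φ (closure (fwdOrbit Φ x)) (closure (fwdOrbit Φ x)) := by
    rw [← hrange]
    rintro _ ⟨z, rfl⟩
    exact ⟨odometer s z, hsemiconj z⟩
  let e := (Equiv.ofInjective ι hinj).trans (Equiv.setCongr hrange)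
  let h := (continuous_induced_rng.2 hcont : Continuous e).homeoOfEquivCompactToT2
  refine ⟨hmaps, h.symm, fun y => ?_⟩
  rw [Homeomorph.symm_apply_eq]
  apply Subtype.ext
  change Φ y = ι (odometer s (h.symm y))
  rw [hsemiconj]
  exact congrArg (Φ ∘ Subtype.val) (h.apply_symm_apply y).symm

theorem mem_Ici_one_sub_toNat (i : ℤ) : i ∈ Ici (1 - (1 - i).toNat : ℤ) :=
  mem_Ici.2 (by omega)

def HasExactWindowPeriods {A : Type*} (p : ℕ) (F : ℕ → ℤ → A) (j : ℕ → ℕ) : Prop :=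
  ∀ (m a b : ℕ), EqOn (F a) (F b) (Ici (1 - m : ℤ)) ↔ a ≡ b [MOD p ^ j m]

section PadicLift

variable {A : Type*} {p : ℕ} {F : ℕ → ℤ → A} {j : ℕ → ℕ}

theorem HasExactWindowPeriods.monotone (hj : HasExactWindowPeriods p F j) (hp : 1 < p) :
    Monotone j := by
  intro m m' hm
  have hwin : EqOn (F (p ^ j m')) (F 0) (Ici (1 - m' : ℤ)) :=
    (hj m' _ _).2 (Nat.modEq_zero_iff_dvd.2 dvd_rfl)
  have hdvd : p ^ j m ∣ p ^ j m' :=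
    Nat.modEq_zero_iff_dvd.1 ((hj m _ _).1 (hwin.mono (Ici_subset_Ici.2 (by omega))))
  exact (Nat.pow_dvd_pow_iff_le_right hp).1 hdvd

theorem HasExactWindowPeriods.exists_le_of_infinite [NeZero p] (hj : HasExactWindowPeriods p F j)
    (hinf : (range F).Infinite) (k : ℕ) : ∃ m, k ≤ j m := by
  by_contra! hbound
  have hperiodic : ∀ n, F (n % p ^ k) = F n := fun n => funext fun i =>
    (hj (1 - i).toNat _ _).2
      ((Nat.mod_modEq n _).of_dvd (pow_dvd_pow p (hbound _).le)) (mem_Ici_one_sub_toNat i)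
  refine hinf ((finite_Iio (p ^ k)).image F |>.subset ?_)
  rintro _ ⟨n, rfl⟩
  exact ⟨n % p ^ k, Nat.mod_lt n (pow_pos (NeZero.pos p) k), hperiodic n⟩

variable (p F j) in
/-- Coordinate `i` lies in the half-line `Ici (1 - m)` with `m = (1 - i).toNat`, on which
`F n` depends only on the first `j m` base-`p` digits of `n`. -/
def padicLift (z : ℕ → ZMod p) : ℤ → A := fun i => F (truncValue p (j (1 - i).toNat) z) i

variable (p F j) in
theorem continuous_padicLift [TopologicalSpace A] :
    Continuous (padicLift p F j : (ℕ → ZMod p) → ℤ → A) :=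
  continuous_pi fun i =>
    (continuous_of_discreteTopology (f := fun n => F n i)).comp (continuous_truncValue _)

theorem padicLift_natDigits (hj : HasExactWindowPeriods p F j) (n : ℕ) :
    padicLift p F j (fun i => ((n / p ^ i : ℕ) : ZMod p)) = F n := funext fun i => by
  rw [padicLift, truncValue_natDigits]
  exact (hj (1 - i).toNat _ _).2 (Nat.mod_modEq _ _) (mem_Ici_one_sub_toNat i)

variable [NeZero p]

theorem padicLift_eqOn (hj : HasExactWindowPeriods p F j) (hmono : Monotone j) {m k : ℕ}
    (hk : j m ≤ k) (z : ℕ → ZMod p) :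
    EqOn (padicLift p F j z) (F (truncValue p k z)) (Ici (1 - m : ℤ)) := fun i hi => by
  have him : (1 - i).toNat ≤ m := by rw [mem_Ici] at hi; omega
  refine (hj (1 - i).toNat _ _).2 ?_ (mem_Ici_one_sub_toNat i)
  rw [Nat.ModEq, truncValue_mod_pow ((hmono him).trans hk), Nat.mod_eq_of_lt (truncValue_lt _ _)]

theorem padicLift_injective (hj : HasExactWindowPeriods p F j) (hmono : Monotone j)
    (hunbdd : ∀ k, ∃ m, k ≤ j m) : Injective (padicLift p F j) := by
  intro z z' hzz'
  refine eq_of_frequently_truncValue_eq fun k => ?_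
  obtain ⟨m, hm⟩ := hunbdd k
  refine ⟨j m, hm, ?_⟩
  have hwin : EqOn (F (truncValue p (j m) z)) (F (truncValue p (j m) z')) (Ici (1 - m : ℤ)) :=
    ((padicLift_eqOn hj hmono le_rfl z).symm.trans (hzz' ▸ padicLift_eqOn hj hmono le_rfl z'))
  have hmod := (hj m _ _).1 hwin
  rwa [Nat.ModEq, Nat.mod_eq_of_lt (truncValue_lt _ _), Nat.mod_eq_of_lt (truncValue_lt _ _)]
    at hmod

theorem range_padicLift [TopologicalSpace A] [T2Space A] (hj : HasExactWindowPeriods p F j)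
    (hmono : Monotone j) : range (padicLift p F j) = closure (range F) := by
  refine subset_antisymm ?_ ?_
  · rintro _ ⟨z, rfl⟩
    refine mem_closure_of_tendsto (f := fun m => F (truncValue p (j m) z)) (b := atTop) ?_
      (Eventually.of_forall fun m => mem_range_self _)
    refine tendsto_pi_nhds.2 fun i => tendsto_const_nhds.congr' ?_
    filter_upwards [eventually_ge_atTop (1 - i).toNat] with m hm
    exact padicLift_eqOn hj hmono (m := m) le_rfl z (mem_Ici.2 (by omega))
  · refine closure_minimal ?_ (isCompact_range (continuous_padicLift p F j)).isClosed
    rintro _ ⟨n, rfl⟩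
    exact ⟨_, padicLift_natDigits hj n⟩

theorem padicLift_semiconj_odometer (hj : HasExactWindowPeriods p F j) (hmono : Monotone j)
    {Φ : (ℤ → A) → ℤ → A} (hF : ∀ n, F (n + 1) = Φ (F n))
    (hΦ : ∀ (a : ℤ) (y z : ℤ → A), EqOn y z (Ici a) → EqOn (Φ y) (Φ z) (Ici a)) :
    Semiconj (padicLift p F j) (odometer fun _ => p) Φ := fun z => funext fun i => by
  set m := (1 - i).toNat
  have hi := mem_Ici_one_sub_toNat i
  have hstep : EqOn (F (truncValue p (j m) (odometer (fun _ => p) z)))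
      (F (truncValue p (j m) z + 1)) (Ici (1 - m : ℤ)) := by
    rw [truncValue_odometer]
    exact (hj m _ _).2 (Nat.mod_modEq _ _)
  calc padicLift p F j (odometer (fun _ => p) z) i
      = F (truncValue p (j m) z + 1) i := (padicLift_eqOn hj hmono le_rfl _).trans hstep hi
    _ = Φ (F (truncValue p (j m) z)) i := by rw [hF]
    _ = Φ (padicLift p F j z) i := hΦ _ _ _ (padicLift_eqOn hj hmono le_rfl z).symm hi

end PadicLift

theorem eqOn_Ici_sub_one_iff {β : Type*} {f g : ℤ → β} {a : ℤ} :
    EqOn f g (Ici (a - 1)) ↔ EqOn f g (Ici a) ∧ f (a - 1) = g (a - 1) := by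
  refine ⟨fun h => ⟨h.mono (Ici_subset_Ici.2 (by omega)), h (mem_Ici.2 le_rfl)⟩, ?_⟩
  rintro ⟨h, ha⟩ i (hi : a - 1 ≤ i)
  rcases hi.eq_or_lt with rfl | hlt
  · exact ha
  · exact h (show a ≤ i by omega)

section LeftPermutive

variable {A : Type*} [Add A] {r : ℕ} {θ : (Fin r → A) → A} {Φ : (ℤ → A) → ℤ → A}

theorem eqOn_Ici_map (hΦ : ∀ x i, Φ x i = x i + θ fun j : Fin r => x (i + 1 + (j : ℕ)))
    {a : ℤ} {y z : ℤ → A} (h : EqOn y z (Ici a)) : EqOn (Φ y) (Φ z) (Ici a) := fun i hi => by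
  have hai : a ≤ i := hi
  rw [hΦ, hΦ, h hi]
  congr 2
  funext t
  exact h (show a ≤ i + 1 + (t : ℕ) by omega)

theorem eqOn_Ici_one_of_rightPart_fixed
    (hΦ : ∀ x i, Φ x i = x i + θ fun j : Fin r => x (i + 1 + (j : ℕ)))
    {ΦR : (ℕ → A) → ℕ → A} (hΦR : ∀ x n, ΦR x n = x n + θ fun j : Fin r => x (n + 1 + (j : ℕ)))
    {x : ℤ → A} (hfix : ΦR (fun n : ℕ => x ((n : ℤ) + 1)) = fun n : ℕ => x ((n : ℤ) + 1)) :
    EqOn (Φ x) x (Ici 1) := fun i (hi : 1 ≤ i) => by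
  obtain ⟨n, rfl⟩ : ∃ n : ℕ, i = n + 1 := ⟨(i - 1).toNat, by omega⟩
  calc Φ x (n + 1) = ΦR (fun n : ℕ => x ((n : ℤ) + 1)) n := by
        rw [hΦ, hΦR]
        congr 2
        funext t
        push_cast
        ring_nf
    _ = x (n + 1) := congrFun hfix n

theorem iterate_eqOn_Ici_one (hΦ : ∀ x i, Φ x i = x i + θ fun j : Fin r => x (i + 1 + (j : ℕ)))
    {x : ℤ → A} (hx : EqOn (Φ x) x (Ici 1)) (n : ℕ) : EqOn (Φ^[n] x) x (Ici 1) := by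
  induction n with
  | zero => exact eqOn_refl _ _
  | succ n ih =>
    rw [iterate_succ_apply']
    exact (eqOn_Ici_map hΦ ih).trans hx

end LeftPermutive

theorem apply_add_mul_of_periodic_increment {G : Type*} [AddCommGroup G] {g u : ℕ → G} {N : ℕ}
    (hg : ∀ n, g (n + 1) = g n + u n) (hu : Periodic u N) (n c : ℕ) :
    g (n + c * N) = g n + c • (g N - g 0) := by
  have hshift : ∀ n, g (n + N) = g n + (g N - g 0) := by
    intro n
    induction n with
    | zero => simp
    | succ n ih =>
      rw [show n + 1 + N = n + N + 1 by omega, hg, ih, hg, hu n]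
      abel
  induction c with
  | zero => simp
  | succ c ih =>
    rw [show n + (c + 1) * N = n + c * N + N by ring, hshift, ih, succ_nsmul]
    abel

theorem exists_modEq_iff_of_periodic_increment {p N : ℕ} [Fact p.Prime] {g u : ℕ → ZMod p}
    (hg : ∀ n, g (n + 1) = g n + u n) (hu : Periodic u N) :
    ∃ N' ∈ ({N, p * N} : Set ℕ), ∀ a b, a ≡ b [MOD N] ∧ g a = g b ↔ a ≡ b [MOD N'] := by
  have hdrift := apply_add_mul_of_periodic_increment hg hu
  set D := g N - g 0
  obtain ⟨N', hN', key⟩ : ∃ N' ∈ ({N, p * N} : Set ℕ),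
      ∀ a d, N ∣ d ∧ g (a + d) = g a ↔ N' ∣ d := by
    by_cases hD : D = 0
    · refine ⟨N, Or.inl rfl, fun a d => ⟨And.left, fun hd => ⟨hd, ?_⟩⟩⟩
      obtain ⟨c, rfl⟩ := hd
      rw [mul_comm, hdrift, hD, smul_zero, add_zero]
    · have hstable : ∀ a c, g (a + c * N) = g a ↔ p ∣ c := fun a c => by
        rw [hdrift, add_eq_left, nsmul_eq_mul, mul_eq_zero, or_iff_left hD,
          ZMod.natCast_eq_zero_iff]
      refine ⟨p * N, Or.inr rfl, fun a d => ⟨?_, ?_⟩⟩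
      · rintro ⟨⟨c, rfl⟩, hc⟩
        rw [mul_comm N, hstable] at hc
        exact mul_comm c N ▸ Nat.mul_dvd_mul_right hc N
      · rintro ⟨e, rfl⟩
        refine ⟨⟨p * e, by ring⟩, ?_⟩
        rw [show p * N * e = p * e * N by ring, hstable]
        exact dvd_mul_right p e
  refine ⟨N', hN', fun a b => ?_⟩
  wlog hab : a ≤ b generalizing a b
  · rw [Nat.ModEq.comm, eq_comm, Nat.ModEq.comm (n := N')]
    exact this b a (by omega)
  obtain ⟨d, rfl⟩ := Nat.exists_eq_add_of_le hab
  rw [Nat.modEq_iff_dvd' hab, Nat.modEq_iff_dvd' hab, Nat.add_sub_cancel_left, eq_comm]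
  exact key a d

theorem exists_hasExactWindowPeriods {p r : ℕ} [Fact p.Prime] {θ : (Fin r → ZMod p) → ZMod p}
    {Φ : (ℤ → ZMod p) → ℤ → ZMod p}
    (hΦ : ∀ x i, Φ x i = x i + θ fun j : Fin r => x (i + 1 + (j : ℕ)))
    {x : ℤ → ZMod p} (hx : EqOn (Φ x) x (Ici 1)) :
    ∃ j, HasExactWindowPeriods p (fun n => Φ^[n] x) j := by
  suffices ∀ m : ℕ, ∃ k, ∀ a b,
      EqOn (Φ^[a] x) (Φ^[b] x) (Ici (1 - m : ℤ)) ↔ a ≡ b [MOD p ^ k] by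
    choose j hj using this
    exact ⟨j, hj⟩
  intro m
  induction m with
  | zero =>
    refine ⟨0, fun a b => ?_⟩
    simp only [Nat.cast_zero, sub_zero, pow_zero, Nat.modEq_one, iff_true]
    exact (iterate_eqOn_Ici_one hΦ hx a).trans (iterate_eqOn_Ici_one hΦ hx b).symm
  | succ m ih =>
    obtain ⟨k, hk⟩ := ih
    set a₀ : ℤ := 1 - m
    have hg : ∀ n, Φ^[n + 1] x (a₀ - 1) =
        Φ^[n] x (a₀ - 1) + θ fun t : Fin r => Φ^[n] x (a₀ - 1 + 1 + (t : ℕ)) := fun n => by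
      rw [iterate_succ_apply', hΦ]
    have hu : Periodic (fun n => θ fun t : Fin r => Φ^[n] x (a₀ - 1 + 1 + (t : ℕ))) (p ^ k) :=
      fun n => by
        dsimp only
        congr 1
        funext t
        exact (hk _ _).2 Nat.add_modEq_right (show a₀ ≤ a₀ - 1 + 1 + (t : ℕ) by omega)
    obtain ⟨N', hN', hiff⟩ :=
      exists_modEq_iff_of_periodic_increment (g := fun n => Φ^[n] x (a₀ - 1)) hg hu
    have hwindow : (1 - (m + 1 : ℕ) : ℤ) = a₀ - 1 := by push_cast; ring
    rcases hN' with rfl | rfl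
    · exact ⟨k, fun a b => by rw [hwindow, eqOn_Ici_sub_one_iff, hk]; exact hiff a b⟩
    · exact ⟨k + 1, fun a b => by rw [hwindow, eqOn_Ici_sub_one_iff, hk, pow_succ']; exact hiff a b⟩

theorem conj_to_p_adic_odometer_general {p r : ℕ} (hp : p.Prime)
    (θ : (Fin r → ZMod p) → ZMod p)
    (Φ : (ℤ → ZMod p) → ℤ → ZMod p) (ΦR : (ℕ → ZMod p) → ℕ → ZMod p)
    (hΦ : ∀ x i, Φ x i = x i + θ fun j : Fin r => x (i + 1 + (j : ℕ)))
    (hΦR : ∀ x n, ΦR x n = x n + θ fun j : Fin r => x (n + 1 + (j : ℕ)))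
    (x : ℤ → ZMod p)
    (hinf : (fwdOrbit Φ x).Infinite)
    (hfix : ΦR (fun n : ℕ => x ((n : ℤ) + 1)) = fun n : ℕ => x ((n : ℤ) + 1)) :
    ConjToOdometer Φ x fun _ => p := by
  have := Fact.mk hp
  obtain ⟨j, hj⟩ := exists_hasExactWindowPeriods hΦ (eqOn_Ici_one_of_rightPart_fixed hΦ hΦR hfix)
  have hmono := hj.monotone hp.one_lt
  exact conjToOdometer_of_embedding (s := fun _ => p) (continuous_padicLift p _ j)
    (padicLift_injective hj hmono (hj.exists_le_of_infinite hinf))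
    (range_padicLift hj hmono)
    (padicLift_semiconj_odometer hj hmono (fun n => iterate_succ_apply' Φ n x)
      (fun _ _ _ => eqOn_Ici_map hΦ))

/-- Theorem 4: for the left permutive cellular automaton on `(ℤ/pℤ)^ℤ`, `p` prime, with
local rule `t_0 + θ(t_1,...,t_r)`, `r > 0`: if the forward orbit of `x` is infinite and
`(x_1,x_2,...)` is `Φ_R`-fixed, then `Φ` on the orbit closure of `x` is topologically
conjugate to the `p`-adic odometer. -/
theorem conj_to_p_adic_odometer {p r : ℕ} (hp : p.Prime) (hr : 0 < r)
    (θ : (Fin r → ZMod p) → ZMod p)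
    (Φ : (ℤ → ZMod p) → ℤ → ZMod p) (ΦR : (ℕ → ZMod p) → ℕ → ZMod p)
    (hΦ : ∀ x i, Φ x i = x i + θ fun j : Fin r => x (i + 1 + (j : ℕ)))
    (hΦR : ∀ x n, ΦR x n = x n + θ fun j : Fin r => x (n + 1 + (j : ℕ)))
    (x : ℤ → ZMod p)
    (hinf : (fwdOrbit Φ x).Infinite)
    (hfix : ΦR (fun n : ℕ => x ((n : ℤ) + 1)) = fun n : ℕ => x ((n : ℤ) + 1)) :
    ConjToOdometer Φ x fun _ => p :=
  conj_to_p_adic_odometer_general hp θ Φ ΦR hΦ hΦR x hinf hfix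
end

section
/- Let p be prime, m ≥ 1, and Φ the cellular automaton on (ℤ/p^mℤ)^ℤ with local rule φ(t_0,...,t_r) = t_0 + θ(t_1,...,t_r), r > 0. If {Φ^n(x) : n ≥ 0} is infinite and (x_1, x_2, ...) is Φ_R-fixed, then Φ restricted to cl{Φ^n(x) : n ≥ 0} is topologically conjugate to the p-adic odometer. (Key fact: the (p^{m_1}, p^{m_2}, ...)-adic odometer with all m_j ≥ 1 is topologically conjugate to the p-adic odometer.) -/
section Digits
variable {p : ℕ}

/-- digits of `n%p^t` below `t` agree with digits of `n`. -/
lemma digL2n (n : ℕ) {k t : ℕ} (hkt : k < t) : (n % p ^ t) / p ^ k % p = n / p ^ k % p := by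
  have h1 : p ^ t = p ^ k * p ^ (t - k) := by rw [← pow_add]; congr 1; omega
  rw [h1, Nat.mod_mul_right_div_self]
  exact Nat.mod_mod_of_dvd _ (dvd_pow_self p (by omega))

lemma digL2z (n : ℕ) {k t : ℕ} (hkt : k < t) :
    (((n % p ^ t) / p ^ k : ℕ) : ZMod p) = ((n / p ^ k : ℕ) : ZMod p) := by
  rw [← ZMod.natCast_mod ((n % p ^ t) / p ^ k) p, digL2n n hkt, ZMod.natCast_mod]

lemma mod_pow_succ_decomp (a k : ℕ) :
    a % p ^ (k + 1) = p ^ k * (a / p ^ k % p) + a % p ^ k := by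
  have h1 : a % (p ^ k * p) / p ^ k = a / p ^ k % p := Nat.mod_mul_right_div_self a _ _
  have h2 : a % (p ^ k * p) % p ^ k = a % p ^ k := Nat.mod_mod_of_dvd _ ⟨p, rfl⟩
  have h3 := Nat.div_add_mod (a % (p ^ k * p)) (p ^ k)
  rw [h1, h2] at h3
  rw [pow_succ]
  omega

lemma mod_pow_succ_max (a k : ℕ) (hp0 : 2 ≤ p) :
    a % p ^ (k + 1) + 1 = p ^ (k + 1) ↔
      (a % p ^ k + 1 = p ^ k ∧ a / p ^ k % p + 1 = p) := by
  have hP : 0 < p ^ k := Nat.pow_pos (by omega)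
  have hd := mod_pow_succ_decomp (p := p) a k
  have hm1 : a % p ^ k < p ^ k := Nat.mod_lt _ hP
  have hm2 : a / p ^ k % p < p := Nat.mod_lt _ (by omega)
  have hsucc : p ^ (k + 1) = p ^ k * p := pow_succ p k
  have hle : p ^ k * (p - 1) + p ^ k = p ^ k * p := by
    have h5 : p - 1 + 1 = p := by omega
    calc p ^ k * (p - 1) + p ^ k = p ^ k * (p - 1 + 1) := by ring
    _ = p ^ k * p := by rw [h5]
  constructor
  · intro h
    have hd2 : p ^ k * (a / p ^ k % p) + (a % p ^ k + 1) = p ^ k * p := by omega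
    have hge : p - 1 ≤ a / p ^ k % p := by
      by_contra hlt
      push_neg at hlt
      have h6 : p ^ k * (a / p ^ k % p) + p ^ k ≤ p ^ k * (p - 1) := by
        calc p ^ k * (a / p ^ k % p) + p ^ k = p ^ k * (a / p ^ k % p + 1) := by ring
        _ ≤ p ^ k * (p - 1) := Nat.mul_le_mul_left _ (by omega)
      omega
    have heq : a / p ^ k % p = p - 1 := by omega
    rw [heq] at hd2
    omega
  · rintro ⟨h1, h2⟩
    have h3 : a / p ^ k % p = p - 1 := by omega
    rw [h3] at hd
    omega

lemma odoCarry_congr {s : ℕ → ℕ} {z w : ∀ n, ZMod (s n)} {k : ℕ}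
    (h : ∀ j < k, z j = w j) : odoCarry z k = odoCarry w k := by
  induction k with
  | zero => rfl
  | succ k ih =>
    show (odoCarry z k && _) = (odoCarry w k && _)
    rw [ih (fun j hj => h j (by omega)), h k (by omega)]

lemma odometer_congr {s : ℕ → ℕ} {z w : ∀ n, ZMod (s n)} {k : ℕ}
    (h : ∀ j ≤ k, z j = w j) : odometer s z k = odometer s w k := by
  unfold odometer
  rw [odoCarry_congr (fun j hj => h j (by omega)), h k le_rfl]

/-- the digit sequence of `a` in base `p`. -/
def Dig (p a : ℕ) : ∀ _ : ℕ, ZMod p := fun k => ((a / p ^ k : ℕ) : ZMod p)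

lemma odoCarry_dig (hp : 2 ≤ p) (a k : ℕ) :
    odoCarry (s := fun _ => p) (Dig p a) k = decide (a % p ^ k + 1 = p ^ k) := by
  haveI : NeZero p := ⟨by omega⟩
  induction k with
  | zero => simp [odoCarry, Nat.mod_one]
  | succ k ih =>
    show (odoCarry (s := fun _ => p) (Dig p a) k && decide (Dig p a k + 1 = 0)) = _
    rw [ih]
    have hiff : (Dig p a k + 1 = 0) ↔ a / p ^ k % p + 1 = p := by
      unfold Dig
      rw [show ((1 : ZMod p) = ((1:ℕ) : ZMod p)) by push_cast; ring, ← Nat.cast_add,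
        ZMod.natCast_eq_zero_iff]
      constructor
      · intro hdvd
        have h1 := Nat.mod_lt (a / p ^ k) (show 0 < p by omega)
        have h2 := Nat.div_add_mod (a / p ^ k) p
        rcases hdvd with ⟨c, hc⟩
        rcases Nat.lt_or_ge (a / p ^ k % p + 1) p with h | h
        · exfalso
          have h3 : (a / p ^ k + 1) % p = a / p ^ k % p + 1 := by
            conv_lhs => rw [← h2]
            rw [Nat.add_assoc, Nat.mul_add_mod]
            exact Nat.mod_eq_of_lt h
          rw [hc, Nat.mul_mod_right] at h3
          omega
        · omega
      · intro h
        have h2 := Nat.div_add_mod (a / p ^ k) p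
        refine ⟨a / p ^ k / p + 1, ?_⟩
        have hms : p * (a / p ^ k / p + 1) = p * (a / p ^ k / p) + p := Nat.mul_succ p _
        omega
    by_cases h1 : a % p ^ k + 1 = p ^ k <;> by_cases h2 : a / p ^ k % p + 1 = p <;>
      simp [h1, h2, hiff, mod_pow_succ_max a k hp]

lemma odometer_dig (hp : 2 ≤ p) (a : ℕ) :
    odometer (fun _ => p) (Dig p a) = Dig p (a + 1) := by
  funext k
  unfold odometer
  rw [odoCarry_dig hp]
  have hP : 0 < p ^ k := Nat.pow_pos (by omega)
  have hdm := Nat.div_add_mod a (p ^ k)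
  by_cases h : a % p ^ k + 1 = p ^ k
  · rw [decide_eq_true h, if_pos rfl]
    have hdiv : (a + 1) / p ^ k = a / p ^ k + 1 := by
      have hms : p ^ k * (a / p ^ k + 1) = p ^ k * (a / p ^ k) + p ^ k := Nat.mul_succ _ _
      have h7 : a + 1 = p ^ k * (a / p ^ k + 1) := by omega
      rw [h7, Nat.mul_div_cancel_left _ hP]
    unfold Dig
    rw [hdiv]
    push_cast
    ring
  · rw [decide_eq_false h, if_neg Bool.false_ne_true]
    have hlt : a % p ^ k < p ^ k := Nat.mod_lt _ hP
    have hdiv : (a + 1) / p ^ k = a / p ^ k := by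
      have heq : a + 1 = (a % p ^ k + 1) + p ^ k * (a / p ^ k) := by omega
      rw [heq, Nat.add_mul_div_left _ _ hP, Nat.div_eq_of_lt (by omega)]
      omega
    unfold Dig
    rw [hdiv]

end Digits
section Sums
variable {p : ℕ}

lemma sum_digits_lt (hp : 2 ≤ p) (c : ℕ → ℕ) (hc : ∀ j, c j < p) (t : ℕ) :
    ∑ j ∈ Finset.range t, c j * p ^ j < p ^ t := by
  induction t with
  | zero => simp
  | succ t ih =>
    rw [Finset.sum_range_succ]
    have h1 : c t * p ^ t ≤ (p - 1) * p ^ t := Nat.mul_le_mul_right _ (by have := hc t; omega)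
    have h2 : (p - 1) * p ^ t + p ^ t = p ^ (t + 1) := by
      have h5 : p - 1 + 1 = p := by omega
      calc (p - 1) * p ^ t + p ^ t = (p - 1 + 1) * p ^ t := by ring
      _ = p ^ (t+1) := by rw [h5, pow_succ, mul_comm]
    omega

lemma sum_digits_extract (hp : 2 ≤ p) (c : ℕ → ℕ) (hc : ∀ j, c j < p) {k t : ℕ} (hkt : k < t) :
    (∑ j ∈ Finset.range t, c j * p ^ j) / p ^ k % p = c k := by
  have hP : 0 < p ^ k := Nat.pow_pos (by omega)
  have hsplit : ∑ j ∈ Finset.range t, c j * p ^ j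
      = (∑ j ∈ Finset.range k, c j * p ^ j) + p ^ k * ∑ j ∈ Finset.range (t - k), c (k + j) * p ^ j := by
    have ht : t = k + (t - k) := by omega
    rw [Finset.mul_sum]
    conv_lhs => rw [ht, Finset.sum_range_add]
    congr 1
    apply Finset.sum_congr rfl
    intro j _
    rw [pow_add]
    ring
  rw [hsplit, Nat.add_mul_div_left _ _ hP,
    Nat.div_eq_of_lt (sum_digits_lt hp c hc k), Nat.zero_add]
  have ht2 : t - k = (t - k - 1) + 1 := by omega
  rw [ht2, Finset.sum_range_succ']
  simp only [pow_zero, mul_one, pow_succ, Nat.add_zero]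
  have hpull : ∑ j ∈ Finset.range (t - k - 1), c (k + (j + 1)) * (p ^ j * p)
      = (∑ j ∈ Finset.range (t - k - 1), c (k + (j + 1)) * p ^ j) * p := by
    rw [Finset.sum_mul]
    apply Finset.sum_congr rfl
    intro j _
    ring
  rw [hpull, Nat.add_comm, Nat.add_mul_mod_self_right]
  exact Nat.mod_eq_of_lt (hc k)

lemma sum_digits_recompose (hp : 2 ≤ p) {a t : ℕ} (ha : a < p ^ t) :
    ∑ k ∈ Finset.range t, (a / p ^ k % p) * p ^ k = a := by
  induction t generalizing a with
  | zero => simp at ha ⊢; omega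
  | succ t ih =>
    have hP : 0 < p ^ t := Nat.pow_pos (by omega)
    rw [Finset.sum_range_succ]
    have hmod : ∀ k < t, a % p ^ t / p ^ k % p = a / p ^ k % p := fun k hk => digL2n a hk
    have h1 : ∑ k ∈ Finset.range t, (a / p ^ k % p) * p ^ k = a % p ^ t := by
      rw [← ih (Nat.mod_lt _ hP)]
      exact Finset.sum_congr rfl fun k hk => by
        rw [hmod k (Finset.mem_range.mp hk)]
    have h2 : a / p ^ t < p := Nat.div_lt_of_lt_mul (by rw [← pow_succ]; exact ha)
    rw [h1, Nat.mod_eq_of_lt h2]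
    exact Nat.mod_add_div' a (p ^ t)

lemma sum_split_pow {p : ℕ} {a b : ℕ} (hab : a ≤ b) (c : ℕ → ℕ) :
    ∑ k ∈ Finset.range b, c k * p ^ k
      = (∑ k ∈ Finset.range a, c k * p ^ k)
        + (∑ i ∈ Finset.range (b - a), c (a + i) * p ^ i) * p ^ a := by
  conv_lhs => rw [show b = a + (b - a) by omega, Finset.sum_range_add]
  congr 1
  rw [Finset.sum_mul]
  apply Finset.sum_congr rfl
  intro i _
  rw [pow_add]
  ring

end Sums
section Dynamics

/-- agreement on coordinates `0, -1, ..., -(N-1)`. -/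
def agree {Q : ℕ} (N : ℕ) (y y' : ℤ → ZMod Q) : Prop :=
  ∀ j : ℕ, j < N → y (-(j : ℤ)) = y' (-(j : ℤ))

/-- `y` has the same tail `x_1 x_2 ...` as `x`. -/
def tailEq {Q : ℕ} (x y : ℤ → ZMod Q) : Prop := ∀ i : ℤ, 1 ≤ i → y i = x i

lemma agree_refl {Q N : ℕ} (y : ℤ → ZMod Q) : agree N y y := fun _ _ => rfl

lemma agree_symm {Q N : ℕ} {y y' : ℤ → ZMod Q} (h : agree N y y') : agree N y' y :=
  fun j hj => (h j hj).symm

lemma agree_trans {Q N : ℕ} {y y' y'' : ℤ → ZMod Q} (h : agree N y y')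
    (h' : agree N y' y'') : agree N y y'' := fun j hj => (h j hj).trans (h' j hj)

lemma agree_mono {Q M N : ℕ} (hMN : M ≤ N) {y y' : ℤ → ZMod Q} (h : agree N y y') :
    agree M y y' := fun j hj => h j (by omega)

variable {Q r : ℕ}
variable (θ : (Fin r → ZMod Q) → ZMod Q)
variable (Φ : (ℤ → ZMod Q) → ℤ → ZMod Q)
variable (x : ℤ → ZMod Q)

section WithRule
variable (hΦ : ∀ y i, Φ y i = y i + θ fun j : Fin r => y (i + 1 + (j : ℕ)))
variable (hvan : ∀ i : ℤ, 2 ≤ i → θ (fun j : Fin r => x (i + (j : ℕ))) = 0)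

include hΦ hvan
set_option linter.unusedSectionVars false

lemma tail_step {y : ℤ → ZMod Q} (hy : tailEq x y) : tailEq x (Φ y) := by
  intro i hi
  rw [hΦ]
  have hw : (fun j : Fin r => y (i + 1 + (j : ℕ))) = fun j : Fin r => x (i + 1 + (j : ℕ)) :=
    funext fun j => hy _ (by omega)
  rw [hw, hvan (i + 1) (by omega), add_zero, hy i hi]

lemma tail_iter {y : ℤ → ZMod Q} (hy : tailEq x y) (n : ℕ) : tailEq x (Φ^[n] y) := by
  induction n with
  | zero => exact hy
  | succ n ih => rw [Function.iterate_succ_apply']; exact tail_step θ Φ x hΦ hvan ih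

omit hΦ hvan in
lemma tail_x : tailEq x x := fun _ _ => rfl

lemma tail_orbit (n : ℕ) : tailEq x (Φ^[n] x) := tail_iter θ Φ x hΦ hvan (tail_x x) n

omit hΦ hvan in
lemma theta_congr {N : ℕ} {y y' : ℤ → ZMod Q} (hy : tailEq x y) (hy' : tailEq x y')
    (h : agree N y y') {j : ℕ} (hj : j ≤ N) :
    θ (fun i : Fin r => y (-(j : ℤ) + 1 + (i : ℕ))) =
      θ (fun i : Fin r => y' (-(j : ℤ) + 1 + (i : ℕ))) := by
  congr 1
  funext i
  set idx : ℤ := -(j : ℤ) + 1 + (i : ℕ) with hidx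
  by_cases h1 : 1 ≤ idx
  · rw [hy _ h1, hy' _ h1]
  · have h0 : idx ≤ 0 := by omega
    have hj1 : (1 : ℤ) ≤ (j : ℤ) - (i : ℕ) := by omega
    have hj' : ((((-idx).toNat : ℕ)) : ℤ) = -idx := by omega
    have hj'N : (-idx).toNat < N := by omega
    have := h _ hj'N
    rwa [hj', neg_neg] at this

lemma agree_step {N : ℕ} {y y' : ℤ → ZMod Q} (hy : tailEq x y) (hy' : tailEq x y')
    (h : agree N y y') : agree N (Φ y) (Φ y') := by
  intro j hj
  rw [hΦ, hΦ, h j hj, theta_congr θ x hy hy' h (le_of_lt hj)]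

lemma agree_iter {N : ℕ} {y y' : ℤ → ZMod Q} (hy : tailEq x y) (hy' : tailEq x y')
    (h : agree N y y') (n : ℕ) : agree N (Φ^[n] y) (Φ^[n] y') := by
  induction n with
  | zero => exact h
  | succ n ih =>
    rw [Function.iterate_succ_apply', Function.iterate_succ_apply']
    exact agree_step θ Φ x hΦ hvan (tail_iter θ Φ x hΦ hvan hy n) (tail_iter θ Φ x hΦ hvan hy' n) ih

/-- key periodicity: `Q^N` is a period for the first `N` coordinates, for every
tail-compatible point. -/
lemma per : ∀ N (y : ℤ → ZMod Q), tailEq x y → agree N (Φ^[Q ^ N] y) y := by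
  intro N
  induction N with
  | zero => intro y _ j hj; omega
  | succ N ih =>
    have aux : ∀ (b : ℕ) (y : ℤ → ZMod Q), tailEq x y → agree N (Φ^[Q ^ N * b] y) y := by
      intro b
      induction b with
      | zero => intro y _; simpa using agree_refl y
      | succ b ihb =>
        intro y hy
        have h1 : Φ^[Q ^ N * (b + 1)] y = Φ^[Q ^ N * b] (Φ^[Q ^ N] y) := by
          rw [show Q ^ N * (b + 1) = Q ^ N * b + Q ^ N by ring, Function.iterate_add_apply]
        rw [h1]
        exact agree_trans (ihb _ (tail_iter θ Φ x hΦ hvan hy _)) (ih y hy)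
    intro y hy j hj
    rcases Nat.lt_succ_iff_lt_or_eq.mp hj with hjN | rfl
    · have h2 : Q ^ (N + 1) = Q ^ N * Q := pow_succ Q N
      rw [h2]
      exact aux Q y hy j hjN
    · -- top coordinate
      set c : (ℤ → ZMod Q) → ZMod Q := fun z => θ (fun i : Fin r => z (-(j : ℤ) + 1 + (i : ℕ)))
        with hc
      have hstep : ∀ z : ℤ → ZMod Q, Φ z (-(j : ℤ)) = z (-(j : ℤ)) + c z := fun z => hΦ z _
      have hform : ∀ (t : ℕ) (z : ℤ → ZMod Q),
          Φ^[t] z (-(j : ℤ)) = z (-(j : ℤ)) + ∑ s ∈ Finset.range t, c (Φ^[s] z) := by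
        intro t z
        induction t with
        | zero => simp
        | succ t iht =>
          rw [Function.iterate_succ_apply', hstep, iht, Finset.sum_range_succ]
          ring
      have hccongr : ∀ z z' : ℤ → ZMod Q, tailEq x z → tailEq x z' → agree j z z' →
          c z = c z' := by
        intro z z' hz hz' hzz
        exact theta_congr θ x hz hz' hzz le_rfl
      have hperiodic : ∀ (b s : ℕ), c (Φ^[s + Q ^ j * b] y) = c (Φ^[s] y) := by
        intro b s
        rw [Function.iterate_add_apply]
        exact hccongr _ _ (tail_iter θ Φ x hΦ hvan (tail_iter θ Φ x hΦ hvan hy _) s)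
          (tail_iter θ Φ x hΦ hvan hy s)
          (agree_iter θ Φ x hΦ hvan (tail_iter θ Φ x hΦ hvan hy _) hy (aux b y hy) s)
      set w : ZMod Q := ∑ s ∈ Finset.range (Q ^ j), c (Φ^[s] y) with hw
      have hblocks : ∀ b : ℕ, ∑ s ∈ Finset.range (Q ^ j * b), c (Φ^[s] y) = b • w := by
        intro b
        induction b with
        | zero => simp
        | succ b ihb =>
          have h3 : Q ^ j * (b + 1) = Q ^ j * b + Q ^ j := by ring
          rw [h3, Finset.sum_range_add, ihb, succ_nsmul]
          congr 1
          rw [hw]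
          apply Finset.sum_congr rfl
          intro s _
          rw [show Q ^ j * b + s = s + Q ^ j * b by ring, hperiodic]
      have hQw : (Q : ℕ) • w = 0 := by
        rw [nsmul_eq_mul, ZMod.natCast_self, zero_mul]
      rw [show Q ^ (j + 1) = Q ^ j * Q from pow_succ Q j, hform, hblocks, hQw, add_zero]

end WithRule
end Dynamics
section Index
attribute [local instance] Classical.propDecidable

/-- projection to coordinates `0, -1, ..., -(N-1)`. -/
def projN {Q : ℕ} (N : ℕ) (y : ℤ → ZMod Q) : Fin N → ZMod Q := fun j => y (-(j : ℤ))

/-- extension of a finite configuration by `x`. -/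
def extendV {Q : ℕ} (x : ℤ → ZMod Q) (N : ℕ) (v : Fin N → ZMod Q) : ℤ → ZMod Q :=
  fun i => if h : i ≤ 0 ∧ (-i).toNat < N then v ⟨(-i).toNat, h.2⟩ else x i

lemma agree_extend {Q : ℕ} (x : ℤ → ZMod Q) (N : ℕ) (y : ℤ → ZMod Q) :
    agree N (extendV x N (projN N y)) y := by
  intro j hj
  have h1 : (-(-(j:ℤ))).toNat = j := by omega
  simp only [extendV, projN]
  rw [dif_pos ⟨by omega, by omega⟩]
  congr 1
  omega

noncomputable def eN (p : ℕ) {Q : ℕ} (Φ : (ℤ → ZMod Q) → ℤ → ZMod Q) (x : ℤ → ZMod Q) (N : ℕ) : ℕ :=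
  if h : ∃ e, agree N (Φ^[p ^ e] x) x then Nat.find h else 0

noncomputable def nuN (p : ℕ) {Q : ℕ} (Φ : (ℤ → ZMod Q) → ℤ → ZMod Q) (x : ℤ → ZMod Q) (k : ℕ) : ℕ :=
  if h : ∃ N, k < eN p Φ x N then Nat.find h else 0

noncomputable def idxV (p : ℕ) {Q : ℕ} (Φ : (ℤ → ZMod Q) → ℤ → ZMod Q) (x : ℤ → ZMod Q) (N : ℕ)
    (v : Fin N → ZMod Q) : ℕ :=
  (if h : ∃ n, agree N (extendV x N v) (Φ^[n] x) then Nat.find h else 0) % p ^ eN p Φ x N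

noncomputable def idxA (p : ℕ) {Q : ℕ} (Φ : (ℤ → ZMod Q) → ℤ → ZMod Q) (x : ℤ → ZMod Q) (N : ℕ)
    (y : ℤ → ZMod Q) : ℕ := idxV p Φ x N (projN N y)

def PeriodN {Q : ℕ} (Φ : (ℤ → ZMod Q) → ℤ → ZMod Q) (x : ℤ → ZMod Q) (N d : ℕ) : Prop :=
  ∀ s : ℕ, agree N (Φ^[s + d] x) (Φ^[s] x)

noncomputable def psiFun (p : ℕ) {Q : ℕ} (Φ : (ℤ → ZMod Q) → ℤ → ZMod Q) (x : ℤ → ZMod Q)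
    (y : ℤ → ZMod Q) : ∀ _ : ℕ, ZMod p :=
  fun k => ((idxA p Φ x (nuN p Φ x k) y / p ^ k : ℕ) : ZMod p)

noncomputable def nVal (p : ℕ) {Q : ℕ} (Φ : (ℤ → ZMod Q) → ℤ → ZMod Q) (x : ℤ → ZMod Q) (N : ℕ)
    (z : ℕ → ZMod p) : ℕ :=
  ∑ k ∈ Finset.range (eN p Φ x N), (z k).val * p ^ k

noncomputable def psiInv (p : ℕ) {Q : ℕ} (Φ : (ℤ → ZMod Q) → ℤ → ZMod Q) (x : ℤ → ZMod Q)
    (z : ℕ → ZMod p) : ℤ → ZMod Q :=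
  fun i => Φ^[nVal p Φ x (1 - i).toNat z] x i

end Index

section OdoMain
attribute [local instance] Classical.propDecidable
set_option linter.unusedSectionVars false
variable {p m r : ℕ}
variable (θ : (Fin r → ZMod (p ^ m)) → ZMod (p ^ m))
variable (Φ : (ℤ → ZMod (p ^ m)) → ℤ → ZMod (p ^ m))
variable (x : ℤ → ZMod (p ^ m))
variable (hp : p.Prime)
variable (hΦ : ∀ y i, Φ y i = y i + θ fun j : Fin r => y (i + 1 + (j : ℕ)))
variable (hvan : ∀ i : ℤ, 2 ≤ i → θ (fun j : Fin r => x (i + (j : ℕ))) = 0)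

lemma agree_of_eq {N a b : ℕ} (h : a = b) : agree N (Φ^[a] x) (Φ^[b] x) := by
  subst h; exact agree_refl _

include hp hΦ hvan

lemma eN_exists (N : ℕ) : ∃ e, agree N (Φ^[p ^ e] x) x :=
  ⟨m * N, by rw [pow_mul]; exact per θ Φ x hΦ hvan N x (tail_x x)⟩

lemma eN_spec (N : ℕ) : agree N (Φ^[p ^ eN p Φ x N] x) x := by
  unfold eN
  rw [dif_pos (eN_exists θ Φ x hp hΦ hvan N)]
  exact Nat.find_spec (eN_exists θ Φ x hp hΦ hvan N)

lemma eN_min {N e : ℕ} (h : agree N (Φ^[p ^ e] x) x) : eN p Φ x N ≤ e := by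
  unfold eN
  rw [dif_pos (eN_exists θ Φ x hp hΦ hvan N)]
  exact Nat.find_min' _ h

lemma eN_mono {M N : ℕ} (h : M ≤ N) : eN p Φ x M ≤ eN p Φ x N :=
  eN_min θ Φ x hp hΦ hvan (agree_mono h (eN_spec θ Φ x hp hΦ hvan N))

lemma periodN_L (N : ℕ) : PeriodN Φ x N (p ^ eN p Φ x N) := by
  intro s
  rw [Function.iterate_add_apply]
  exact agree_iter θ Φ x hΦ hvan (tail_orbit θ Φ x hΦ hvan _) (tail_x x)
    (eN_spec θ Φ x hp hΦ hvan N) s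

omit hp hΦ hvan in
lemma periodN_mul {N d : ℕ} (hd : PeriodN Φ x N d) (t : ℕ) : PeriodN Φ x N (t * d) := by
  induction t with
  | zero => intro s; exact agree_of_eq Φ x (by ring)
  | succ t ih =>
    intro s
    have h1 := ih (s + d)
    have h2 := hd s
    exact agree_trans (agree_of_eq Φ x (by ring)) (agree_trans h1 h2)

lemma mod_reduce (N n : ℕ) :
    agree N (Φ^[n] x) (Φ^[n % p ^ eN p Φ x N] x) := by
  have hL : 0 < p ^ eN p Φ x N := Nat.pow_pos hp.pos
  have h1 := periodN_mul Φ x (periodN_L θ Φ x hp hΦ hvan N) (n / p ^ eN p Φ x N)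
    (n % p ^ eN p Φ x N)
  have hdm := Nat.div_add_mod n (p ^ eN p Φ x N)
  have hcm := Nat.mul_comm (p ^ eN p Φ x N) (n / p ^ eN p Φ x N)
  exact agree_trans (agree_of_eq Φ x (by omega)) h1

omit hp hΦ hvan in
lemma period_of_eventual {N d n L : ℕ} (hd : ∀ t, agree N (Φ^[(n + t) + d] x) (Φ^[n + t] x))
    (hL : PeriodN Φ x N L) (hL1 : 1 ≤ L) : PeriodN Φ x N d := by
  intro s
  have hmul := periodN_mul Φ x hL n
  have hge : n ≤ s + n * L := by
    have := Nat.mul_le_mul_left n hL1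
    omega
  have h1 : agree N (Φ^[s + d] x) (Φ^[(s + d) + n * L] x) := agree_symm (hmul (s + d))
  have h2 : agree N (Φ^[(s + d) + n * L] x) (Φ^[s + n * L] x) := by
    have h3 := hd (s + n * L - n)
    exact agree_trans (agree_of_eq Φ x (by omega)) (agree_trans h3 (agree_of_eq Φ x (by omega)))
  exact agree_trans h1 (agree_trans h2 (periodN_mul Φ x hL n s))

lemma uniq_le {N n n' : ℕ} (hn' : n' < p ^ eN p Φ x N) (hle : n ≤ n')
    (hagree : agree N (Φ^[n] x) (Φ^[n'] x)) : n = n' := by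
  set L := p ^ eN p Φ x N with hLdef
  have hL1 : 1 ≤ L := Nat.pow_pos hp.pos
  set d := n' - n with hddef
  rcases Nat.eq_zero_or_pos d with hd0 | hdpos
  · omega
  · exfalso
    have hbase : agree N (Φ^[n + d] x) (Φ^[n] x) := by
      have : n + d = n' := by omega
      rw [this]
      exact agree_symm hagree
    have heventual : ∀ t, agree N (Φ^[(n + t) + d] x) (Φ^[n + t] x) := by
      intro t
      have h1 := agree_iter θ Φ x hΦ hvan (tail_orbit θ Φ x hΦ hvan (n + d))
        (tail_orbit θ Φ x hΦ hvan n) hbase t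
      rw [← Function.iterate_add_apply, ← Function.iterate_add_apply] at h1
      exact agree_trans (agree_of_eq Φ x (by omega))
        (agree_trans h1 (agree_of_eq Φ x (by omega)))
    have hPd : PeriodN Φ x N d :=
      period_of_eventual Φ x heventual (periodN_L θ Φ x hp hΦ hvan N) hL1
    have hEx : ∃ dd, 0 < dd ∧ PeriodN Φ x N dd :=
      ⟨L, hL1, periodN_L θ Φ x hp hΦ hvan N⟩
    set d0 := Nat.find hEx with hd0def
    obtain ⟨hd0pos, hd0per⟩ := Nat.find_spec hEx
    rw [← hd0def] at hd0pos hd0per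
    have dvd_of_period : ∀ dd, 0 < dd → PeriodN Φ x N dd → d0 ∣ dd := by
      intro dd hddpos hdd
      have hr : PeriodN Φ x N (dd % d0) := by
        intro s
        have h1 := periodN_mul Φ x hd0per (dd / d0) (s + dd % d0)
        have hdm := Nat.div_add_mod dd d0
        have hcm := Nat.mul_comm d0 (dd / d0)
        exact agree_trans (agree_symm h1)
          (agree_trans (agree_of_eq Φ x (by omega)) (hdd s))
      rcases Nat.eq_zero_or_pos (dd % d0) with h0 | hpos
      · exact Nat.dvd_of_mod_eq_zero h0
      · exact absurd ⟨hpos, hr⟩ (Nat.find_min hEx (Nat.mod_lt _ hd0pos))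
    have hd0L : d0 ∣ L := dvd_of_period L hL1 (periodN_L θ Φ x hp hΦ hvan N)
    have hd0d : d0 ∣ d := dvd_of_period d hdpos hPd
    obtain ⟨e', he', heq⟩ := (Nat.dvd_prime_pow hp).mp hd0L
    have hper0 : agree N (Φ^[p ^ e'] x) x := by
      have h1 := hd0per 0
      rw [Nat.zero_add, heq] at h1
      simpa using h1
    have hle2 : eN p Φ x N ≤ e' := eN_min θ Φ x hp hΦ hvan hper0
    have hLled0 : L ≤ d0 := by
      rw [heq]
      exact Nat.pow_le_pow_right hp.pos hle2
    have : d0 ≤ d := Nat.le_of_dvd hdpos hd0d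
    omega

lemma uniq {N n n' : ℕ} (hn : n < p ^ eN p Φ x N) (hn' : n' < p ^ eN p Φ x N)
    (hagree : agree N (Φ^[n] x) (Φ^[n'] x)) : n = n' := by
  rcases le_total n n' with h | h
  · exact uniq_le θ Φ x hp hΦ hvan hn' h hagree
  · exact (uniq_le θ Φ x hp hΦ hvan hn h (agree_symm hagree)).symm

-- idxA lemmas
lemma idxA_lt (N : ℕ) (y : ℤ → ZMod (p ^ m)) : idxA p Φ x N y < p ^ eN p Φ x N :=
  Nat.mod_lt _ (Nat.pow_pos hp.pos)

lemma idxA_spec {N : ℕ} {y : ℤ → ZMod (p ^ m)} (hy : ∃ n, agree N y (Φ^[n] x)) :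
    agree N y (Φ^[idxA p Φ x N y] x) := by
  obtain ⟨n, hn⟩ := hy
  have hy' : ∃ n, agree N (extendV x N (projN N y)) (Φ^[n] x) :=
    ⟨n, agree_trans (agree_extend x N y) hn⟩
  unfold idxA idxV
  rw [dif_pos hy']
  have hspec := Nat.find_spec hy'
  exact agree_trans (agree_symm (agree_extend x N y))
    (agree_trans hspec (mod_reduce θ Φ x hp hΦ hvan N _))

lemma idxA_uniq {N n : ℕ} {y : ℤ → ZMod (p ^ m)} (hn : n < p ^ eN p Φ x N)
    (h : agree N y (Φ^[n] x)) : idxA p Φ x N y = n :=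
  uniq θ Φ x hp hΦ hvan (idxA_lt θ Φ x hp hΦ hvan N y) hn
    (agree_trans (agree_symm (idxA_spec θ Φ x hp hΦ hvan ⟨n, h⟩)) h)

lemma idxA_compat {M N : ℕ} (hMN : M ≤ N) {y : ℤ → ZMod (p ^ m)}
    (hy : ∃ n, agree N y (Φ^[n] x)) :
    idxA p Φ x M y = idxA p Φ x N y % p ^ eN p Φ x M := by
  obtain ⟨n, hn⟩ := hy
  apply idxA_uniq θ Φ x hp hΦ hvan (Nat.mod_lt _ (Nat.pow_pos hp.pos))
  exact agree_trans (agree_mono hMN (idxA_spec θ Φ x hp hΦ hvan ⟨n, hn⟩))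
    (mod_reduce θ Φ x hp hΦ hvan M _)

-- ==== chunk B: topology and closure ====

lemma Phi_cont : Continuous Φ := by
  have hrw : Φ = fun y => fun i => y i + θ fun j : Fin r => y (i + 1 + (j : ℕ)) := by
    funext y i; exact hΦ y i
  rw [hrw]
  refine continuous_pi fun i => (continuous_apply i).add ?_
  exact continuous_of_discreteTopology.comp (continuous_pi fun j => continuous_apply _)

lemma tail_closure {y : ℤ → ZMod (p ^ m)} (hy : y ∈ closure (fwdOrbit Φ x)) : tailEq x y := by
  intro i hi
  have hclosed : IsClosed {z : ℤ → ZMod (p ^ m) | z i = x i} :=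
    isClosed_eq (continuous_apply i) continuous_const
  have hsub : fwdOrbit Φ x ⊆ {z : ℤ → ZMod (p ^ m) | z i = x i} := by
    rintro _ ⟨n, rfl⟩
    exact tail_orbit θ Φ x hΦ hvan n i hi
  exact closure_minimal hsub hclosed hy

lemma maps_closure :
    Set.MapsTo Φ (closure (fwdOrbit Φ x)) (closure (fwdOrbit Φ x)) := by
  apply Set.MapsTo.closure _ (Phi_cont θ Φ x hp hΦ hvan)
  rintro _ ⟨n, rfl⟩
  exact ⟨n + 1, by simp [Function.iterate_succ_apply']⟩

omit hp hvan in
lemma mem_agree_of_closure {y : ℤ → ZMod (p ^ m)} (hy : y ∈ closure (fwdOrbit Φ x)) (N : ℕ) :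
    ∃ n, agree N y (Φ^[n] x) := by
  have hcont : Continuous (projN (Q := p ^ m) N) := continuous_pi fun j => continuous_apply _
  have hopen : IsOpen ((projN (Q := p ^ m) N) ⁻¹' {projN N y}) :=
    (isOpen_discrete _).preimage hcont
  obtain ⟨z, hzU, n, rfl⟩ := mem_closure_iff.mp hy _ hopen rfl
  refine ⟨n, fun j hj => ?_⟩
  have := congrFun hzU ⟨j, hj⟩
  simpa [projN] using this.symm

omit hp in
lemma mem_closure_of {y : ℤ → ZMod (p ^ m)} (hty : tailEq x y)
    (hag : ∀ N, ∃ n, agree N y (Φ^[n] x)) : y ∈ closure (fwdOrbit Φ x) := by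
  choose g hg using hag
  have htend : Filter.Tendsto (fun N => Φ^[g N] x) Filter.atTop (nhds y) := by
    rw [tendsto_pi_nhds]
    intro i
    refine Filter.Tendsto.congr' ?_ (tendsto_const_nhds (x := y i))
    rcases le_or_gt 1 i with hi | hi
    · exact Filter.Eventually.of_forall fun N =>
        ((tail_orbit θ Φ x hΦ hvan (g N) i hi).trans (hty i hi).symm).symm
    · rw [Filter.eventuallyEq_iff_exists_mem]
      refine ⟨Set.Ici ((-i).toNat + 1), Filter.mem_atTop _, fun N hN => ?_⟩
      have hji : -(((-i).toNat : ℕ) : ℤ) = i := by omega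
      have := hg N ((-i).toNat) (by simpa using hN)
      rw [hji] at this
      exact this
  exact mem_closure_of_tendsto htend (Filter.Eventually.of_forall fun N => ⟨g N, rfl⟩)

lemma e_unbounded (hinf : (fwdOrbit Φ x).Infinite) (k : ℕ) : ∃ N, k < eN p Φ x N := by
  by_contra hcon
  push_neg at hcon
  have hfix : Φ^[p ^ k] x = x := by
    funext i
    rcases le_or_gt 1 i with hi | hi
    · exact tail_orbit θ Φ x hΦ hvan _ i hi
    · have hji : -((((-i).toNat : ℕ)) : ℤ) = i := by omega
      set j := (-i).toNat with hjdef
      have hN := hcon (j + 1)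
      have hpow : p ^ (k - eN p Φ x (j+1)) * p ^ eN p Φ x (j+1) = p ^ k := by
        rw [← pow_add]; congr 1; omega
      have h2 := periodN_mul Φ x (periodN_L θ Φ x hp hΦ hvan (j+1))
        (p ^ (k - eN p Φ x (j+1))) 0
      rw [Nat.zero_add, hpow] at h2
      have h3 := h2 j (by omega)
      rw [hji] at h3
      simpa using h3
  have hmul : ∀ t, Φ^[p ^ k * t] x = x := by
    intro t
    induction t with
    | zero => simp
    | succ t ih =>
      rw [show p ^ k * (t + 1) = p ^ k * t + p ^ k by ring,
        Function.iterate_add_apply, hfix, ih]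
  have hper : ∀ n : ℕ, Φ^[n] x = Φ^[n % p ^ k] x := by
    intro n
    conv_lhs => rw [show n = n % p ^ k + p ^ k * (n / p ^ k) from (Nat.mod_add_div n _).symm]
    rw [Function.iterate_add_apply, hmul]
  exact hinf (Set.Finite.subset (Set.Finite.image (fun n : ℕ => Φ^[n] x) (Set.finite_lt_nat _))
    (by rintro _ ⟨n, rfl⟩
        exact ⟨n % p ^ k, Nat.mod_lt _ (Nat.pow_pos hp.pos), (hper n).symm⟩))

lemma nuN_spec (hinf : (fwdOrbit Φ x).Infinite) (k : ℕ) :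
    k < eN p Φ x (nuN p Φ x k) := by
  unfold nuN
  rw [dif_pos (e_unbounded θ Φ x hp hΦ hvan hinf k)]
  exact Nat.find_spec (e_unbounded θ Φ x hp hΦ hvan hinf k)

lemma nuN_mono (hinf : (fwdOrbit Φ x).Infinite) {j k : ℕ} (h : j ≤ k) :
    nuN p Φ x j ≤ nuN p Φ x k := by
  have hs := nuN_spec θ Φ x hp hΦ hvan hinf k
  unfold nuN at hs ⊢
  rw [dif_pos (e_unbounded θ Φ x hp hΦ hvan hinf k)] at hs ⊢
  rw [dif_pos (e_unbounded θ Φ x hp hΦ hvan hinf j)]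
  exact Nat.find_min' _ (by omega)

-- ==== chunk C: the conjugacy ====

lemma idxA_step {N : ℕ} {y : ℤ → ZMod (p ^ m)} (hty : tailEq x y)
    (hy : ∃ n, agree N y (Φ^[n] x)) :
    idxA p Φ x N (Φ y) = (idxA p Φ x N y + 1) % p ^ eN p Φ x N := by
  apply idxA_uniq θ Φ x hp hΦ hvan (Nat.mod_lt _ (Nat.pow_pos hp.pos))
  have h1 : agree N (Φ y) (Φ (Φ^[idxA p Φ x N y] x)) :=
    agree_step θ Φ x hΦ hvan hty (tail_orbit θ Φ x hΦ hvan _)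
      (idxA_spec θ Φ x hp hΦ hvan hy)
  rw [← Function.iterate_succ_apply' Φ (idxA p Φ x N y) x] at h1
  exact agree_trans h1 (mod_reduce θ Φ x hp hΦ hvan N _)

lemma psiG (hinf : (fwdOrbit Φ x).Infinite) {y : ℤ → ZMod (p ^ m)}
    (hy : y ∈ closure (fwdOrbit Φ x)) {N k : ℕ} (hk : k < eN p Φ x N) :
    psiFun p Φ x y k = ((idxA p Φ x N y / p ^ k : ℕ) : ZMod p) := by
  set M := max N (nuN p Φ x k) with hM
  have hnu := nuN_spec θ Φ x hp hΦ hvan hinf k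
  have hmem := mem_agree_of_closure θ Φ x hΦ hy M
  have h1 : idxA p Φ x N y = idxA p Φ x M y % p ^ eN p Φ x N :=
    idxA_compat θ Φ x hp hΦ hvan (le_max_left _ _) hmem
  have h2 : idxA p Φ x (nuN p Φ x k) y = idxA p Φ x M y % p ^ eN p Φ x (nuN p Φ x k) :=
    idxA_compat θ Φ x hp hΦ hvan (le_max_right _ _) hmem
  show ((idxA p Φ x (nuN p Φ x k) y / p ^ k : ℕ) : ZMod p) = _
  rw [h1, h2, digL2z _ hnu, digL2z _ hk]

lemma conj_step (hinf : (fwdOrbit Φ x).Infinite) {y : ℤ → ZMod (p ^ m)}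
    (hy : y ∈ closure (fwdOrbit Φ x)) :
    psiFun p Φ x (Φ y) = odometer (fun _ => p) (psiFun p Φ x y) := by
  funext k
  have hnu := nuN_spec θ Φ x hp hΦ hvan hinf k
  have hstep := idxA_step θ Φ x hp hΦ hvan (tail_closure θ Φ x hp hΦ hvan hy)
    (mem_agree_of_closure θ Φ x hΦ hy (nuN p Φ x k))
  have hL : psiFun p Φ x (Φ y) k
      = Dig p (idxA p Φ x (nuN p Φ x k) y + 1) k := by
    show ((idxA p Φ x (nuN p Φ x k) (Φ y) / p ^ k : ℕ) : ZMod p) = _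
    rw [hstep, digL2z _ hnu]
    rfl
  have hR : odometer (fun _ => p) (psiFun p Φ x y) k
      = Dig p (idxA p Φ x (nuN p Φ x k) y + 1) k := by
    have hcongr : ∀ j ≤ k, psiFun p Φ x y j = Dig p (idxA p Φ x (nuN p Φ x k) y) j := by
      intro j hj
      exact psiG θ Φ x hp hΦ hvan hinf hy (by omega)
    rw [odometer_congr hcongr, odometer_dig hp.two_le]
  rw [hL, hR]

-- nVal facts
lemma nVal_lt (N : ℕ) (z : ℕ → ZMod p) : nVal p Φ x N z < p ^ eN p Φ x N := by
  haveI : NeZero p := ⟨hp.pos.ne'⟩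
  exact sum_digits_lt hp.two_le (fun k => (z k).val) (fun k => ZMod.val_lt _) _

lemma nVal_split {M N : ℕ} (hMN : M ≤ N) (z : ℕ → ZMod p) :
    ∃ T, nVal p Φ x N z = nVal p Φ x M z + T * p ^ eN p Φ x M := by
  have he := eN_mono θ Φ x hp hΦ hvan hMN
  refine ⟨∑ i ∈ Finset.range (eN p Φ x N - eN p Φ x M), (z (eN p Φ x M + i)).val * p ^ i, ?_⟩
  unfold nVal
  rw [Nat.add_comm (∑ k ∈ Finset.range (eN p Φ x M), (z k).val * p ^ k) _] at *
  rw [sum_split_pow he (fun k => (z k).val)]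
  ring

lemma psiInv_agree (N : ℕ) (z : ℕ → ZMod p) :
    agree N (psiInv p Φ x z) (Φ^[nVal p Φ x N z] x) := by
  intro j hj
  have h1 : (1 - -(j : ℤ)).toNat = j + 1 := by omega
  show Φ^[nVal p Φ x (1 - -(j:ℤ)).toNat z] x (-(j:ℤ)) = _
  rw [h1]
  obtain ⟨T, hT⟩ := nVal_split θ Φ x hp hΦ hvan (show j + 1 ≤ N by omega) z
  have h2 := periodN_mul Φ x (periodN_L θ Φ x hp hΦ hvan (j+1)) T (nVal p Φ x (j+1) z)
  have h3 := h2 j (by omega)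
  rw [show nVal p Φ x (j+1) z + T * p ^ eN p Φ x (j+1) = nVal p Φ x N z from hT.symm] at h3
  exact h3.symm

lemma psiInv_tail (z : ℕ → ZMod p) : tailEq x (psiInv p Φ x z) := fun i hi =>
  tail_orbit θ Φ x hΦ hvan (nVal p Φ x (1 - i).toNat z) i hi

lemma psiInv_mem (z : ℕ → ZMod p) : psiInv p Φ x z ∈ closure (fwdOrbit Φ x) :=
  mem_closure_of θ Φ x hΦ hvan (psiInv_tail θ Φ x hp hΦ hvan z)
    (fun N => ⟨nVal p Φ x N z, psiInv_agree θ Φ x hp hΦ hvan N z⟩)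

lemma idxA_psiInv (N : ℕ) (z : ℕ → ZMod p) :
    idxA p Φ x N (psiInv p Φ x z) = nVal p Φ x N z :=
  idxA_uniq θ Φ x hp hΦ hvan (nVal_lt θ Φ x hp hΦ hvan N z)
    (psiInv_agree θ Φ x hp hΦ hvan N z)

lemma psi_right_inv (hinf : (fwdOrbit Φ x).Infinite) (z : ℕ → ZMod p) :
    psiFun p Φ x (psiInv p Φ x z) = z := by
  haveI : NeZero p := ⟨hp.pos.ne'⟩
  funext k
  have hnu := nuN_spec θ Φ x hp hΦ hvan hinf k
  show ((idxA p Φ x (nuN p Φ x k) (psiInv p Φ x z) / p ^ k : ℕ) : ZMod p) = z k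
  rw [idxA_psiInv θ Φ x hp hΦ hvan]
  have hextract := sum_digits_extract hp.two_le (fun j => (z j).val)
    (fun j => ZMod.val_lt _) hnu
  calc ((nVal p Φ x (nuN p Φ x k) z / p ^ k : ℕ) : ZMod p)
      = (((nVal p Φ x (nuN p Φ x k) z / p ^ k) % p : ℕ) : ZMod p) := (ZMod.natCast_mod _ p).symm
    _ = (((z k).val : ℕ) : ZMod p) := by rw [show nVal p Φ x (nuN p Φ x k) z / p ^ k % p = (z k).val from hextract]
    _ = z k := ZMod.natCast_rightInverse (z k)

lemma nVal_psiFun (hinf : (fwdOrbit Φ x).Infinite) {y : ℤ → ZMod (p ^ m)}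
    (hy : y ∈ closure (fwdOrbit Φ x)) (N : ℕ) :
    nVal p Φ x N (psiFun p Φ x y) = idxA p Φ x N y := by
  haveI : NeZero p := ⟨hp.pos.ne'⟩
  unfold nVal
  have hdig : ∀ k ∈ Finset.range (eN p Φ x N),
      (psiFun p Φ x y k).val * p ^ k = (idxA p Φ x N y / p ^ k % p) * p ^ k := by
    intro k hk
    rw [psiG θ Φ x hp hΦ hvan hinf hy (Finset.mem_range.mp hk), ZMod.val_natCast]
  rw [Finset.sum_congr rfl hdig,
    sum_digits_recompose hp.two_le (idxA_lt θ Φ x hp hΦ hvan N y)]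

lemma psi_left_inv (hinf : (fwdOrbit Φ x).Infinite) {y : ℤ → ZMod (p ^ m)}
    (hy : y ∈ closure (fwdOrbit Φ x)) :
    psiInv p Φ x (psiFun p Φ x y) = y := by
  funext i
  rcases le_or_gt 1 i with hi | hi
  · exact (tail_orbit θ Φ x hΦ hvan _ i hi).trans (tail_closure θ Φ x hp hΦ hvan hy i hi).symm
  · have h1 : (1 - i).toNat = (-i).toNat + 1 := by omega
    have hji : -((((-i).toNat : ℕ)) : ℤ) = i := by omega
    show Φ^[nVal p Φ x (1 - i).toNat (psiFun p Φ x y)] x i = y i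
    rw [h1, nVal_psiFun θ Φ x hp hΦ hvan hinf hy]
    have h2 := idxA_spec θ Φ x hp hΦ hvan
      (mem_agree_of_closure θ Φ x hΦ hy ((-i).toNat + 1)) ((-i).toNat) (by omega)
    rw [hji] at h2
    exact h2.symm

lemma psiFun_cont : Continuous fun y : closure (fwdOrbit Φ x) => psiFun p Φ x ↑y := by
  refine continuous_pi fun k => ?_
  have hfact : (fun y : closure (fwdOrbit Φ x) => psiFun p Φ x ↑y k)
      = (fun v : Fin (nuN p Φ x k) → ZMod (p ^ m) =>
          ((idxV p Φ x (nuN p Φ x k) v / p ^ k : ℕ) : ZMod p))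
        ∘ (fun y : closure (fwdOrbit Φ x) => projN (nuN p Φ x k) (↑y)) := rfl
  rw [hfact]
  exact continuous_of_discreteTopology.comp
    (continuous_pi fun j => (continuous_apply _).comp continuous_subtype_val)

lemma psiInv_cont : Continuous fun z : ℕ → ZMod p => psiInv p Φ x z := by
  refine continuous_pi fun i => ?_
  have hfact : (fun z : ℕ → ZMod p => psiInv p Φ x z i)
      = (fun v : Fin (eN p Φ x (1 - i).toNat) → ZMod p =>
          Φ^[∑ k : Fin (eN p Φ x (1 - i).toNat), (v k).val * p ^ (k : ℕ)] x i)
        ∘ (fun z (k : Fin (eN p Φ x (1 - i).toNat)) => z (k : ℕ)) := by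
    funext z
    show Φ^[nVal p Φ x (1 - i).toNat z] x i = _
    simp only [Function.comp]
    rw [Fin.sum_univ_eq_sum_range (fun k => (z k).val * p ^ k)]
    rfl
  rw [hfact]
  exact continuous_of_discreteTopology.comp (continuous_pi fun k => continuous_apply _)

end OdoMain

/-- Theorem 5: for the left permutive cellular automaton on `(ℤ/p^mℤ)^ℤ`, `p` prime,
`m ≥ 1`, with local rule `t_0 + θ(t_1,...,t_r)`, `r > 0`: if the forward orbit of `x` is
infinite and `(x_1,x_2,...)` is `Φ_R`-fixed, then `Φ` on the orbit closure of `x` is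
topologically conjugate to the `p`-adic odometer. -/
theorem conj_to_p_adic_odometer_prime_power {p m r : ℕ} (hp : p.Prime) (hm : 1 ≤ m)
    (hr : 0 < r)
    (θ : (Fin r → ZMod (p ^ m)) → ZMod (p ^ m))
    (Φ : (ℤ → ZMod (p ^ m)) → ℤ → ZMod (p ^ m))
    (ΦR : (ℕ → ZMod (p ^ m)) → ℕ → ZMod (p ^ m))
    (hΦ : ∀ x i, Φ x i = x i + θ fun j : Fin r => x (i + 1 + (j : ℕ)))
    (hΦR : ∀ x n, ΦR x n = x n + θ fun j : Fin r => x (n + 1 + (j : ℕ)))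
    (x : ℤ → ZMod (p ^ m))
    (hinf : (fwdOrbit Φ x).Infinite)
    (hfix : ΦR (fun n : ℕ => x ((n : ℤ) + 1)) = fun n : ℕ => x ((n : ℤ) + 1)) :
    ConjToOdometer Φ x fun _ => p := by
  classical
  have hvan : ∀ i : ℤ, 2 ≤ i → θ (fun j : Fin r => x (i + (j : ℕ))) = 0 := by
    intro i hi
    have h1 := congrFun hfix (i - 2).toNat
    rw [hΦR] at h1
    have h2 := add_eq_left.mp h1
    have h3 : (fun j : Fin r => x (i + (j : ℕ)))
        = fun j : Fin r => x (((((i - 2).toNat + 1 + (j : ℕ) : ℕ)) : ℤ) + 1) := by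
      funext j
      congr 1
      push_cast
      omega
    rw [h3]
    exact h2
  haveI : NeZero p := ⟨hp.pos.ne'⟩
  refine ⟨maps_closure θ Φ x hp hΦ hvan, ?_⟩
  refine ⟨{
    toEquiv := ⟨fun y => psiFun p Φ x ↑y,
      fun z => ⟨psiInv p Φ x z, psiInv_mem θ Φ x hp hΦ hvan z⟩,
      fun y => Subtype.ext (psi_left_inv θ Φ x hp hΦ hvan hinf y.2),
      fun z => psi_right_inv θ Φ x hp hΦ hvan hinf z⟩
    continuous_toFun := psiFun_cont θ Φ x hp hΦ hvan
    continuous_invFun := (psiInv_cont θ Φ x hp hΦ hvan).subtype_mk _ }, ?_⟩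
  intro y
  exact conj_step θ Φ x hp hΦ hvan hinf y.2
end

section
/- Let p be prime and Φ the cellular automaton on (ℤ/pℤ)^ℤ with local rule φ(t_0,...,t_r) = a·t_0 + θ(t_1,...,t_r), where a ∈ ℤ/pℤ with a ≠ 0, 1, and r > 0. Let q be the multiplicative order of a (least q ≥ 1 with a^q = 1). If {Φ^n(x) : n ≥ 0} is infinite and (x_1, x_2, ...) is Φ_R-fixed, then Φ restricted to cl{Φ^n(x) : n ≥ 0} is topologically conjugate to the (q, p, p, p, ...)-adic odometer. -/
namespace CA6

lemma mod_decomp (t A S : ℕ) : t % (A * S) = A * (t / A % S) + t % A := by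
  conv_lhs => rw [← Nat.div_add_mod (t % (A * S)) A]
  rw [Nat.mod_mul_right_div_self, Nat.mod_mul_right_mod]

lemma mod_mul_congr {k k' A S : ℕ} (h1 : k % A = k' % A) (h2 : k / A % S = k' / A % S) :
    k % (A * S) = k' % (A * S) := by
  rw [mod_decomp, mod_decomp, h1, h2]

/-- products of the first `n` entries of `s`. -/
def bb (s : ℕ → ℕ) : ℕ → ℕ
  | 0 => 1
  | n + 1 => bb s n * s n

/-- value of the first `m` digits. -/
def vv (s : ℕ → ℕ) (z : ∀ n, ZMod (s n)) : ℕ → ℕ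
  | 0 => 0
  | m + 1 => vv s z m + (z m).val * bb s m

section vvlem
variable {s : ℕ → ℕ}

lemma bb_pos (hs : ∀ n, 0 < s n) : ∀ m, 0 < bb s m
  | 0 => Nat.one_pos
  | m + 1 => Nat.mul_pos (bb_pos hs m) (hs m)

lemma bb_dvd : ∀ {m m'}, m ≤ m' → bb s m ∣ bb s m' := by
  intro m m' h
  induction m' with
  | zero => simpa [Nat.le_zero.mp h] using dvd_refl _
  | succ n ih =>
    rcases Nat.eq_or_lt_of_le h with rfl | h'
    · exact dvd_refl _
    · exact dvd_trans (ih (Nat.lt_succ_iff.mp h')) ⟨s n, rfl⟩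

lemma vv_lt (hs : ∀ n, 0 < s n) (z : ∀ n, ZMod (s n)) : ∀ m, vv s z m < bb s m := by
  intro m
  induction m with
  | zero => simp [vv, bb]
  | succ m ih =>
    haveI : NeZero (s m) := ⟨(hs m).ne'⟩
    have hv : (z m).val < s m := ZMod.val_lt (z m)
    have h1 : (z m).val * bb s m ≤ (s m - 1) * bb s m :=
      Nat.mul_le_mul_right _ (by omega)
    have h2 : (s m - 1) * bb s m + bb s m = s m * bb s m := by
      have : (s m - 1) + 1 = s m := by have := hs m; omega
      calc (s m - 1) * bb s m + bb s m = ((s m - 1) + 1) * bb s m := by ring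
        _ = s m * bb s m := by rw [this]
    have h3 : vv s z m < bb s m := ih
    show vv s z m + (z m).val * bb s m < bb s m * s m
    have : bb s m * s m = s m * bb s m := Nat.mul_comm _ _
    omega

lemma vv_compat (hs : ∀ n, 0 < s n) (z : ∀ n, ZMod (s n)) {m' m : ℕ} (h : m' ≤ m) :
    vv s z m % bb s m' = vv s z m' := by
  induction m with
  | zero =>
    have : m' = 0 := Nat.le_zero.mp h
    subst this
    simp [vv]
  | succ m ih =>
    rcases Nat.eq_or_lt_of_le h with rfl | h'
    · exact Nat.mod_eq_of_lt (vv_lt hs z _)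
    · have hm : m' ≤ m := Nat.lt_succ_iff.mp h'
      obtain ⟨d, hd⟩ := bb_dvd (s := s) hm
      show (vv s z m + (z m).val * bb s m) % bb s m' = _
      rw [hd, ← Nat.mul_assoc, Nat.mul_comm ((z m).val) (bb s m'), Nat.mul_assoc,
        Nat.add_mul_mod_self_left]
      exact ih hm

lemma vv_digit (hs : ∀ n, 0 < s n) (z : ∀ n, ZMod (s n)) (j : ℕ) :
    vv s z (j + 1) / bb s j = (z j).val := by
  show (vv s z j + (z j).val * bb s j) / bb s j = (z j).val
  rw [Nat.add_mul_div_right _ _ (bb_pos hs j), Nat.div_eq_of_lt (vv_lt hs z j)]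
  omega

lemma vv_inj (hs : ∀ n, 0 < s n) (z z' : ∀ n, ZMod (s n)) {m : ℕ} (h : vv s z m = vv s z' m) :
    ∀ n, n < m → z n = z' n := by
  induction m with
  | zero => omega
  | succ m ih =>
    have h0 : vv s z (m+1) % bb s m = vv s z' (m+1) % bb s m := by rw [h]
    rw [vv_compat hs z (Nat.le_succ m), vv_compat hs z' (Nat.le_succ m)] at h0
    intro n hn
    rcases Nat.lt_succ_iff_lt_or_eq.mp hn with h' | rfl
    · exact ih h0 n h'
    · haveI : NeZero (s n) := ⟨(hs n).ne'⟩
      have h1 : vv s z n + (z n).val * bb s n = vv s z' n + (z' n).val * bb s n := h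
      have h2 : (z n).val * bb s n = (z' n).val * bb s n := by omega
      have h3 : (z n).val = (z' n).val :=
        Nat.eq_of_mul_eq_mul_right (bb_pos hs n) h2
      have := ZMod.val_injective (s n) (by exact h3)
      exact this

lemma carry_iff (hs : ∀ n, 0 < s n) (z : ∀ n, ZMod (s n)) : ∀ m, odoCarry z m = true ↔ vv s z m + 1 = bb s m := by
  intro m
  induction m with
  | zero => simp [odoCarry, vv, bb]
  | succ m ih =>
    haveI : NeZero (s m) := ⟨(hs m).ne'⟩
    have hv : (z m).val < s m := ZMod.val_lt (z m)
    have hb := bb_pos hs m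
    have hlt := vv_lt hs z m
    show (odoCarry z m && decide (z m + 1 = 0)) = true ↔
      vv s z m + (z m).val * bb s m + 1 = bb s m * s m
    rcases h : odoCarry z m with _ | _
    · simp only [Bool.false_and, Bool.false_eq_true, false_iff]
      have : vv s z m + 1 ≠ bb s m := fun hh => by simp [ih.mpr hh] at h
      have h1 : (z m).val * bb s m ≤ (s m - 1) * bb s m :=
        Nat.mul_le_mul_right _ (by omega)
      have h2 : ((s m - 1) + 1) * bb s m = s m * bb s m := by
        congr 1; omega
      have h2' : (s m - 1) * bb s m + bb s m = s m * bb s m := by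
        rw [← h2]; ring
      have h3 : bb s m * s m = s m * bb s m := Nat.mul_comm _ _
      omega
    · simp only [Bool.true_and, decide_eq_true_eq]
      have hvv : vv s z m + 1 = bb s m := ih.mp h
      have key : (z m + 1 = 0) ↔ (z m).val + 1 = s m := by
        constructor
        · intro h1
          have : ((((z m).val + 1 : ℕ)) : ZMod (s m)) = 0 := by
            push_cast
            rw [ZMod.natCast_val, ZMod.cast_id]
            exact h1
          have := (ZMod.natCast_eq_zero_iff _ _).mp this
          have : s m ≤ (z m).val + 1 := Nat.le_of_dvd (by omega) this
          omega
        · intro h1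
          have : z m + 1 = ((((z m).val + 1 : ℕ)) : ZMod (s m)) := by
            push_cast
            rw [ZMod.natCast_val, ZMod.cast_id]
          rw [this, h1, ZMod.natCast_self]
      rw [key]
      have e1 : ((z m).val + 1) * bb s m = (z m).val * bb s m + bb s m := by ring
      have e2 : s m * bb s m = bb s m * s m := Nat.mul_comm _ _
      constructor
      · intro h1
        have h2 : ((z m).val + 1) * bb s m = s m * bb s m := by rw [h1]
        omega
      · intro h1
        have h2 : ((z m).val + 1) * bb s m = s m * bb s m := by omega
        exact Nat.eq_of_mul_eq_mul_right hb h2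

lemma vv_odometer (hs : ∀ n, 0 < s n) (z : ∀ n, ZMod (s n)) : ∀ m, vv s (odometer s z) m = (vv s z m + 1) % bb s m := by
  intro m
  induction m with
  | zero => simp [vv, bb]
  | succ m ih =>
    haveI : NeZero (s m) := ⟨(hs m).ne'⟩
    have hv : (z m).val < s m := ZMod.val_lt (z m)
    have hb := bb_pos hs m
    have hlt := vv_lt hs z m
    have hlt' := vv_lt hs z (m+1)
    show vv s (odometer s z) m + ((odometer s z) m).val * bb s m
      = (vv s z (m+1) + 1) % (bb s m * s m)
    rcases hc : odoCarry z m with _ | _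
    · -- no carry at m: odometer z m = z m, and vv m (Oz) = vv m z + 1 (no wrap)
      have h1 : odometer s z m = z m := by simp [odometer, hc]
      have h2 : vv s z m + 1 ≠ bb s m := by
        intro h; exact absurd ((carry_iff hs z m).mpr h) (by simp [hc])
      have h3 : vv s (odometer s z) m = vv s z m + 1 := by
        rw [ih, Nat.mod_eq_of_lt (by omega)]
      rw [h3, h1]
      have h4 : vv s z (m+1) + 1 < bb s m * s m := by
        have : vv s z (m+1) = vv s z m + (z m).val * bb s m := rfl
        have hub : (z m).val * bb s m ≤ (s m - 1) * bb s m :=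
          Nat.mul_le_mul_right _ (by omega)
        have h2' : (s m - 1) * bb s m + bb s m = s m * bb s m := by
          have h5 : ((s m - 1) + 1) * bb s m = s m * bb s m := by congr 1; omega
          rw [← h5]; ring
        have h6 : bb s m * s m = s m * bb s m := Nat.mul_comm _ _
        omega
      rw [Nat.mod_eq_of_lt h4]
      show vv s z m + 1 + (z m).val * bb s m = vv s z m + (z m).val * bb s m + 1
      ring
    · -- carry at m
      have hvv : vv s z m + 1 = bb s m := (carry_iff hs z m).mp hc
      have h1 : odometer s z m = z m + 1 := by simp [odometer, hc]
      have h3 : vv s (odometer s z) m = 0 := by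
        rw [ih, hvv, Nat.mod_self]
      rw [h3, h1, Nat.zero_add]
      have hval : (z m + 1).val = ((z m).val + 1) % s m := by
        rw [show z m + 1 = ((((z m).val + 1 : ℕ)) : ZMod (s m)) from by
          push_cast; rw [ZMod.natCast_val, ZMod.cast_id]]
        exact ZMod.val_natCast _ _
      rw [hval]
      have hsplit : vv s z (m+1) + 1 = ((z m).val + 1) * bb s m := by
        show vv s z m + (z m).val * bb s m + 1 = _
        have : ((z m).val + 1) * bb s m = (z m).val * bb s m + bb s m := by ring
        omega
      rw [hsplit]
      rcases Nat.lt_or_ge ((z m).val + 1) (s m) with hcase | hcase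
      · rw [Nat.mod_eq_of_lt hcase, Nat.mod_eq_of_lt]
        exact Nat.mul_lt_mul_of_lt_of_le hcase (le_refl _) (by omega) |>.trans_eq (Nat.mul_comm _ _)
      · have : (z m).val + 1 = s m := by omega
        rw [this, Nat.mod_self, Nat.zero_mul, Nat.mul_comm, Nat.mod_self]

end vvlem


variable {p : ℕ}

lemma ord_dvd (a : ZMod p) (q : ℕ) (hq : 0 < q) (haq : a ^ q = 1)
    (hleast : ∀ t, 0 < t → t < q → a ^ t ≠ 1) : ∀ t, a ^ t = 1 → q ∣ t := by
  intro t ht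
  have h1 : a ^ (t % q) = 1 := by
    conv at ht => rw [← Nat.div_add_mod t q]
    rw [pow_add, pow_mul, haq, one_pow, one_mul] at ht
    exact ht
  rcases Nat.eq_zero_or_pos (t % q) with h | h
  · exact Nat.dvd_of_mod_eq_zero h
  · exact absurd h1 (hleast _ h (Nat.mod_lt _ hq))

lemma seq_step_period (hp : p.Prime) (a : ZMod p) (u c : ℕ → ZMod p) (T : ℕ)
    (hu : ∀ k, u (k + 1) = a * u k + c k) (hc : ∀ k, c (k + T) = c k)
    (haT : a ^ T = 1) : ∀ k, u (k + T * p) = u k := by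
  haveI : Fact p.Prime := ⟨hp⟩
  set d : ℕ → ZMod p := fun k => u (k + T) - u k with hd
  have hstep : ∀ k, d (k + 1) = a * d k := by
    intro k
    have e1 : u (k + 1 + T) = a * u (k + T) + c (k + T) := by
      have : k + 1 + T = (k + T) + 1 := by ring
      rw [this, hu]
    simp only [hd]
    rw [e1, hu k, hc]
    ring
  have hiter : ∀ j k, d (k + j) = a ^ j * d k := by
    intro j
    induction j with
    | zero => intro k; simp
    | succ j ih =>
      intro k
      have : k + (j + 1) = (k + j) + 1 := by ring
      rw [this, hstep, ih, pow_succ]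
      ring
  have key : ∀ t k, u (k + T * t) = u k + (t : ZMod p) * d k := by
    intro t
    induction t with
    | zero => intro k; simp
    | succ t ih =>
      intro k
      have e : k + T * (t + 1) = (k + T * t) + T := by ring
      have e2 : u ((k + T * t) + T) = u (k + T * t) + d (k + T * t) := by
        simp [hd]
      rw [e, e2, ih, hiter, pow_mul, haT, one_pow]
      push_cast
      ring
  intro k
  rw [key p k, CharP.cast_eq_zero (ZMod p) p]
  ring

lemma seq_affine (hp : p.Prime) (a : ZMod p) (ha1 : a ≠ 1) (q : ℕ) (hq : 0 < q)
    (haq : a ^ q = 1) (hleast : ∀ t, 0 < t → t < q → a ^ t ≠ 1)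
    (u : ℕ → ZMod p) (c : ZMod p) (hu : ∀ k, u (k + 1) = a * u k + c) :
    (∀ k, u (k + q) = u k) ∧
      (∀ t, 0 < t → (∀ k, u (k + t) = u k) → (∀ k, u k = u 0) ∨ q ∣ t) := by
  haveI : Fact p.Prime := ⟨hp⟩
  have hsub : a - 1 ≠ 0 := sub_ne_zero.mpr ha1
  set v : ZMod p := (a - 1)⁻¹ * c with hv
  have hcv : (a - 1) * v = c := by
    rw [hv, ← mul_assoc, mul_inv_cancel₀ hsub, one_mul]
  have closed : ∀ k, u k = a ^ k * (u 0 + v) - v := by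
    intro k
    induction k with
    | zero => simp
    | succ k ih =>
      rw [hu, ih, pow_succ]
      have : a * (a ^ k * (u 0 + v) - v) + c = a ^ k * a * (u 0 + v) - a * v + c := by ring
      rw [this]
      have : a * v - v = c := by rw [← hcv]; ring
      have h2 : -(a * v) + c = -v := by
        rw [← this]; ring
      linear_combination h2
  constructor
  · intro k
    rw [closed (k + q), closed k, pow_add, haq, mul_one]
  · intro t ht hper
    have h1 : a ^ t * (u 0 + v) - v = u 0 + 0 := by
      have := hper 0
      rw [Nat.zero_add] at this
      rw [← closed t, this]
      ring
    have h2 : (a ^ t - 1) * (u 0 + v) = 0 := by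
      have h0 : u 0 = a ^ 0 * (u 0 + v) - v := closed 0
      simp only [pow_zero, one_mul] at h0
      rw [add_zero] at h1
      calc (a ^ t - 1) * (u 0 + v) = (a ^ t * (u 0 + v) - v) - (u 0 + v - v) := by ring
        _ = u 0 - u 0 := by rw [h1]; ring_nf
        _ = 0 := by ring
    rcases mul_eq_zero.mp h2 with h3 | h3
    · right
      have : a ^ t = 1 := by
        have := sub_eq_zero.mp h3
        exact this
      exact ord_dvd a q hq haq hleast t this
    · left
      intro k
      have e : u 0 + v = 0 := h3
      rw [closed k, closed 0]
      simp [e]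



variable {p r : ℕ}

/-- block of coordinates `0, -1, ..., -(m-1)` of `Φ^[k] x`. -/
def blk (Φ : (ℤ → ZMod p) → ℤ → ZMod p) (x : ℤ → ZMod p) (m k : ℕ) : Fin m → ZMod p :=
  fun j => Φ^[k] x (-(j : ℤ))

/-- the induced map on blocks. -/
def G (a : ZMod p) (θ : (Fin r → ZMod p) → ZMod p) (x : ℤ → ZMod p) (m : ℕ)
    (u : Fin m → ZMod p) : Fin m → ZMod p :=
  fun j => a * u j + θ (fun t => if h : (t : ℕ) < (j : ℕ) then
    u ⟨(j : ℕ) - 1 - (t : ℕ), by have := j.isLt; omega⟩ else x (-(j : ℤ) + 1 + (t : ℕ)))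

/-- minimal period of the `m`-block. -/
noncomputable def P (a : ZMod p) (θ : (Fin r → ZMod p) → ZMod p) (Φ : (ℤ → ZMod p) → ℤ → ZMod p)
    (x : ℤ → ZMod p) (m : ℕ) : ℕ :=
  Function.minimalPeriod (G a θ x m) (blk Φ x m 0)

section Dyn

variable (a : ZMod p) (θ : (Fin r → ZMod p) → ZMod p)
  (Φ : (ℤ → ZMod p) → ℤ → ZMod p) (x : ℤ → ZMod p)

lemma iter_pos (hΦ : ∀ y i, Φ y i = a * y i + θ fun j : Fin r => y (i + 1 + (j : ℕ))) (hfix' : ∀ i : ℤ, 1 ≤ i → a * x i + θ (fun j : Fin r => x (i + 1 + (j : ℕ))) = x i) : ∀ (k : ℕ) (i : ℤ), 1 ≤ i → Φ^[k] x i = x i := by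
  intro k
  induction k with
  | zero => intro i _; rfl
  | succ k ih =>
    intro i hi
    rw [Function.iterate_succ_apply', hΦ, ih i hi]
    have harg : (fun j : Fin r => Φ^[k] x (i + 1 + (j : ℕ)))
        = fun j : Fin r => x (i + 1 + (j : ℕ)) := by
      funext j
      exact ih _ (by omega)
    rw [harg, hfix' i hi]

lemma blk_succ (hΦ : ∀ y i, Φ y i = a * y i + θ fun j : Fin r => y (i + 1 + (j : ℕ))) (hfix' : ∀ i : ℤ, 1 ≤ i → a * x i + θ (fun j : Fin r => x (i + 1 + (j : ℕ))) = x i) : ∀ m k, blk Φ x m (k + 1) = G a θ x m (blk Φ x m k) := by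
  intro m k
  funext j
  have harg : (fun t : Fin r => Φ^[k] x (-(j : ℤ) + 1 + (t : ℕ)))
      = (fun t : Fin r => if h : (t : ℕ) < (j : ℕ) then
          blk Φ x m k ⟨(j : ℕ) - 1 - (t : ℕ), by have := j.isLt; omega⟩
        else x (-(j : ℤ) + 1 + (t : ℕ))) := by
    funext t
    by_cases h : (t : ℕ) < (j : ℕ)
    · rw [dif_pos h]
      have hcast : -(j : ℤ) + 1 + (t : ℕ) = -(((j : ℕ) - 1 - (t : ℕ) : ℕ) : ℤ) := by
        have := j.isLt; omega
      show Φ^[k] x (-(j : ℤ) + 1 + (t : ℕ)) = Φ^[k] x (-(((j : ℕ) - 1 - (t : ℕ) : ℕ) : ℤ))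
      rw [hcast]
    · rw [dif_neg h]
      exact iter_pos a θ Φ x hΦ hfix' k _ (by omega)
  calc blk Φ x m (k + 1) j
      = a * Φ^[k] x (-(j : ℤ)) + θ (fun t : Fin r => Φ^[k] x (-(j : ℤ) + 1 + (t : ℕ))) := by
        show Φ^[k + 1] x (-(j : ℤ)) = _
        rw [Function.iterate_succ_apply', hΦ]
    _ = G a θ x m (blk Φ x m k) j := by rw [harg]; rfl

lemma blk_iterate (hΦ : ∀ y i, Φ y i = a * y i + θ fun j : Fin r => y (i + 1 + (j : ℕ))) (hfix' : ∀ i : ℤ, 1 ≤ i → a * x i + θ (fun j : Fin r => x (i + 1 + (j : ℕ))) = x i) : ∀ m k, blk Φ x m k = (G a θ x m)^[k] (blk Φ x m 0) := by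
  intro m k
  induction k with
  | zero => rfl
  | succ k ih => rw [blk_succ a θ Φ x hΦ hfix', ih, Function.iterate_succ_apply']

lemma G_inj (ha0 : a ≠ 0) (hp : p.Prime) (m : ℕ) : Function.Injective (G a θ x m) := by
  haveI : Fact p.Prime := ⟨hp⟩
  intro u u' h
  have key : ∀ n (j : Fin m), (j : ℕ) = n → u j = u' j := by
    intro n
    induction n using Nat.strong_induction_on with
    | _ n ih =>
      intro j hj
      have hcomp := congrFun h j
      have hargs : (fun t : Fin r => if h : (t : ℕ) < (j : ℕ) then
            u ⟨(j : ℕ) - 1 - (t : ℕ), by have := j.isLt; omega⟩ else x (-(j : ℤ) + 1 + (t : ℕ)))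
          = (fun t : Fin r => if h : (t : ℕ) < (j : ℕ) then
            u' ⟨(j : ℕ) - 1 - (t : ℕ), by have := j.isLt; omega⟩ else x (-(j : ℤ) + 1 + (t : ℕ))) := by
        funext t
        by_cases h' : (t : ℕ) < (j : ℕ)
        · rw [dif_pos h', dif_pos h']
          exact ih ((j : ℕ) - 1 - (t : ℕ)) (by omega) _ rfl
        · rw [dif_neg h', dif_neg h']
      have : a * u j + θ _ = a * u' j + θ _ := hcomp
      rw [hargs] at this
      have h2 : a * u j = a * u' j := by
        exact add_right_cancel this
      exact mul_left_cancel₀ ha0 h2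
  funext j
  exact key (j : ℕ) j rfl

lemma blk_mem_periodicPts (ha0 : a ≠ 0) (hp : p.Prime) (m : ℕ) :
    blk Φ x m 0 ∈ Function.periodicPts (G a θ x m) := by
  haveI : Fact p.Prime := ⟨hp⟩
  haveI : NeZero p := ⟨hp.pos.ne'⟩
  obtain ⟨i, j, hne, heq⟩ :=
    Finite.exists_ne_map_eq_of_infinite (fun k : ℕ => (G a θ x m)^[k] (blk Φ x m 0))
  wlog hij : i < j generalizing i j
  · exact this j i hne.symm heq.symm (by omega)
  have hinj : Function.Injective ((G a θ x m)^[i]) :=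
    Function.Injective.iterate (G_inj a θ x ha0 hp m) i
  have heq2 : (G a θ x m)^[i] ((G a θ x m)^[j - i] (blk Φ x m 0))
      = (G a θ x m)^[i] (blk Φ x m 0) := by
    rw [← Function.iterate_add_apply]
    have : i + (j - i) = j := by omega
    rw [this]
    exact heq.symm
  have hper := hinj heq2
  exact Function.mem_periodicPts.mpr ⟨j - i, by omega, hper⟩

lemma P_pos (ha0 : a ≠ 0) (hp : p.Prime) (m : ℕ) : 0 < P a θ Φ x m :=
  Function.IsPeriodicPt.minimalPeriod_pos
    (Function.mem_periodicPts.mp (blk_mem_periodicPts a θ Φ x ha0 hp m)).choose_spec.1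
    (Function.mem_periodicPts.mp (blk_mem_periodicPts a θ Φ x ha0 hp m)).choose_spec.2

lemma blk_eq_iff (hΦ : ∀ y i, Φ y i = a * y i + θ fun j : Fin r => y (i + 1 + (j : ℕ))) (hfix' : ∀ i : ℤ, 1 ≤ i → a * x i + θ (fun j : Fin r => x (i + 1 + (j : ℕ))) = x i) (ha0 : a ≠ 0) (hp : p.Prime) (m k k' : ℕ) :
    blk Φ x m k = blk Φ x m k' ↔ k % P a θ Φ x m = k' % P a θ Φ x m := by
  have hpos := P_pos a θ Φ x ha0 hp m
  have hit : ∀ n : ℕ, blk Φ x m n = (G a θ x m)^[n % P a θ Φ x m] (blk Φ x m 0) := by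
    intro n
    rw [blk_iterate a θ Φ x hΦ hfix' m n]
    exact (Function.iterate_mod_minimalPeriod_eq).symm
  constructor
  · intro h
    rw [hit k, hit k'] at h
    exact Function.iterate_injOn_Iio_minimalPeriod
      (Nat.mod_lt _ hpos) (Nat.mod_lt _ hpos) h
  · intro h
    rw [hit k, hit k', h]

lemma per_all (hΦ : ∀ y i, Φ y i = a * y i + θ fun j : Fin r => y (i + 1 + (j : ℕ))) (hfix' : ∀ i : ℤ, 1 ≤ i → a * x i + θ (fun j : Fin r => x (i + 1 + (j : ℕ))) = x i) (ha0 : a ≠ 0) (hp : p.Prime) (m k : ℕ) (i : ℤ) (hi : -(m : ℤ) < i) :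
    Φ^[k + P a θ Φ x m] x i = Φ^[k] x i := by
  rcases le_or_gt 1 i with h1 | h1
  · rw [iter_pos a θ Φ x hΦ hfix' _ _ h1, iter_pos a θ Φ x hΦ hfix' _ _ h1]
  · have hblk : blk Φ x m (k + P a θ Φ x m) = blk Φ x m k := by
      rw [blk_eq_iff a θ Φ x hΦ hfix' ha0 hp]
      exact Nat.add_mod_right _ _
    have ht : ((-i).toNat : ℤ) = -i := Int.toNat_of_nonneg (by omega)
    have htm : (-i).toNat < m := by omega
    have := congrFun hblk ⟨(-i).toNat, htm⟩
    simpa only [blk, ht, neg_neg] using this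

lemma per_mul (hΦ : ∀ y i, Φ y i = a * y i + θ fun j : Fin r => y (i + 1 + (j : ℕ))) (hfix' : ∀ i : ℤ, 1 ≤ i → a * x i + θ (fun j : Fin r => x (i + 1 + (j : ℕ))) = x i) (ha0 : a ≠ 0) (hp : p.Prime) (m : ℕ) : ∀ (t k : ℕ) (i : ℤ), -(m : ℤ) < i →
    Φ^[k + P a θ Φ x m * t] x i = Φ^[k] x i := by
  intro t
  induction t with
  | zero => intro k i _; simp
  | succ t ih =>
    intro k i hi
    have : k + P a θ Φ x m * (t + 1) = (k + P a θ Φ x m * t) + P a θ Φ x m := by ring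
    rw [this, per_all a θ Φ x hΦ hfix' ha0 hp m _ i hi, ih k i hi]

lemma P_dvd_succ (hΦ : ∀ y i, Φ y i = a * y i + θ fun j : Fin r => y (i + 1 + (j : ℕ))) (hfix' : ∀ i : ℤ, 1 ≤ i → a * x i + θ (fun j : Fin r => x (i + 1 + (j : ℕ))) = x i) (ha0 : a ≠ 0) (hp : p.Prime) (m : ℕ) : P a θ Φ x m ∣ P a θ Φ x (m + 1) := by
  apply Function.IsPeriodicPt.minimalPeriod_dvd
  show (G a θ x m)^[P a θ Φ x (m + 1)] (blk Φ x m 0) = blk Φ x m 0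
  rw [← blk_iterate a θ Φ x hΦ hfix']
  funext j
  have h := per_all a θ Φ x hΦ hfix' ha0 hp (m + 1) 0 (-(j : ℤ))
    (by have := j.isLt; push_cast; omega)
  rw [Nat.zero_add] at h
  exact h

lemma match_coord (m k : ℕ) (z : ℤ → ZMod p)
    (h : (fun j : Fin m => z (-(j : ℤ))) = blk Φ x m k) (i : ℤ)
    (h1 : -(m : ℤ) < i) (h2 : i ≤ 0) : z i = Φ^[k] x i := by
  have hlt : (-i).toNat < m := by omega
  have hc := congrFun h ⟨(-i).toNat, hlt⟩
  have hcoe : -(((-i).toNat : ℕ) : ℤ) = i := by omega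
  rw [← hcoe]
  exact hc

end Dyn

end CA6

/-- Theorem 6: for the cellular automaton on `(ℤ/pℤ)^ℤ`, `p` prime, with local rule
`a·t_0 + θ(t_1,...,t_r)` where `a ≠ 0, 1`, and `q` the multiplicative order of `a`:
if the forward orbit of `x` is infinite and `(x_1,x_2,...)` is `Φ_R`-fixed, then `Φ` on
the orbit closure of `x` is topologically conjugate to the `(q,p,p,...)`-adic odometer. -/
theorem conj_to_q_p_adic_odometer {p r : ℕ} (hp : p.Prime) (hr : 0 < r)
    (a : ZMod p) (ha0 : a ≠ 0) (ha1 : a ≠ 1)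
    (q : ℕ) (hq : 0 < q) (haq : a ^ q = 1) (hleast : ∀ t, 0 < t → t < q → a ^ t ≠ 1)
    (θ : (Fin r → ZMod p) → ZMod p)
    (Φ : (ℤ → ZMod p) → ℤ → ZMod p) (ΦR : (ℕ → ZMod p) → ℕ → ZMod p)
    (hΦ : ∀ x i, Φ x i = a * x i + θ fun j : Fin r => x (i + 1 + (j : ℕ)))
    (hΦR : ∀ x n, ΦR x n = a * x n + θ fun j : Fin r => x (n + 1 + (j : ℕ)))
    (x : ℤ → ZMod p)
    (hinf : (fwdOrbit Φ x).Infinite)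
    (hfix : ΦR (fun n : ℕ => x ((n : ℤ) + 1)) = fun n : ℕ => x ((n : ℤ) + 1)) :
    ConjToOdometer Φ x fun n => match n with | 0 => q | _ + 1 => p := by
  classical
  haveI : Fact p.Prime := ⟨hp⟩
  haveI : NeZero p := ⟨hp.pos.ne'⟩
  set s : ℕ → ℕ := (fun n => match n with | 0 => q | _ + 1 => p) with hsdef
  show ConjToOdometer Φ x s
  have hs0 : s 0 = q := rfl
  have hssucc : ∀ n, s (n + 1) = p := fun n => rfl
  have hq2 : 2 ≤ q := by
    rcases Nat.lt_or_ge q 2 with h | h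
    · have hq1 : q = 1 := by omega
      rw [hq1, pow_one] at haq
      exact absurd haq ha1
    · exact h
  have hp2 : 2 ≤ p := hp.two_le
  have hs : ∀ n, 0 < s n := by
    intro n
    cases n with
    | zero => have := hs0; omega
    | succ n => have := hssucc n; omega
  have hs2 : ∀ n, 2 ≤ s n := by
    intro n
    cases n with
    | zero => have := hs0; omega
    | succ n => have := hssucc n; omega
  -- the fixed-tail identity in ℤ-indexed form
  have hfix' : ∀ i : ℤ, 1 ≤ i → a * x i + θ (fun j : Fin r => x (i + 1 + (j : ℕ))) = x i := by
    intro i hi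
    have hn := congrFun hfix (i - 1).toNat
    rw [hΦR] at hn
    have e1 : (((i - 1).toNat : ℤ) + 1) = i := by omega
    have e2 : (fun j : Fin r => x (((((i - 1).toNat + 1 + (j : ℕ) : ℕ)) : ℤ) + 1))
        = (fun j : Fin r => x (i + 1 + (j : ℕ))) := by
      funext j; congr 1; push_cast; omega
    rw [e2, e1] at hn
    exact hn
  -- abbreviations for the dynamical data
  have hiter := CA6.iter_pos a θ Φ x hΦ hfix'
  have hPpos : ∀ m, 0 < CA6.P a θ Φ x m := CA6.P_pos a θ Φ x ha0 hp
  have hblkiff := CA6.blk_eq_iff a θ Φ x hΦ hfix' ha0 hp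
  have hperall := CA6.per_all a θ Φ x hΦ hfix' ha0 hp
  have hpermul := CA6.per_mul a θ Φ x hΦ hfix' ha0 hp
  have hPdvd := CA6.P_dvd_succ a θ Φ x hΦ hfix' ha0 hp
  have hbbpos : ∀ m, 0 < CA6.bb s m := CA6.bb_pos hs
  have hbbmono : StrictMono (CA6.bb s) := by
    apply strictMono_nat_of_lt_succ
    intro n
    have h2 := hs2 n
    have := hbbpos n
    have h3 : CA6.bb s n < CA6.bb s n * 2 := by omega
    have h4 : CA6.bb s n * 2 ≤ CA6.bb s n * s n := Nat.mul_le_mul_left _ h2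
    exact lt_of_lt_of_le h3 h4
  -- Step structure of the sequence of minimal periods
  have hP0 : CA6.P a θ Φ x 0 = 1 := by
    have hfix0 : (CA6.G a θ x 0)^[1] (CA6.blk Φ x 0 0) = CA6.blk Φ x 0 0 := by
      funext j
      exact absurd j.isLt (Nat.not_lt_zero _)
    exact Nat.dvd_one.mp (Function.IsPeriodicPt.minimalPeriod_dvd hfix0)
  have hPsucc_mul : ∀ m, a ^ (CA6.P a θ Φ x m) = 1 →
      CA6.P a θ Φ x (m + 1) ∣ CA6.P a θ Φ x m * p := by
    intro m haT
    set u : ℕ → ZMod p := fun k => Φ^[k] x (-(m : ℤ)) with hu_def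
    set c : ℕ → ZMod p := fun k =>
      θ (fun t : Fin r => Φ^[k] x (-(m : ℤ) + 1 + (t : ℕ))) with hc_def
    have hu : ∀ k, u (k + 1) = a * u k + c k := by
      intro k
      show Φ^[k + 1] x (-(m : ℤ)) = _
      rw [Function.iterate_succ_apply', hΦ]
    have hc : ∀ k, c (k + CA6.P a θ Φ x m) = c k := by
      intro k
      show θ _ = θ _
      congr 1
      funext t
      exact hperall m k (-(m : ℤ) + 1 + (t : ℕ)) (by omega)
    have hup := CA6.seq_step_period hp a u c (CA6.P a θ Φ x m) hu hc haT
    apply Function.IsPeriodicPt.minimalPeriod_dvd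
    show (CA6.G a θ x (m + 1))^[CA6.P a θ Φ x m * p] (CA6.blk Φ x (m + 1) 0)
      = CA6.blk Φ x (m + 1) 0
    rw [← CA6.blk_iterate a θ Φ x hΦ hfix']
    funext j
    rcases Nat.lt_or_ge (j : ℕ) m with hj | hj
    · have h := hpermul m p 0 (-(j : ℤ)) (by push_cast; omega)
      rw [Nat.zero_add] at h
      exact h
    · have hjm : (j : ℕ) = m := by have := j.isLt; omega
      have h := hup 0
      rw [Nat.zero_add] at h
      show Φ^[CA6.P a θ Φ x m * p] x (-((j : ℕ) : ℤ)) = Φ^[0] x (-((j : ℕ) : ℤ))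
      rw [show -(((j : ℕ) : ℕ) : ℤ) = -((m : ℕ) : ℤ) by rw [hjm]]
      exact h
  have hPsucc_one : ∀ m, CA6.P a θ Φ x m = 1 →
      CA6.P a θ Φ x (m + 1) = 1 ∨ CA6.P a θ Φ x (m + 1) = q := by
    intro m hP1
    set u : ℕ → ZMod p := fun k => Φ^[k] x (-(m : ℤ)) with hu_def
    set c : ℕ → ZMod p := fun k =>
      θ (fun t : Fin r => Φ^[k] x (-(m : ℤ) + 1 + (t : ℕ))) with hc_def
    have hu : ∀ k, u (k + 1) = a * u k + c k := by
      intro k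
      show Φ^[k + 1] x (-(m : ℤ)) = _
      rw [Function.iterate_succ_apply', hΦ]
    have hc1 : ∀ k, c (k + 1) = c k := by
      intro k
      have hcc : c (k + CA6.P a θ Φ x m) = c k := by
        show θ _ = θ _
        congr 1
        funext t
        exact hperall m k (-(m : ℤ) + 1 + (t : ℕ)) (by omega)
      rwa [hP1] at hcc
    have hcconst : ∀ k, c k = c 0 := by
      intro k
      induction k with
      | zero => rfl
      | succ k ih => rw [← ih]; exact hc1 k
    have hu' : ∀ k, u (k + 1) = a * u k + c 0 := by
      intro k; rw [hu k, hcconst k]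
    obtain ⟨hqper, hdich⟩ := CA6.seq_affine hp a ha1 q hq haq hleast u (c 0) hu'
    have hlow : ∀ (k : ℕ) (i : ℤ), -(m : ℤ) < i → Φ^[k] x i = Φ^[0] x i := by
      intro k i hi
      have h := hpermul m k 0 i hi
      rw [Nat.zero_add, hP1, one_mul] at h
      exact h
    have hdvdq : CA6.P a θ Φ x (m + 1) ∣ q := by
      apply Function.IsPeriodicPt.minimalPeriod_dvd
      show (CA6.G a θ x (m + 1))^[q] (CA6.blk Φ x (m + 1) 0) = CA6.blk Φ x (m + 1) 0
      rw [← CA6.blk_iterate a θ Φ x hΦ hfix']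
      funext j
      rcases Nat.lt_or_ge (j : ℕ) m with hj | hj
      · exact hlow q (-(j : ℤ)) (by push_cast; omega)
      · have hjm : (j : ℕ) = m := by have := j.isLt; omega
        have h := hqper 0
        rw [Nat.zero_add] at h
        show Φ^[q] x (-((j : ℕ) : ℤ)) = Φ^[0] x (-((j : ℕ) : ℤ))
        rw [show -(((j : ℕ) : ℕ) : ℤ) = -((m : ℕ) : ℤ) by rw [hjm]]
        exact h
    by_cases h1 : CA6.P a θ Φ x (m + 1) = 1
    · exact Or.inl h1
    · right
      have hperiod : ∀ k, u (k + CA6.P a θ Φ x (m + 1)) = u k := by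
        intro k
        exact hperall (m + 1) k (-(m : ℤ)) (by push_cast; omega)
      rcases hdich (CA6.P a θ Φ x (m + 1)) (hPpos (m + 1)) hperiod with hconst | hdvd
      · exfalso
        apply h1
        have hfix1 : (CA6.G a θ x (m + 1))^[1] (CA6.blk Φ x (m + 1) 0)
            = CA6.blk Φ x (m + 1) 0 := by
          rw [← CA6.blk_iterate a θ Φ x hΦ hfix']
          funext j
          rcases Nat.lt_or_ge (j : ℕ) m with hj | hj
          · exact hlow 1 (-(j : ℤ)) (by push_cast; omega)
          · have hjm : (j : ℕ) = m := by have := j.isLt; omega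
            show Φ^[1] x (-((j : ℕ) : ℤ)) = Φ^[0] x (-((j : ℕ) : ℤ))
            rw [show -(((j : ℕ) : ℕ) : ℤ) = -((m : ℕ) : ℤ) by rw [hjm]]
            exact hconst 1
        exact Nat.dvd_one.mp (Function.IsPeriodicPt.minimalPeriod_dvd hfix1)
      · exact Nat.dvd_antisymm hdvdq hdvd
  have hqdvdbb : ∀ j, q ∣ CA6.bb s (j + 1) := by
    intro j
    induction j with
    | zero => show q ∣ 1 * s 0; rw [one_mul, hs0]
    | succ j ih => exact dvd_mul_of_dvd_left ih _
  have hstep_core : ∀ m j, CA6.P a θ Φ x m = CA6.bb s j →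
      (CA6.P a θ Φ x (m + 1) = CA6.bb s j ∨ CA6.P a θ Φ x (m + 1) = CA6.bb s (j + 1)) := by
    intro m j hj
    cases j with
    | zero =>
      have h1 : CA6.P a θ Φ x m = 1 := hj
      have hbb1 : CA6.bb s 1 = q := by show 1 * s 0 = q; rw [one_mul, hs0]
      rcases hPsucc_one m h1 with h | h
      · exact Or.inl (by rw [h]; rfl)
      · exact Or.inr (by rw [h, hbb1])
    | succ j' =>
      have hqd : q ∣ CA6.P a θ Φ x m := hj ▸ hqdvdbb j'
      have haT : a ^ CA6.P a θ Φ x m = 1 := by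
        obtain ⟨d, hd⟩ := hqd
        rw [hd, pow_mul, haq, one_pow]
      have hdvd := hPsucc_mul m haT
      obtain ⟨e, he⟩ := hPdvd m
      have hednp : CA6.P a θ Φ x m * e ∣ CA6.P a θ Φ x m * p := he ▸ hdvd
      have hedvd : e ∣ p := (mul_dvd_mul_iff_left (hPpos m).ne').mp hednp
      rcases hp.eq_one_or_self_of_dvd e hedvd with he1 | hep
      · left; rw [he, he1, mul_one, hj]
      · right; rw [he, hep, hj]; rfl
  have hinv : ∀ m, ∃ j, CA6.P a θ Φ x m = CA6.bb s j := by
    intro m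
    induction m with
    | zero => exact ⟨0, hP0⟩
    | succ m ih =>
      obtain ⟨j, hj⟩ := ih
      rcases hstep_core m j hj with h | h
      exacts [⟨j, h⟩, ⟨j + 1, h⟩]
  have hstepP : ∀ m, ∃ j, CA6.P a θ Φ x m = CA6.bb s j ∧
      (CA6.P a θ Φ x (m + 1) = CA6.bb s j ∨ CA6.P a θ Φ x (m + 1) = CA6.bb s (j + 1)) := by
    intro m
    obtain ⟨j, hj⟩ := hinv m
    exact ⟨j, hj, hstep_core m j hj⟩
  have hPle : ∀ m, CA6.P a θ Φ x m ≤ CA6.bb s (m + 1) := by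
    intro m
    induction m with
    | zero => rw [hP0]; exact hbbpos 1
    | succ m ih =>
      obtain ⟨j, hj, hcase⟩ := hstepP m
      have hjle : j ≤ m + 1 := by
        have : CA6.bb s j ≤ CA6.bb s (m + 1) := hj ▸ ih
        exact hbbmono.le_iff_le.mp this
      rcases hcase with h | h
      · rw [h]; exact hbbmono.le_iff_le.mpr (by omega)
      · rw [h]; exact hbbmono.le_iff_le.mpr (by omega)
  have hunb : ∀ B, ∃ m, B ≤ CA6.P a θ Φ x m := by
    intro B
    by_contra hcon
    push_neg at hcon
    have hFpos : 0 < B.factorial := B.factorial_pos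
    have hdvdF : ∀ m, CA6.P a θ Φ x m ∣ B.factorial := fun m =>
      Nat.dvd_factorial (hPpos m) (le_of_lt (hcon m))
    have hfixF : Φ^[B.factorial] x = x := by
      funext i
      rcases le_or_gt 1 i with h1 | h1
      · rw [hiter B.factorial i h1]
      · have hkey : CA6.blk Φ x ((-i).toNat + 1) B.factorial
            = CA6.blk Φ x ((-i).toNat + 1) 0 := by
          rw [hblkiff]
          have h2 : B.factorial % CA6.P a θ Φ x ((-i).toNat + 1) = 0 := by
            obtain ⟨d, hd⟩ := hdvdF ((-i).toNat + 1)
            rw [hd]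
            exact Nat.mul_mod_right _ _
          rw [h2, Nat.zero_mod]
        have hcf := congrFun hkey ⟨(-i).toNat, by omega⟩
        have hcoe : -(((-i).toNat : ℕ) : ℤ) = i := by omega
        show Φ^[B.factorial] x i = x i
        rw [← hcoe]
        exact hcf
    have hmulF : ∀ n, Φ^[B.factorial * n] x = x := by
      intro n
      induction n with
      | zero => rfl
      | succ n ih => rw [Nat.mul_succ, Function.iterate_add_apply, hfixF, ih]
    have hsub : fwdOrbit Φ x ⊆ (fun k : ℕ => Φ^[k] x) '' Set.Iio B.factorial := by
      rintro y ⟨k, rfl⟩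
      refine ⟨k % B.factorial, Nat.mod_lt _ hFpos, ?_⟩
      show Φ^[k % B.factorial] x = Φ^[k] x
      conv_rhs => rw [← Nat.mod_add_div k B.factorial]
      rw [Function.iterate_add_apply, hmulF]
    exact hinf (Set.Finite.subset (Set.Finite.image _ (Set.finite_Iio B.factorial)) hsub)
  -- the levels N j where the period first reaches bb s j
  set NN : ℕ → ℕ := fun j => sInf {n | CA6.bb s j ≤ CA6.P a θ Φ x n} with hNNdef
  have hNNspec : ∀ j, CA6.bb s j ≤ CA6.P a θ Φ x (NN j) := by
    intro j
    exact Nat.sInf_mem (hunb (CA6.bb s j))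
  have hPNN : ∀ j, CA6.P a θ Φ x (NN j) = CA6.bb s j := by
    intro j
    rcases hn : NN j with _ | n'
    · have hspec := hNNspec j
      rw [hn, hP0] at hspec
      have := hbbpos j
      rw [hP0]
      omega
    · have hspec := hNNspec j
      rw [hn] at hspec
      have hlt : CA6.P a θ Φ x n' < CA6.bb s j := by
        by_contra hc
        push_neg at hc
        have hle : NN j ≤ n' := Nat.sInf_le hc
        omega
      obtain ⟨i, hi, hcase⟩ := hstepP n'
      rw [hi] at hlt
      rcases hcase with h | h
      · exfalso
        rw [h] at hspec
        omega
      · rw [h]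
        have h1 : CA6.bb s (i + 1) ≤ CA6.bb s j := by
          have hij : i < j := hbbmono.lt_iff_lt.mp hlt
          exact hbbmono.le_iff_le.mpr (by omega)
        have h2 : CA6.bb s j ≤ CA6.bb s (i + 1) := by rwa [h] at hspec
        omega
  have hNNmono : ∀ {j j'}, j ≤ j' → NN j ≤ NN j' := by
    intro j j' h
    exact Nat.sInf_le (le_trans (hbbmono.le_iff_le.mpr h) (hNNspec j'))
  have hNNge : ∀ j, j ≤ NN j + 1 := by
    intro j
    have : CA6.bb s j ≤ CA6.bb s (NN j + 1) := by rw [← hPNN j]; exact hPle _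
    exact hbbmono.le_iff_le.mp this
  -- closure, matching sets, and the conjugacy map
  have hCpos : ∀ z ∈ closure (fwdOrbit Φ x), ∀ i : ℤ, 1 ≤ i → z i = x i := by
    intro z hz i hi
    have hclosed : IsClosed {y : ℤ → ZMod p | y i = x i} :=
      isClosed_eq (continuous_apply i) continuous_const
    have hsub : fwdOrbit Φ x ⊆ {y : ℤ → ZMod p | y i = x i} := by
      rintro y ⟨k, rfl⟩; exact hiter k i hi
    exact closure_minimal hsub hclosed hz
  set Mset : ℕ → (ℤ → ZMod p) → Set ℕ :=
    fun m z => {k | (fun j : Fin m => z (-(j : ℤ))) = CA6.blk Φ x m k} with hMdef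
  have hmex : ∀ z ∈ closure (fwdOrbit Φ x), ∀ m, (Mset m z).Nonempty := by
    intro z hz m
    have hU : IsOpen {y : ℤ → ZMod p | ∀ j : Fin m, y (-(j : ℤ)) = z (-(j : ℤ))} := by
      have heq : {y : ℤ → ZMod p | ∀ j : Fin m, y (-(j : ℤ)) = z (-(j : ℤ))}
          = ⋂ j : Fin m, (fun y : ℤ → ZMod p => y (-(j : ℤ))) ⁻¹' {z (-(j : ℤ))} := by
        ext y
        simp
      rw [heq]
      exact isOpen_iInter_of_finite fun j =>
        (isOpen_discrete _).preimage (continuous_apply _)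
    obtain ⟨y, hyU, hyS⟩ := mem_closure_iff.mp hz _ hU (fun j => rfl)
    obtain ⟨k, rfl⟩ := hyS
    exact ⟨k, funext fun j => (hyU j).symm⟩
  have hmcongr : ∀ m z k k', k ∈ Mset m z → k' ∈ Mset m z →
      k % CA6.P a θ Φ x m = k' % CA6.P a θ Φ x m := by
    intro m z k k' h1 h2
    exact (hblkiff m k k').mp (h1.symm.trans h2)
  have hmof : ∀ m z k k', k ∈ Mset m z → k % CA6.P a θ Φ x m = k' % CA6.P a θ Φ x m →
      k' ∈ Mset m z := by
    intro m z k k' h1 h2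
    exact h1.trans ((hblkiff m k k').mpr h2)
  have hmmono : ∀ m' m z k, m' ≤ m → k ∈ Mset m z → k ∈ Mset m' z := by
    intro m' m z k h hk
    funext j
    exact congrFun hk ⟨(j : ℕ), lt_of_lt_of_le j.isLt h⟩
  have hmphi : ∀ z ∈ closure (fwdOrbit Φ x), ∀ m k, k ∈ Mset m z → (k + 1) ∈ Mset m (Φ z) := by
    intro z hz m k hk
    funext j
    have h1 : z (-(j : ℤ)) = Φ^[k] x (-(j : ℤ)) := congrFun hk j
    have h2 : (fun t : Fin r => z (-(j : ℤ) + 1 + (t : ℕ)))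
        = (fun t : Fin r => Φ^[k] x (-(j : ℤ) + 1 + (t : ℕ))) := by
      funext t
      rcases le_or_gt 1 (-(j : ℤ) + 1 + (t : ℕ)) with hc | hc
      · rw [hCpos z hz _ hc, hiter k _ hc]
      · exact CA6.match_coord Φ x m k z hk _ (by have := j.isLt; omega) (by omega)
    show Φ z (-(j : ℤ)) = Φ^[k + 1] x (-(j : ℤ))
    rw [hΦ, Function.iterate_succ_apply', hΦ, h1, h2]
  set kk : ℕ → (ℤ → ZMod p) → ℕ := fun m z => sInf (Mset m z) with hkkdef
  have hkkmem : ∀ z ∈ closure (fwdOrbit Φ x), ∀ m, kk m z ∈ Mset m z := by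
    intro z hz m
    exact Nat.sInf_mem (hmex z hz m)
  set Psi : (ℤ → ZMod p) → ∀ n, ZMod (s n) :=
    fun z j => ((kk (NN (j + 1)) z / CA6.bb s j : ℕ) : ZMod (s j)) with hPsidef
  have hkkcompat : ∀ z ∈ closure (fwdOrbit Φ x), ∀ j,
      kk (NN (j + 1)) z % CA6.bb s (j + 1) = kk (NN (j + 2)) z % CA6.bb s (j + 1) := by
    intro z hz j
    have h1 := hkkmem z hz (NN (j + 1))
    have h2 := hmmono (NN (j + 1)) (NN (j + 2)) z _ (hNNmono (by omega)) (hkkmem z hz (NN (j + 2)))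
    have := hmcongr (NN (j + 1)) z _ _ h1 h2
    rwa [hPNN (j + 1)] at this
  have hpsival : ∀ z ∈ closure (fwdOrbit Φ x), ∀ j,
      CA6.vv s (Psi z) (j + 1) = kk (NN (j + 1)) z % CA6.bb s (j + 1) := by
    intro z hz j
    induction j with
    | zero =>
      haveI : NeZero (s 0) := ⟨(hs 0).ne'⟩
      show CA6.vv s (Psi z) 0 + (Psi z 0).val * CA6.bb s 0 = _
      have h0 : (Psi z 0).val = kk (NN 1) z % q := by
        show (((kk (NN 1) z / CA6.bb s 0 : ℕ)) : ZMod (s 0)).val = _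
        rw [ZMod.val_natCast, show CA6.bb s 0 = 1 from rfl, Nat.div_one, hs0]
      rw [h0]
      show 0 + (kk (NN 1) z % q) * CA6.bb s 0 = kk (NN 1) z % CA6.bb s 1
      rw [show CA6.bb s 0 = 1 from rfl, show CA6.bb s 1 = 1 * s 0 from rfl,
        one_mul, hs0, mul_one, Nat.zero_add]
    | succ j ih =>
      haveI : NeZero (s (j + 1)) := ⟨(hs (j + 1)).ne'⟩
      show CA6.vv s (Psi z) (j + 1) + (Psi z (j + 1)).val * CA6.bb s (j + 1) = _
      rw [ih]
      have hval : (Psi z (j + 1)).val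
          = (kk (NN (j + 2)) z / CA6.bb s (j + 1)) % s (j + 1) := by
        show (((kk (NN (j + 2)) z / CA6.bb s (j + 1) : ℕ)) : ZMod (s (j + 1))).val = _
        rw [ZMod.val_natCast]
      rw [hval, hkkcompat z hz j,
        show CA6.bb s (j + 2) = CA6.bb s (j + 1) * s (j + 1) from rfl,
        CA6.mod_decomp (kk (NN (j + 2)) z) (CA6.bb s (j + 1)) (s (j + 1))]
      ring
  -- injectivity
  have hinj : ∀ z ∈ closure (fwdOrbit Φ x), ∀ z' ∈ closure (fwdOrbit Φ x),
      Psi z = Psi z' → z = z' := by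
    intro z hz z' hz' h
    have hvv : ∀ j, kk (NN (j + 1)) z % CA6.bb s (j + 1)
        = kk (NN (j + 1)) z' % CA6.bb s (j + 1) := by
      intro j
      rw [← hpsival z hz j, ← hpsival z' hz' j, h]
    have hmm : ∀ j, kk (NN (j + 1)) z ∈ Mset (NN (j + 1)) z' := by
      intro j
      apply hmof (NN (j + 1)) z' (kk (NN (j + 1)) z') _ (hkkmem z' hz' _)
      rw [hPNN (j + 1)]
      exact (hvv j).symm
    funext i
    rcases le_or_gt 1 i with hc | hc
    · rw [hCpos z hz i hc, hCpos z' hz' i hc]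
    · have hNlt : (-i).toNat < NN ((-i).toNat + 2) := by
        have := hNNge ((-i).toNat + 2)
        omega
      have h1 := CA6.match_coord Φ x (NN ((-i).toNat + 2)) _ z
        (hkkmem z hz (NN ((-i).toNat + 2))) i (by omega) (by omega)
      have h2 := CA6.match_coord Φ x (NN ((-i).toNat + 2)) _ z'
        (hmm ((-i).toNat + 1)) i (by omega) (by omega)
      rw [h1, h2]
  -- surjectivity
  have hsurj : ∀ w : (∀ n, ZMod (s n)), ∃ z ∈ closure (fwdOrbit Φ x), Psi z = w := by
    intro w
    set zc : ℤ → ZMod p := fun i =>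
      if 1 ≤ i then x i else Φ^[CA6.vv s w ((-i).toNat + 2)] x i with hzc
    have hS : ∀ (j : ℕ) (i : ℤ), -(j : ℤ) ≤ i → zc i = Φ^[CA6.vv s w (j + 2)] x i := by
      intro j i hij
      rcases le_or_gt 1 i with hc | hc
      · show (if 1 ≤ i then x i else _) = _
        rw [if_pos hc, hiter _ i hc]
      · show (if 1 ≤ i then x i else _) = _
        rw [if_neg (by omega)]
        have htj : (-i).toNat ≤ j := by omega
        have hmod : CA6.vv s w ((-i).toNat + 2) % CA6.bb s ((-i).toNat + 2)
            = CA6.vv s w (j + 2) % CA6.bb s ((-i).toNat + 2) := by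
          rw [Nat.mod_eq_of_lt (CA6.vv_lt hs w ((-i).toNat + 2))]
          exact (CA6.vv_compat hs w (by omega)).symm
        have hblk : CA6.blk Φ x (NN ((-i).toNat + 2)) (CA6.vv s w ((-i).toNat + 2))
            = CA6.blk Φ x (NN ((-i).toNat + 2)) (CA6.vv s w (j + 2)) := by
          rw [hblkiff, hPNN ((-i).toNat + 2)]
          exact hmod
        have hNt : (-i).toNat < NN ((-i).toNat + 2) := by
          have := hNNge ((-i).toNat + 2)
          omega
        have hcoord := congrFun hblk ⟨(-i).toNat, hNt⟩
        have hcoe : -(((-i).toNat : ℕ) : ℤ) = i := by omega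
        have hcc : Φ^[CA6.vv s w ((-i).toNat + 2)] x (-(((-i).toNat : ℕ) : ℤ))
            = Φ^[CA6.vv s w (j + 2)] x (-(((-i).toNat : ℕ) : ℤ)) := hcoord
        rw [hcoe] at hcc
        exact hcc
    have hmem : zc ∈ closure (fwdOrbit Φ x) := by
      have htend : Filter.Tendsto (fun j : ℕ => Φ^[CA6.vv s w (j + 2)] x)
          Filter.atTop (nhds zc) := by
        rw [tendsto_pi_nhds]
        intro i
        apply Filter.Tendsto.congr' _ tendsto_const_nhds
        filter_upwards [Filter.eventually_ge_atTop (-i).toNat] with j hj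
        exact hS j i (by omega)
      exact mem_closure_of_tendsto htend
        (Filter.Eventually.of_forall fun j => ⟨CA6.vv s w (j + 2), rfl⟩)
    refine ⟨zc, hmem, ?_⟩
    funext j
    have hmatch : CA6.vv s w (NN (j + 1) + 2) ∈ Mset (NN (j + 1)) zc := by
      show (fun t : Fin (NN (j + 1)) => zc (-(t : ℤ))) = _
      funext t
      exact hS (NN (j + 1)) (-(t : ℤ)) (by have := t.isLt; omega)
    have hcong := hmcongr (NN (j + 1)) zc _ _ (hkkmem zc hmem (NN (j + 1))) hmatch
    rw [hPNN (j + 1)] at hcong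
    have hvvc : CA6.vv s w (NN (j + 1) + 2) % CA6.bb s (j + 1) = CA6.vv s w (j + 1) :=
      CA6.vv_compat hs w (by have := hNNge (j + 1); omega)
    haveI : NeZero (s j) := ⟨(hs j).ne'⟩
    show ((kk (NN (j + 1)) zc / CA6.bb s j : ℕ) : ZMod (s j)) = w j
    have hdig : (kk (NN (j + 1)) zc / CA6.bb s j) % s j = (w j).val := by
      have e1 : (kk (NN (j + 1)) zc / CA6.bb s j) % s j
          = kk (NN (j + 1)) zc % (CA6.bb s j * s j) / CA6.bb s j :=
        (Nat.mod_mul_right_div_self _ _ _).symm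
      rw [e1, show CA6.bb s j * s j = CA6.bb s (j + 1) from rfl, hcong, hvvc]
      exact CA6.vv_digit hs w j
    calc ((kk (NN (j + 1)) zc / CA6.bb s j : ℕ) : ZMod (s j))
        = (((kk (NN (j + 1)) zc / CA6.bb s j) % s j : ℕ) : ZMod (s j)) :=
          (ZMod.natCast_mod _ _).symm
      _ = ((w j).val : ZMod (s j)) := by rw [hdig]
      _ = w j := ZMod.natCast_rightInverse (w j)
  -- the conjugacy identity
  have hconj : ∀ z ∈ closure (fwdOrbit Φ x), Φ z ∈ closure (fwdOrbit Φ x) →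
      Psi (Φ z) = odometer s (Psi z) := by
    intro z hz hzz
    funext n
    have hB1 : 1 % CA6.bb s (n + 1) = 1 := by
      have : CA6.bb s 0 < CA6.bb s (n + 1) := hbbmono (by omega)
      exact Nat.mod_eq_of_lt (by
        have hb0 : CA6.bb s 0 = 1 := rfl
        omega)
    have hvv : CA6.vv s (Psi (Φ z)) (n + 1) = CA6.vv s (odometer s (Psi z)) (n + 1) := by
      rw [hpsival (Φ z) hzz n, CA6.vv_odometer hs (Psi z) (n + 1), hpsival z hz n]
      have hm1 : (kk (NN (n + 1)) z + 1) ∈ Mset (NN (n + 1)) (Φ z) :=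
        hmphi z hz _ _ (hkkmem z hz _)
      have hcong := hmcongr (NN (n + 1)) (Φ z) _ _ (hkkmem (Φ z) hzz _) hm1
      rw [hPNN (n + 1)] at hcong
      rw [hcong, Nat.add_mod (kk (NN (n + 1)) z) 1, hB1]
    exact CA6.vv_inj hs _ _ hvv n (by omega)
  -- continuity of Φ and of Psi
  have hΦcont : Continuous Φ := by
    have hΦeq : Φ = fun y i => a * y i + θ (fun t : Fin r => y (i + 1 + (t : ℕ))) := by
      funext y i; exact hΦ y i
    rw [hΦeq]
    apply continuous_pi
    intro i
    show Continuous ((fun w : ZMod p × (Fin r → ZMod p) => a * w.1 + θ w.2) ∘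
      (fun y : ℤ → ZMod p => (y i, fun t : Fin r => y (i + 1 + (t : ℕ)))))
    exact continuous_of_discreteTopology.comp
      ((continuous_apply i).prodMk (continuous_pi fun t => continuous_apply _))
  have hmaps : Set.MapsTo Φ (closure (fwdOrbit Φ x)) (closure (fwdOrbit Φ x)) := by
    intro z hz
    have h1 : Φ z ∈ closure (Φ '' fwdOrbit Φ x) :=
      image_closure_subset_closure_image hΦcont ⟨z, hz, rfl⟩
    refine closure_mono ?_ h1
    rintro y ⟨w, ⟨k, rfl⟩, rfl⟩
    exact ⟨k + 1, by show Φ^[k + 1] x = Φ (Φ^[k] x); exact Function.iterate_succ_apply' Φ k x⟩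
  haveI : CompactSpace (closure (fwdOrbit Φ x)) :=
    isCompact_iff_compactSpace.mp (isClosed_closure.isCompact)
  have hPsicont : Continuous (fun z : closure (fwdOrbit Φ x) => Psi z.1) := by
    apply continuous_pi
    intro j
    have heq : (fun z : closure (fwdOrbit Φ x) => Psi z.1 j)
        = (fun β : Fin (NN (j + 1)) → ZMod p =>
            ((sInf {k | β = CA6.blk Φ x (NN (j + 1)) k} / CA6.bb s j : ℕ) : ZMod (s j))) ∘
          (fun z : closure (fwdOrbit Φ x) => (fun t : Fin (NN (j + 1)) => z.1 (-(t : ℤ)))) := rfl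
    rw [heq]
    exact continuous_of_discreteTopology.comp
      (continuous_pi fun t => (continuous_apply _).comp continuous_subtype_val)
  have hbij : Function.Bijective (fun z : closure (fwdOrbit Φ x) => Psi z.1) := by
    constructor
    · intro z z' h
      exact Subtype.ext (hinj z.1 z.2 z'.1 z'.2 h)
    · intro w
      obtain ⟨z, hz, hzw⟩ := hsurj w
      exact ⟨⟨z, hz⟩, hzw⟩
  refine ⟨hmaps, Continuous.homeoOfEquivCompactToT2 (f := Equiv.ofBijective _ hbij) hPsicont, ?_⟩
  intro y
  show Psi (Φ y.1) = odometer s (Psi y.1)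
  exact hconj y.1 y.2 (hmaps y.2)
end
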